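/- arXiv:2410.06307 — 6 statements merged into one kernel-verified Lean document; each statement's English description precedes it below -/
import Mathlib

section
/- Assume ρ₁ > 0. Let M ≥ 1 be an integer and let Δ^(M) = {x ∈ Δ : M·x_i is an integer for every i}. Then for every β ∈ (0,1) and every x, x' ∈ Δ^(M) with ‖x − x'‖₁ ≤ 2/M, one has |V_β(x) − V_β(x')| ≤ (1/ρ₁) · ‖x − x'‖₁. -/
open Matrix Finset Filter

def IsStochastic {n : ℕ} (P : Matrix (Fin n) (Fin n) ℝ) : Prop :=
  (∀ i j, 0 ≤ P i j) ∧ ∀ i, ∑ j, P i j = 1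

def feas {n : ℕ} (α : ℝ) (x : Fin n → ℝ) : Set (Fin n → ℝ) :=
  {u | (∀ i, 0 ≤ u i ∧ u i ≤ x i) ∧ ∑ i, u i ≤ α}

def phi {n : ℕ} (P0 P1 : Matrix (Fin n) (Fin n) ℝ) (x u : Fin n → ℝ) : Fin n → ℝ :=
  x ᵥ* P0 + u ᵥ* (P1 - P0)

def rew {n : ℕ} (r0 r1 x u : Fin n → ℝ) : ℝ :=
  r0 ⬝ᵥ x + (r1 - r0) ⬝ᵥ u

def l1 {n : ℕ} (x : Fin n → ℝ) : ℝ := ∑ i, |x i|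

/-- A feasible trajectory from `x`. -/
def IsTraj {n : ℕ} (α : ℝ) (P0 P1 : Matrix (Fin n) (Fin n) ℝ) (x : Fin n → ℝ)
    (X U : ℕ → Fin n → ℝ) : Prop :=
  X 0 = x ∧ ∀ t, U t ∈ feas α (X t) ∧ X (t + 1) = phi P0 P1 (X t) (U t)

/-- Discounted value function `V_β`. -/
noncomputable def Vdisc {n : ℕ} (α : ℝ) (P0 P1 : Matrix (Fin n) (Fin n) ℝ)
    (r0 r1 : Fin n → ℝ) (β : ℝ) (x : Fin n → ℝ) : ℝ :=
  sSup {v | ∃ X U : ℕ → Fin n → ℝ, IsTraj α P0 P1 x X U ∧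
    v = ∑' t : ℕ, β ^ t * rew r0 r1 (X t) (U t)}

/-- The product matrix `P^{a₁} ⋯ P^{a_k}` for a word of actions. -/
noncomputable def matWord {n : ℕ} (P0 P1 : Matrix (Fin n) (Fin n) ℝ) {k : ℕ}
    (a : Fin k → Bool) : Matrix (Fin n) (Fin n) ℝ :=
  (List.ofFn fun i => if a i then P1 else P0).prod

/-- The ergodicity coefficient `ρ_k`. -/
noncomputable def rho {n : ℕ} (P0 P1 : Matrix (Fin n) (Fin n) ℝ) (k : ℕ) : ℝ :=
  ⨅ s : Fin n, ⨅ s' : Fin n, ⨅ a : Fin k → Bool,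
    ∑ s'', min (matWord P0 P1 a s s'') ((P0 ^ k) s' s'')

lemma rho_le {n : ℕ} (P0 P1 : Matrix (Fin n) (Fin n) ℝ) (b : Bool) (s s' : Fin n) :
    rho P0 P1 1 ≤ ∑ j, min ((if b then P1 else P0) s j) (P0 s' j) := by
  have h1 : matWord P0 P1 (fun _ : Fin 1 => b) = if b then P1 else P0 := by
    simp [matWord, List.ofFn_succ]
  calc rho P0 P1 1
      ≤ ⨅ s'' : Fin n, ⨅ a : Fin 1 → Bool,
          ∑ j, min (matWord P0 P1 a s j) ((P0 ^ 1) s'' j) :=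
        ciInf_le (Set.finite_range _).bddBelow s
    _ ≤ ⨅ a : Fin 1 → Bool, ∑ j, min (matWord P0 P1 a s j) ((P0 ^ 1) s' j) :=
        ciInf_le (Set.finite_range _).bddBelow s'
    _ ≤ ∑ j, min (matWord P0 P1 (fun _ => b) s j) ((P0 ^ 1) s' j) :=
        ciInf_le (Set.finite_range _).bddBelow _
    _ = ∑ j, min ((if b then P1 else P0) s j) (P0 s' j) := by rw [h1, pow_one]

lemma rho_le_one {n : ℕ} (hn : 1 ≤ n) (P0 P1 : Matrix (Fin n) (Fin n) ℝ)
    (hP0 : IsStochastic P0) : rho P0 P1 1 ≤ 1 := by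
  have s : Fin n := ⟨0, hn⟩
  refine (rho_le P0 P1 false s s).trans ?_
  simp [min_self, hP0.2 s]

lemma phi_mem {n : ℕ} {P0 P1 : Matrix (Fin n) (Fin n) ℝ}
    (hP0 : IsStochastic P0) (hP1 : IsStochastic P1) {α : ℝ} {x u : Fin n → ℝ}
    (hx : x ∈ stdSimplex ℝ (Fin n)) (hu : u ∈ feas α x) :
    phi P0 P1 x u ∈ stdSimplex ℝ (Fin n) := by
  have happ : ∀ j, phi P0 P1 x u j = ∑ i, ((x i - u i) * P0 i j + u i * P1 i j) := by
    intro j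
    simp only [phi, Pi.add_apply, Matrix.vecMul, dotProduct, Matrix.sub_apply]
    rw [← Finset.sum_add_distrib]
    exact Finset.sum_congr rfl fun i _ => by ring
  constructor
  · intro j; rw [happ]
    exact Finset.sum_nonneg fun i _ => add_nonneg
      (mul_nonneg (sub_nonneg.2 (hu.1 i).2) (hP0.1 i j))
      (mul_nonneg (hu.1 i).1 (hP1.1 i j))
  · rw [Finset.sum_congr rfl fun j _ => happ j, Finset.sum_comm]
    calc ∑ i, ∑ j, ((x i - u i) * P0 i j + u i * P1 i j)
        = ∑ i, ((x i - u i) * 1 + u i * 1) := Finset.sum_congr rfl fun i _ => by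
          rw [Finset.sum_add_distrib, ← Finset.mul_sum, ← Finset.mul_sum, hP0.2, hP1.2]
      _ = ∑ i, x i := Finset.sum_congr rfl fun i _ => by ring
      _ = 1 := hx.2

noncomputable def cpl {n : ℕ} (x x' u : Fin n → ℝ) : Fin n → ℝ :=
  fun i => if x i = 0 then 0 else u i * min (x i) (x' i) / x i

lemma cpl_props {n : ℕ} {x x' u : Fin n → ℝ} (hx : ∀ i, 0 ≤ x i) (hx' : ∀ i, 0 ≤ x' i)
    (hu : ∀ i, 0 ≤ u i ∧ u i ≤ x i) (i : Fin n) :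
    0 ≤ cpl x x' u i ∧ cpl x x' u i ≤ x' i ∧ cpl x x' u i ≤ u i ∧
      0 ≤ u i - cpl x x' u i ∧
      |u i - cpl x x' u i| + |x i - x' i - (u i - cpl x x' u i)| = |x i - x' i| := by
  by_cases h : x i = 0
  · have hu0 : u i = 0 := le_antisymm (h ▸ (hu i).2) (hu i).1
    simp [cpl, h, hu0, hx' i, abs_sub_comm]
  · have hxi : 0 < x i := lt_of_le_of_ne (hx i) (Ne.symm h)
    have hui := hu i
    have hcv : cpl x x' u i = u i * min (x i) (x' i) / x i := by simp [cpl, h]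
    rcases le_total (x i) (x' i) with hle | hle
    · have heq : cpl x x' u i = u i := by
        rw [hcv, min_eq_left hle, mul_div_assoc, div_self (ne_of_gt hxi), mul_one]
      rw [heq]
      refine ⟨hui.1, hui.2.trans hle, le_refl _, by linarith, ?_⟩
      simp [abs_of_nonpos (by linarith : x i - x' i ≤ 0)]
    · have h1 : cpl x x' u i = u i * x' i / x i := by rw [hcv, min_eq_right hle]
      have h2 : 0 ≤ u i * x' i / x i := div_nonneg (mul_nonneg hui.1 (hx' i)) (hx i)
      have h3 : u i * x' i / x i ≤ x' i := by
        rw [div_le_iff₀ hxi]; nlinarith [hui.2, hx' i]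
      have h4 : u i * x' i / x i ≤ u i := by
        rw [div_le_iff₀ hxi]; nlinarith [hui.1]
      have hd : u i - cpl x x' u i = u i * (x i - x' i) / x i := by
        rw [h1]; field_simp
      have hd0 : 0 ≤ u i - cpl x x' u i := by
        rw [hd]; exact div_nonneg (mul_nonneg hui.1 (by linarith)) (hx i)
      have hdle : u i - cpl x x' u i ≤ x i - x' i := by
        rw [hd, div_le_iff₀ hxi]; nlinarith [hui.2]
      refine ⟨h1 ▸ h2, h1 ▸ h3, h1 ▸ h4, hd0, ?_⟩
      rw [abs_of_nonneg hd0, abs_of_nonneg (by linarith), abs_of_nonneg (by linarith)]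
      ring


lemma abs_self_eq (a : ℝ) : max a 0 + max (-a) 0 = |a| := by
  rcases le_total a 0 with h|h <;> simp [abs_of_nonpos, abs_of_nonneg, h]

lemma dob {σ : Type*} [Fintype σ] {n : ℕ} (K : σ → Fin n → ℝ)
    (hK0 : ∀ p j, 0 ≤ K p j) (hK1 : ∀ p, ∑ j, K p j = 1)
    (μ : σ → ℝ) (hμ : ∑ p, μ p = 0) (c : ℝ)
    (hc : ∀ p q, 0 < μ p → μ q < 0 → c ≤ ∑ j, min (K p j) (K q j)) :
    ∑ j, |∑ p, μ p * K p j| ≤ (1 - c) * ∑ p, |μ p| := by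
  set μp : σ → ℝ := fun p => max (μ p) 0 with hμpd
  set μm : σ → ℝ := fun p => max (-μ p) 0 with hμmd
  have hdec : ∀ p, μ p = μp p - μm p := fun p =>
    (max_zero_sub_max_neg_zero_eq_self (μ p)).symm
  have hp0 : ∀ p, 0 ≤ μp p := fun p => le_max_right _ _
  have hm0 : ∀ p, 0 ≤ μm p := fun p => le_max_right _ _
  have habs : ∀ p, |μ p| = μp p + μm p := fun p => (abs_self_eq (μ p)).symm
  set γ : ℝ := ∑ p, μp p with hγd
  have hγm : ∑ p, μm p = γ := by
    have h1 : ∑ p, (μp p - μm p) = 0 := by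
      rw [Finset.sum_congr rfl fun p _ => (hdec p).symm]; exact hμ
    rw [Finset.sum_sub_distrib] at h1; linarith
  have hγ0 : 0 ≤ γ := Finset.sum_nonneg fun p _ => hp0 p
  have habs_sum : ∑ p, |μ p| = 2 * γ := by
    rw [Finset.sum_congr rfl fun p _ => habs p, Finset.sum_add_distrib, hγm]; ring
  rcases eq_or_lt_of_le hγ0 with hγ | hγ
  · have hpz : ∀ p, μp p = 0 := fun p =>
      (Finset.sum_eq_zero_iff_of_nonneg (fun p _ => hp0 p)).1 hγ.symm p (Finset.mem_univ p)
    have hmz : ∀ p, μm p = 0 := by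
      intro p
      have h0 : ∑ p, μm p = 0 := by rw [hγm, ← hγ]
      exact (Finset.sum_eq_zero_iff_of_nonneg (fun p _ => hm0 p)).1 h0 p (Finset.mem_univ p)
    have hz : ∀ p, μ p = 0 := fun p => by rw [hdec p, hpz p, hmz p, sub_zero]
    simp [hz, habs_sum, ← hγ]
  · have key : ∀ j, ∑ p, μ p * K p j
        = (∑ p, ∑ q, μp p * μm q * (K p j - K q j)) / γ := by
      intro j
      rw [eq_div_iff (ne_of_gt hγ)]
      have e1 : ∀ p, ∑ q, μp p * μm q * (K p j - K q j)
          = μp p * K p j * γ - μp p * (∑ q, μm q * K q j) := by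
        intro p
        rw [← hγm, Finset.mul_sum, Finset.mul_sum, ← Finset.sum_sub_distrib]
        exact Finset.sum_congr rfl fun q _ => by ring
      rw [Finset.sum_congr rfl fun p _ => e1 p, Finset.sum_sub_distrib,
        ← Finset.sum_mul, ← Finset.sum_mul]
      have e2 : ∑ p, μ p * K p j = ∑ p, μp p * K p j - ∑ p, μm p * K p j := by
        rw [← Finset.sum_sub_distrib]
        exact Finset.sum_congr rfl fun p _ => by rw [hdec p]; ring
      rw [e2, hγd]; ring
    have pair : ∀ p q, μp p * μm q * (∑ j, |K p j - K q j|) ≤ μp p * μm q * (2 - 2 * c) := by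
      intro p q
      by_cases h : 0 < μ p ∧ μ q < 0
      · have hmin : c ≤ ∑ j, min (K p j) (K q j) := hc p q h.1 h.2
        have hsum : ∑ j, |K p j - K q j| = 2 - 2 * ∑ j, min (K p j) (K q j) := by
          have habsj : ∀ j, |K p j - K q j| = K p j + K q j - 2 * min (K p j) (K q j) := by
            intro j; rcases le_total (K p j) (K q j) with hle | hle
            · rw [abs_of_nonpos (by linarith), min_eq_left hle]; ring
            · rw [abs_of_nonneg (by linarith), min_eq_right hle]; ring
          rw [Finset.sum_congr rfl fun j _ => habsj j]
          simp only [Finset.sum_sub_distrib, Finset.sum_add_distrib, hK1, ← Finset.mul_sum]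
          norm_num
        have hle2 : ∑ j, |K p j - K q j| ≤ 2 - 2 * c := by rw [hsum]; linarith
        exact mul_le_mul_of_nonneg_left hle2 (mul_nonneg (hp0 p) (hm0 q))
      · have hz : μp p * μm q = 0 := by
          push_neg at h
          rcases lt_or_ge 0 (μ p) with h1 | h1
          · have h2 := h h1
            have : μm q = 0 := by simp [hμmd]; linarith
            rw [this, mul_zero]
          · have : μp p = 0 := by simp [hμpd]; linarith
            rw [this, zero_mul]
        rw [hz]; simp
    calc ∑ j, |∑ p, μ p * K p j|
        = ∑ j, |∑ p, ∑ q, μp p * μm q * (K p j - K q j)| / γ := by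
          refine Finset.sum_congr rfl fun j _ => ?_
          rw [key j, abs_div, abs_of_pos hγ]
      _ ≤ ∑ j, (∑ p, ∑ q, μp p * μm q * |K p j - K q j|) / γ := by
          refine Finset.sum_le_sum fun j _ => (div_le_div_iff_of_pos_right hγ).2 ?_
          refine (Finset.abs_sum_le_sum_abs _ _).trans (Finset.sum_le_sum fun p _ =>
            (Finset.abs_sum_le_sum_abs _ _).trans (Finset.sum_le_sum fun q _ => ?_))
          rw [abs_mul, abs_of_nonneg (mul_nonneg (hp0 p) (hm0 q))]
      _ = (∑ p, ∑ q, μp p * μm q * (∑ j, |K p j - K q j|)) / γ := by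
          rw [← Finset.sum_div]; congr 1
          rw [Finset.sum_comm]
          refine Finset.sum_congr rfl fun p _ => ?_
          rw [Finset.sum_comm]
          exact Finset.sum_congr rfl fun q _ => (Finset.mul_sum _ _ _).symm
      _ ≤ (∑ p, ∑ q, μp p * μm q * (2 - 2 * c)) / γ := by
          exact (div_le_div_iff_of_pos_right hγ).2 (Finset.sum_le_sum fun p _ =>
            Finset.sum_le_sum fun q _ => pair p q)
      _ = (1 - c) * ∑ p, |μ p| := by
          have e3 : ∑ p, ∑ q, μp p * μm q * (2 - 2 * c) = γ * (γ * (2 - 2 * c)) := by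
            calc ∑ p, ∑ q, μp p * μm q * (2 - 2 * c)
                = ∑ p, μp p * ((∑ q, μm q) * (2 - 2 * c)) := by
                  refine Finset.sum_congr rfl fun p _ => ?_
                  simp only [Finset.mul_sum, Finset.sum_mul]
                  exact Finset.sum_congr rfl fun q _ => by ring
              _ = (∑ p, μp p) * ((∑ q, μm q) * (2 - 2 * c)) := by rw [← Finset.sum_mul]
              _ = γ * (γ * (2 - 2 * c)) := by rw [hγm, ← hγd]
          rw [e3, habs_sum]
          field_simp


lemma step_lemma {n : ℕ} {P0 P1 : Matrix (Fin n) (Fin n) ℝ}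
    (hP0 : IsStochastic P0) (hP1 : IsStochastic P1) {r0 r1 : Fin n → ℝ}
    (hr0 : ∀ i, r0 i ∈ Set.Icc (0 : ℝ) 1) (hr1 : ∀ i, r1 i ∈ Set.Icc (0 : ℝ) 1)
    {α : ℝ} {x x' u : Fin n → ℝ}
    (hx : x ∈ stdSimplex ℝ (Fin n)) (hx' : x' ∈ stdSimplex ℝ (Fin n))
    (hu : u ∈ feas α x) :
    cpl x x' u ∈ feas α x' ∧
    |rew r0 r1 x u - rew r0 r1 x' (cpl x x' u)| ≤ l1 (x - x') ∧
    l1 (phi P0 P1 x u - phi P0 P1 x' (cpl x x' u)) ≤ (1 - rho P0 P1 1) * l1 (x - x') := by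
  set u' := cpl x x' u with hu'd
  have props := fun i => cpl_props hx.1 hx'.1 hu.1 i
  have hfeas : u' ∈ feas α x' :=
    ⟨fun i => ⟨(props i).1, (props i).2.1⟩,
      (Finset.sum_le_sum fun i _ => (props i).2.2.1).trans hu.2⟩
  have hl1 : l1 (x - x') = ∑ i, |x i - x' i| := by
    simp [l1, Pi.sub_apply]
  refine ⟨hfeas, ?_, ?_⟩
  · -- reward bound
    have hrewd : rew r0 r1 x u - rew r0 r1 x' u' =
        ∑ i, (r1 i * (u i - u' i) + r0 i * (x i - x' i - (u i - u' i))) := by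
      simp only [rew, dotProduct, Pi.sub_apply]
      rw [← Finset.sum_add_distrib, ← Finset.sum_add_distrib, ← Finset.sum_sub_distrib]
      exact Finset.sum_congr rfl fun i _ => by ring
    rw [hrewd, hl1]
    refine (Finset.abs_sum_le_sum_abs _ _).trans (Finset.sum_le_sum fun i _ => ?_)
    have hb : ∀ (r : ℝ) (a : ℝ), 0 ≤ r → r ≤ 1 → |r * a| ≤ |a| := by
      intro r a h0 h1
      rw [abs_mul, abs_of_nonneg h0]
      exact mul_le_of_le_one_left (abs_nonneg a) h1
    calc |r1 i * (u i - u' i) + r0 i * (x i - x' i - (u i - u' i))|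
        ≤ |r1 i * (u i - u' i)| + |r0 i * (x i - x' i - (u i - u' i))| := abs_add_le _ _
      _ ≤ |u i - u' i| + |x i - x' i - (u i - u' i)| :=
          add_le_add (hb _ _ (hr1 i).1 (hr1 i).2) (hb _ _ (hr0 i).1 (hr0 i).2)
      _ = |x i - x' i| := (props i).2.2.2.2
  · -- contraction bound
    set μ : Fin n ⊕ Fin n → ℝ :=
      Sum.elim (fun i => u i - u' i) (fun i => x i - x' i - (u i - u' i)) with hμd
    set K : Fin n ⊕ Fin n → Fin n → ℝ :=
      Sum.elim (fun i => P1 i) (fun i => P0 i) with hKd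
    have hphij : ∀ j, (phi P0 P1 x u - phi P0 P1 x' u') j = ∑ p, μ p * K p j := by
      intro j
      rw [Fintype.sum_sum_type]
      simp only [hμd, hKd, Sum.elim_inl, Sum.elim_inr]
      simp only [phi, Pi.sub_apply, Pi.add_apply, Matrix.vecMul, dotProduct,
        Matrix.sub_apply]
      rw [← Finset.sum_add_distrib, ← Finset.sum_add_distrib, ← Finset.sum_sub_distrib,
        ← Finset.sum_add_distrib]
      exact Finset.sum_congr rfl fun i _ => by ring
    have hK0 : ∀ p j, 0 ≤ K p j := by
      rintro (i | i) j
      · exact hP1.1 i j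
      · exact hP0.1 i j
    have hK1 : ∀ p, ∑ j, K p j = 1 := by
      rintro (i | i)
      · exact hP1.2 i
      · exact hP0.2 i
    have hμ0 : ∑ p, μ p = 0 := by
      rw [Fintype.sum_sum_type]
      simp only [hμd, Sum.elim_inl, Sum.elim_inr]
      rw [← Finset.sum_add_distrib]
      have : ∑ i, (u i - u' i + (x i - x' i - (u i - u' i))) = ∑ i, (x i - x' i) :=
        Finset.sum_congr rfl fun i _ => by ring
      rw [this, Finset.sum_sub_distrib, hx.2, hx'.2, sub_self]
    have hc : ∀ p q, 0 < μ p → μ q < 0 → rho P0 P1 1 ≤ ∑ j, min (K p j) (K q j) := by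
      rintro p (i' | i') hp hq
      · exact absurd hq (not_lt.2 (props i').2.2.2.1)
      · cases p with
        | inl i =>
          have := rho_le P0 P1 true i i'
          simpa [hKd] using this
        | inr i =>
          have := rho_le P0 P1 false i i'
          simpa [hKd] using this
    have hdob := dob K hK0 hK1 μ hμ0 (rho P0 P1 1) hc
    have habsμ : ∑ p, |μ p| = l1 (x - x') := by
      rw [Fintype.sum_sum_type]
      simp only [hμd, Sum.elim_inl, Sum.elim_inr]
      rw [← Finset.sum_add_distrib, hl1]
      refine Finset.sum_congr rfl fun i _ => ?_
      have h1 := (props i).2.2.2.1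
      rw [abs_of_nonneg h1]
      have := (props i).2.2.2.2
      rw [abs_of_nonneg h1] at this
      linarith [this]
    calc l1 (phi P0 P1 x u - phi P0 P1 x' u')
        = ∑ j, |∑ p, μ p * K p j| := by
          rw [l1]; exact Finset.sum_congr rfl fun j _ => by rw [hphij j]
      _ ≤ (1 - rho P0 P1 1) * ∑ p, |μ p| := hdob
      _ = (1 - rho P0 P1 1) * l1 (x - x') := by rw [habsμ]

lemma rew_bound {n : ℕ} {r0 r1 : Fin n → ℝ}
    (hr0 : ∀ i, r0 i ∈ Set.Icc (0 : ℝ) 1) (hr1 : ∀ i, r1 i ∈ Set.Icc (0 : ℝ) 1)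
    {α : ℝ} (hα : α ≤ 1) {z u : Fin n → ℝ}
    (hz : z ∈ stdSimplex ℝ (Fin n)) (hu : u ∈ feas α z) :
    |rew r0 r1 z u| ≤ 2 := by
  have h1 : |r0 ⬝ᵥ z| ≤ 1 := by
    simp only [dotProduct]
    rw [abs_of_nonneg (Finset.sum_nonneg fun i _ =>
      mul_nonneg (hr0 i).1 (hz.1 i))]
    calc ∑ i, r0 i * z i ≤ ∑ i, z i :=
          Finset.sum_le_sum fun i _ => by
            nlinarith [(hr0 i).1, (hr0 i).2, hz.1 i]
      _ = 1 := hz.2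
  have h2 : |(r1 - r0) ⬝ᵥ u| ≤ 1 := by
    simp only [dotProduct]
    have : ∀ i, |(r1 i - r0 i) * u i| ≤ u i := by
      intro i
      rw [abs_mul, abs_of_nonneg (hu.1 i).1]
      have : |r1 i - r0 i| ≤ 1 := by
        rw [abs_le]; constructor <;> nlinarith [(hr0 i).1, (hr0 i).2, (hr1 i).1, (hr1 i).2]
      nlinarith [(hu.1 i).1, abs_nonneg (r1 i - r0 i)]
    calc |∑ i, (r1 - r0) i * u i| ≤ ∑ i, |(r1 i - r0 i) * u i| := by
          simpa [dotProduct, Pi.sub_apply] using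
            Finset.abs_sum_le_sum_abs (fun i => (r1 i - r0 i) * u i) Finset.univ
      _ ≤ ∑ i, u i := Finset.sum_le_sum fun i _ => this i
      _ ≤ 1 := hu.2.trans hα
  calc |rew r0 r1 z u| ≤ |r0 ⬝ᵥ z| + |(r1 - r0) ⬝ᵥ u| := abs_add_le _ _
    _ ≤ 2 := by linarith

lemma traj_simplex {n : ℕ} {P0 P1 : Matrix (Fin n) (Fin n) ℝ}
    (hP0 : IsStochastic P0) (hP1 : IsStochastic P1) {α : ℝ} {y : Fin n → ℝ}
    (hy : y ∈ stdSimplex ℝ (Fin n)) {X U : ℕ → Fin n → ℝ}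
    (hT : IsTraj α P0 P1 y X U) : ∀ t, X t ∈ stdSimplex ℝ (Fin n) := by
  intro t
  induction t with
  | zero => rw [hT.1]; exact hy
  | succ t ih => rw [(hT.2 t).2]; exact phi_mem hP0 hP1 ih (hT.2 t).1

lemma traj_summable {n : ℕ} {P0 P1 : Matrix (Fin n) (Fin n) ℝ}
    (hP0 : IsStochastic P0) (hP1 : IsStochastic P1) {r0 r1 : Fin n → ℝ}
    (hr0 : ∀ i, r0 i ∈ Set.Icc (0 : ℝ) 1) (hr1 : ∀ i, r1 i ∈ Set.Icc (0 : ℝ) 1)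
    {α : ℝ} (hα : α ≤ 1) {β : ℝ} (hβ : β ∈ Set.Ioo (0 : ℝ) 1) {y : Fin n → ℝ}
    (hy : y ∈ stdSimplex ℝ (Fin n)) {X U : ℕ → Fin n → ℝ}
    (hT : IsTraj α P0 P1 y X U) :
    Summable (fun t => β ^ t * rew r0 r1 (X t) (U t)) ∧
    ∑' t, β ^ t * rew r0 r1 (X t) (U t) ≤ 2 * (1 - β)⁻¹ := by
  have hb : ∀ t, ‖β ^ t * rew r0 r1 (X t) (U t)‖ ≤ 2 * β ^ t := by
    intro t
    rw [Real.norm_eq_abs, abs_mul, abs_of_nonneg (pow_nonneg hβ.1.le t)]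
    have := rew_bound hr0 hr1 hα (traj_simplex hP0 hP1 hy hT t) (hT.2 t).1
    nlinarith [pow_nonneg hβ.1.le t]
  have hgeo : Summable (fun t : ℕ => 2 * β ^ t) :=
    (summable_geometric_of_lt_one hβ.1.le hβ.2).mul_left 2
  have hs : Summable (fun t => β ^ t * rew r0 r1 (X t) (U t)) :=
    Summable.of_norm_bounded hgeo hb
  refine ⟨hs, ?_⟩
  calc ∑' t, β ^ t * rew r0 r1 (X t) (U t) ≤ ∑' t : ℕ, 2 * β ^ t :=
        Summable.tsum_le_tsum (fun t => (le_abs_self _).trans ((Real.norm_eq_abs _) ▸ hb t)) hs hgeo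
    _ = 2 * (1 - β)⁻¹ := by
        rw [tsum_mul_left, tsum_geometric_of_lt_one hβ.1.le hβ.2]

lemma vset_nonempty {n : ℕ} {P0 P1 : Matrix (Fin n) (Fin n) ℝ}
    (hP0 : IsStochastic P0) (hP1 : IsStochastic P1) {r0 r1 : Fin n → ℝ}
    {α : ℝ} (hα : 0 < α) {β : ℝ} {y : Fin n → ℝ}
    (hy : y ∈ stdSimplex ℝ (Fin n)) :
    {v | ∃ X U : ℕ → Fin n → ℝ, IsTraj α P0 P1 y X U ∧
      v = ∑' t : ℕ, β ^ t * rew r0 r1 (X t) (U t)}.Nonempty := by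
  set X : ℕ → Fin n → ℝ := fun t => (fun z => phi P0 P1 z 0)^[t] y with hX
  have hXs : ∀ t, X t ∈ stdSimplex ℝ (Fin n) ∧ (0 : Fin n → ℝ) ∈ feas α (X t) := by
    intro t
    induction t with
    | zero =>
      refine ⟨hy, fun i => ⟨le_refl _, by simpa [hX] using hy.1 i⟩, by simp [hα.le]⟩
    | succ t ih =>
      have h1 : X (t + 1) = phi P0 P1 (X t) 0 := Function.iterate_succ_apply' _ t y
      have h2 : X (t + 1) ∈ stdSimplex ℝ (Fin n) := h1 ▸ phi_mem hP0 hP1 ih.1 ih.2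
      exact ⟨h2, fun i => ⟨le_refl _, by simpa using h2.1 i⟩, by simp [hα.le]⟩
  refine ⟨_, X, fun _ => 0, ⟨rfl, fun t => ⟨(hXs t).2, Function.iterate_succ_apply' _ t y⟩⟩, rfl⟩

lemma vset_bddAbove {n : ℕ} {P0 P1 : Matrix (Fin n) (Fin n) ℝ}
    (hP0 : IsStochastic P0) (hP1 : IsStochastic P1) {r0 r1 : Fin n → ℝ}
    (hr0 : ∀ i, r0 i ∈ Set.Icc (0 : ℝ) 1) (hr1 : ∀ i, r1 i ∈ Set.Icc (0 : ℝ) 1)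
    {α : ℝ} (hα : α ≤ 1) {β : ℝ} (hβ : β ∈ Set.Ioo (0 : ℝ) 1) {y : Fin n → ℝ}
    (hy : y ∈ stdSimplex ℝ (Fin n)) :
    BddAbove {v | ∃ X U : ℕ → Fin n → ℝ, IsTraj α P0 P1 y X U ∧
      v = ∑' t : ℕ, β ^ t * rew r0 r1 (X t) (U t)} := by
  refine ⟨2 * (1 - β)⁻¹, ?_⟩
  rintro v ⟨X, U, hT, rfl⟩
  exact (traj_summable hP0 hP1 hr0 hr1 hα hβ hy hT).2

lemma l1_comm {n : ℕ} (x x' : Fin n → ℝ) : l1 (x - x') = l1 (x' - x) := by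
  simp [l1, Pi.sub_apply, abs_sub_comm]

lemma key {n : ℕ} (hn : 1 ≤ n) {P0 P1 : Matrix (Fin n) (Fin n) ℝ}
    (hP0 : IsStochastic P0) (hP1 : IsStochastic P1) {r0 r1 : Fin n → ℝ}
    (hr0 : ∀ i, r0 i ∈ Set.Icc (0 : ℝ) 1) (hr1 : ∀ i, r1 i ∈ Set.Icc (0 : ℝ) 1)
    {α : ℝ} (hα : α ∈ Set.Ioc (0 : ℝ) 1) (hρ : 0 < rho P0 P1 1)
    {β : ℝ} (hβ : β ∈ Set.Ioo (0 : ℝ) 1)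
    {x x' : Fin n → ℝ} (hx : x ∈ stdSimplex ℝ (Fin n)) (hx' : x' ∈ stdSimplex ℝ (Fin n)) :
    Vdisc α P0 P1 r0 r1 β x ≤
      Vdisc α P0 P1 r0 r1 β x' + (1 / rho P0 P1 1) * l1 (x - x') := by
  set ρ := rho P0 P1 1 with hρd
  have hρ1 : ρ ≤ 1 := rho_le_one hn P0 P1 hP0
  rw [Vdisc]
  apply csSup_le (vset_nonempty hP0 hP1 hα.1 hx)
  rintro v ⟨X, U, hT, rfl⟩
  set X' : ℕ → Fin n → ℝ :=
    fun t => Nat.rec x' (fun t xt => phi P0 P1 xt (cpl (X t) xt (U t))) t with hX'd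
  set U' : ℕ → Fin n → ℝ := fun t => cpl (X t) (X' t) (U t) with hU'd
  have hX'0 : X' 0 = x' := rfl
  have hX'succ : ∀ t, X' (t + 1) = phi P0 P1 (X' t) (U' t) := fun t => rfl
  have inv : ∀ t, X' t ∈ stdSimplex ℝ (Fin n) ∧
      l1 (X t - X' t) ≤ (1 - ρ) ^ t * l1 (x - x') := by
    intro t
    induction t with
    | zero =>
      refine ⟨hx', ?_⟩
      rw [hT.1, hX'0, pow_zero, one_mul]
    | succ t ih =>
      have hXt := traj_simplex hP0 hP1 hx hT t
      have hs := step_lemma hP0 hP1 hr0 hr1 hXt ih.1 (hT.2 t).1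
      refine ⟨hX'succ t ▸ phi_mem hP0 hP1 ih.1 hs.1, ?_⟩
      rw [(hT.2 t).2, hX'succ t]
      calc l1 (phi P0 P1 (X t) (U t) - phi P0 P1 (X' t) (U' t))
          ≤ (1 - ρ) * l1 (X t - X' t) := hs.2.2
        _ ≤ (1 - ρ) * ((1 - ρ) ^ t * l1 (x - x')) :=
            mul_le_mul_of_nonneg_left ih.2 (by linarith)
        _ = (1 - ρ) ^ (t + 1) * l1 (x - x') := by ring
  have hT' : IsTraj α P0 P1 x' X' U' :=
    ⟨rfl, fun t => ⟨(step_lemma hP0 hP1 hr0 hr1 (traj_simplex hP0 hP1 hx hT t)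
      (inv t).1 (hT.2 t).1).1, rfl⟩⟩
  have hrd : ∀ t, |rew r0 r1 (X t) (U t) - rew r0 r1 (X' t) (U' t)| ≤
      (1 - ρ) ^ t * l1 (x - x') := fun t =>
    ((step_lemma hP0 hP1 hr0 hr1 (traj_simplex hP0 hP1 hx hT t) (inv t).1
      (hT.2 t).1).2.1).trans (inv t).2
  have hs1 := traj_summable hP0 hP1 hr0 hr1 hα.2 hβ hx hT
  have hs2 := traj_summable hP0 hP1 hr0 hr1 hα.2 hβ hx' hT'
  set D := l1 (x - x') with hDd
  have hD0 : 0 ≤ D := Finset.sum_nonneg fun i _ => abs_nonneg _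
  set r := β * (1 - ρ) with hrdef
  have hrnn : 0 ≤ r := mul_nonneg hβ.1.le (by linarith)
  have hrlt : r < 1 := lt_of_le_of_lt
    (by nlinarith [hβ.2] : r ≤ 1 - ρ) (by linarith)
  have hmaj : Summable (fun t : ℕ => r ^ t * D) :=
    (summable_geometric_of_lt_one hrnn hrlt).mul_right D
  have hnorm : ∀ t, ‖β ^ t * rew r0 r1 (X t) (U t) - β ^ t * rew r0 r1 (X' t) (U' t)‖
      ≤ r ^ t * D := by
    intro t
    rw [Real.norm_eq_abs, ← mul_sub, abs_mul, abs_of_nonneg (pow_nonneg hβ.1.le t),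
      hrdef, mul_pow]
    calc β ^ t * |rew r0 r1 (X t) (U t) - rew r0 r1 (X' t) (U' t)|
        ≤ β ^ t * ((1 - ρ) ^ t * D) :=
          mul_le_mul_of_nonneg_left (hrd t) (pow_nonneg hβ.1.le t)
      _ = β ^ t * (1 - ρ) ^ t * D := by ring
  have hsn : Summable (fun t => ‖β ^ t * rew r0 r1 (X t) (U t)
      - β ^ t * rew r0 r1 (X' t) (U' t)‖) :=
    Summable.of_nonneg_of_le (fun t => norm_nonneg _) hnorm hmaj
  have hbound : |∑' t, (β ^ t * rew r0 r1 (X t) (U t)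
      - β ^ t * rew r0 r1 (X' t) (U' t))| ≤ (1 - r)⁻¹ * D := by
    calc |∑' t, (β ^ t * rew r0 r1 (X t) (U t) - β ^ t * rew r0 r1 (X' t) (U' t))|
        ≤ ∑' t, ‖β ^ t * rew r0 r1 (X t) (U t) - β ^ t * rew r0 r1 (X' t) (U' t)‖ :=
          norm_tsum_le_tsum_norm hsn
      _ ≤ ∑' t : ℕ, r ^ t * D := Summable.tsum_le_tsum hnorm hsn hmaj
      _ = (1 - r)⁻¹ * D := by
          rw [tsum_mul_right, tsum_geometric_of_lt_one hrnn hrlt, mul_comm]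
  have hdiff : (∑' t, β ^ t * rew r0 r1 (X t) (U t))
      - (∑' t, β ^ t * rew r0 r1 (X' t) (U' t))
      = ∑' t, (β ^ t * rew r0 r1 (X t) (U t) - β ^ t * rew r0 r1 (X' t) (U' t)) :=
    (Summable.tsum_sub hs1.1 hs2.1).symm
  have hinv : (1 - r)⁻¹ ≤ ρ⁻¹ := by
    apply inv_anti₀ hρ
    nlinarith [hβ.2, hβ.1]
  have hle : (∑' t, β ^ t * rew r0 r1 (X t) (U t))
      ≤ (∑' t, β ^ t * rew r0 r1 (X' t) (U' t)) + (1 / ρ) * D := by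
    have h1 := (le_abs_self _).trans hbound
    rw [← hdiff] at h1
    have h2 : (1 - r)⁻¹ * D ≤ ρ⁻¹ * D := mul_le_mul_of_nonneg_right hinv hD0
    rw [one_div]
    linarith
  refine hle.trans (add_le_add_left ?_ _)
  exact le_csSup (vset_bddAbove hP0 hP1 hr0 hr1 hα.2 hβ hx') ⟨X', U', hT', rfl⟩


/-- Lipschitz bound for `V_β` on the grid `Δ^(M)` for close points. -/
theorem stmt1 {n : ℕ} (hn : 1 ≤ n)
    (P0 P1 : Matrix (Fin n) (Fin n) ℝ) (hP0 : IsStochastic P0) (hP1 : IsStochastic P1)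
    (r0 r1 : Fin n → ℝ) (hr0 : ∀ i, r0 i ∈ Set.Icc (0 : ℝ) 1)
    (hr1 : ∀ i, r1 i ∈ Set.Icc (0 : ℝ) 1)
    (α : ℝ) (hα : α ∈ Set.Ioc (0 : ℝ) 1)
    (hρ : 0 < rho P0 P1 1)
    (M : ℕ) (hM : 1 ≤ M)
    (β : ℝ) (hβ : β ∈ Set.Ioo (0 : ℝ) 1)
    (x x' : Fin n → ℝ)
    (hx : x ∈ stdSimplex ℝ (Fin n)) (hx' : x' ∈ stdSimplex ℝ (Fin n))
    (hxM : ∀ i, ∃ m : ℕ, (M : ℝ) * x i = m)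
    (hx'M : ∀ i, ∃ m : ℕ, (M : ℝ) * x' i = m)
    (hclose : l1 (x - x') ≤ 2 / M) :
    |Vdisc α P0 P1 r0 r1 β x - Vdisc α P0 P1 r0 r1 β x'| ≤
      (1 / rho P0 P1 1) * l1 (x - x') := by
  rw [abs_sub_le_iff]
  constructor
  · have h := key hn hP0 hP1 hr0 hr1 hα hρ hβ hx hx'
    linarith
  · have h := key hn hP0 hP1 hr0 hr1 hα hρ hβ hx' hx
    rw [l1_comm x' x] at h
    linarith
end

section
/- Assume ρ_k > 0 for some integer k ≥ 1. For every β ∈ (0,1) there exist x_β ∈ Δ and u_β ∈ U(x_β) such that Φ(x_β, u_β) = x_β and V_β(x_β) = R(x_β, u_β) + β·V_β(x_β); equivalently, V_β(x_β) = R(x_β, u_β)/(1 − β). -/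
open Matrix Finset Filter Topology

namespace Stmt3Aux

variable {n : ℕ}


variable {n : ℕ}

lemma vecMul_apply (v : Fin n → ℝ) (Q : Matrix (Fin n) (Fin n) ℝ) (j : Fin n) :
    (v ᵥ* Q) j = ∑ i, v i * Q i j := by
  simp [Matrix.vecMul, dotProduct]

lemma vecMul_mem_simplex {Q : Matrix (Fin n) (Fin n) ℝ} (hQ : IsStochastic Q)
    {x : Fin n → ℝ} (hx : x ∈ stdSimplex ℝ (Fin n)) : x ᵥ* Q ∈ stdSimplex ℝ (Fin n) := by
  constructor
  · intro j
    rw [vecMul_apply]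
    exact Finset.sum_nonneg fun i _ => mul_nonneg (hx.1 i) (hQ.1 i j)
  · have : ∑ j, (x ᵥ* Q) j = ∑ i, x i * ∑ j, Q i j := by
      simp only [vecMul_apply, Finset.mul_sum]
      rw [Finset.sum_comm]
    rw [this]
    simp only [hQ.2, mul_one]
    exact hx.2

lemma mem_simplex_le_one {x : Fin n → ℝ} (hx : x ∈ stdSimplex ℝ (Fin n)) (i : Fin n) :
    x i ≤ 1 := by
  rw [← hx.2]
  exact Finset.single_le_sum (fun j _ => hx.1 j) (Finset.mem_univ i)

lemma exists_stationary (hn : 1 ≤ n) {Q : Matrix (Fin n) (Fin n) ℝ} (hQ : IsStochastic Q) :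
    ∃ p ∈ stdSimplex ℝ (Fin n), p ᵥ* Q = p := by
  haveI : Nonempty (Fin n) := ⟨⟨0, hn⟩⟩
  set x0 : Fin n → ℝ := fun _ => (n : ℝ)⁻¹ with hx0
  have hn0 : (0:ℝ) < n := by exact_mod_cast hn
  have hx0mem : x0 ∈ stdSimplex ℝ (Fin n) := by
    constructor
    · intro i; positivity
    · simp [hx0, Finset.card_univ]
      field_simp
  set f : ℕ → Fin n → ℝ := fun t => x0 ᵥ* (Q ^ t) with hf
  have hf0 : f 0 = x0 := by simp [hf]
  have hfs : ∀ t, f (t + 1) = (f t) ᵥ* Q := by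
    intro t
    simp [hf, pow_succ, Matrix.vecMul_vecMul]
  have hfmem : ∀ t, f t ∈ stdSimplex ℝ (Fin n) := by
    intro t
    induction t with
    | zero => rw [hf0]; exact hx0mem
    | succ t ih => rw [hfs]; exact vecMul_mem_simplex hQ ih
  set g : ℕ → Fin n → ℝ := fun T => ((T:ℝ) + 1)⁻¹ • ∑ t ∈ Finset.range (T + 1), f t with hg
  have hgmem : ∀ T, g T ∈ stdSimplex ℝ (Fin n) := by
    intro T
    have hT : (0:ℝ) < (T:ℝ) + 1 := by positivity
    constructor
    · intro i
      simp only [hg, Pi.smul_apply, smul_eq_mul, Finset.sum_apply]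
      exact mul_nonneg (by positivity) (Finset.sum_nonneg fun t _ => (hfmem t).1 i)
    · simp only [hg, Pi.smul_apply, smul_eq_mul, Finset.sum_apply]
      rw [← Finset.mul_sum, Finset.sum_comm]
      have : ∀ t ∈ Finset.range (T+1), ∑ i, f t i = 1 := fun t _ => (hfmem t).2
      rw [Finset.sum_congr rfl this]
      simp only [Finset.sum_const, Finset.card_range, nsmul_eq_mul, Nat.cast_add, Nat.cast_one, mul_one]
      rw [inv_mul_cancel₀ (by positivity)]
  obtain ⟨p, hp, φ, hφ, hlim⟩ := (isCompact_stdSimplex ℝ (Fin n)).tendsto_subseq hgmem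
  refine ⟨p, hp, ?_⟩
  have hkey : ∀ T j, (g T ᵥ* Q) j = g T j + ((T:ℝ) + 1)⁻¹ * (f (T + 1) j - f 0 j) := by
    intro T j
    have h1 : (g T ᵥ* Q) j = ((T:ℝ)+1)⁻¹ * ∑ t ∈ Finset.range (T+1), f (t+1) j := by
      rw [vecMul_apply]
      simp only [hg, Pi.smul_apply, smul_eq_mul, Finset.sum_apply]
      simp only [Finset.mul_sum, Finset.sum_mul]
      rw [Finset.sum_comm]
      refine Finset.sum_congr rfl fun t _ => ?_
      rw [hfs t, vecMul_apply, Finset.mul_sum]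
      exact Finset.sum_congr rfl fun x _ => by ring
    have h2 : ∑ t ∈ Finset.range (T+1), f (t+1) j
        = (∑ t ∈ Finset.range (T+1), f t j) + f (T+1) j - f 0 j := by
      have ha := Finset.sum_range_succ' (fun t => f t j) (T+1)
      have hb := Finset.sum_range_succ (fun t => f t j) (T+1)
      linarith
    rw [h1, h2]
    simp only [hg, Pi.smul_apply, smul_eq_mul, Finset.sum_apply]
    ring
  have hcont : ∀ j : Fin n, Continuous (fun v : Fin n → ℝ => (v ᵥ* Q) j) := by
    intro j
    have : (fun v : Fin n → ℝ => (v ᵥ* Q) j) = fun v => ∑ i, v i * Q i j := by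
      funext v; exact vecMul_apply v Q j
    rw [this]
    exact continuous_finset_sum _ fun i _ => (continuous_apply i).mul continuous_const
  apply funext; intro j
  have l1 : Tendsto (fun k => (g (φ k) ᵥ* Q) j) atTop (𝓝 ((p ᵥ* Q) j)) :=
    ((hcont j).tendsto p).comp hlim
  have l2a : Tendsto (fun k => g (φ k) j) atTop (𝓝 (p j)) :=
    ((continuous_apply j).tendsto p).comp hlim
  have herr : Tendsto (fun k => ((φ k : ℝ) + 1)⁻¹ * (f (φ k + 1) j - f 0 j)) atTop (𝓝 0) := by
    refine squeeze_zero_norm (f := fun k => ((φ k : ℝ) + 1)⁻¹ * (f (φ k + 1) j - f 0 j)) (a := fun k => ((k:ℝ)+1)⁻¹) ?_ ?_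
    · intro k
      have hb1 : |f (φ k + 1) j - f 0 j| ≤ 1 := by
        have h1 := (hfmem (φ k + 1)).1 j
        have h2 := (hfmem 0).1 j
        have h3 := mem_simplex_le_one (hfmem (φ k + 1)) j
        have h4 := mem_simplex_le_one (hfmem 0) j
        rw [abs_le]; constructor <;> linarith
      have hφk : (k:ℝ) ≤ (φ k : ℝ) := by exact_mod_cast hφ.le_apply
      have hpos : (0:ℝ) < (φ k : ℝ) + 1 := by positivity
      calc ‖((φ k : ℝ) + 1)⁻¹ * (f (φ k + 1) j - f 0 j)‖
          = ((φ k : ℝ) + 1)⁻¹ * |f (φ k + 1) j - f 0 j| := by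
            rw [Real.norm_eq_abs, abs_mul, abs_of_pos (by positivity)]
        _ ≤ ((φ k : ℝ) + 1)⁻¹ * 1 := by
            exact mul_le_mul_of_nonneg_left hb1 (by positivity)
        _ ≤ ((k:ℝ)+1)⁻¹ := by
            rw [mul_one]
            exact inv_anti₀ (by positivity) (by linarith)
    · have := tendsto_one_div_add_atTop_nhds_zero_nat (𝕜 := ℝ)
      simpa [one_div] using this
  have l2 : Tendsto (fun k => (g (φ k) ᵥ* Q) j) atTop (𝓝 (p j + 0)) := by
    simp only [hkey]
    exact l2a.add herr
  rw [add_zero] at l2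
  exact tendsto_nhds_unique l1 l2




variable {n : ℕ}

lemma mulVec_apply (P : Matrix (Fin n) (Fin n) ℝ) (a : Fin n → ℝ) (i : Fin n) :
    (P *ᵥ a) i = ∑ j, P i j * a j := by
  simp [Matrix.mulVec, dotProduct]

lemma mulVec_le {P : Matrix (Fin n) (Fin n) ℝ} (hP : IsStochastic P) {a : Fin n → ℝ} {M : ℝ}
    (hM : ∀ j, a j ≤ M) (i : Fin n) : (P *ᵥ a) i ≤ M := by
  rw [mulVec_apply]
  calc ∑ j, P i j * a j ≤ ∑ j, P i j * M :=
        Finset.sum_le_sum fun j _ => mul_le_mul_of_nonneg_left (hM j) (hP.1 i j)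
    _ = M := by rw [← Finset.sum_mul, hP.2 i, one_mul]

lemma le_mulVec {P : Matrix (Fin n) (Fin n) ℝ} (hP : IsStochastic P) {a : Fin n → ℝ} {m : ℝ}
    (hm : ∀ j, m ≤ a j) (i : Fin n) : m ≤ (P *ᵥ a) i := by
  rw [mulVec_apply]
  calc m = ∑ j, P i j * m := by rw [← Finset.sum_mul, hP.2 i, one_mul]
    _ ≤ ∑ j, P i j * a j :=
        Finset.sum_le_sum fun j _ => mul_le_mul_of_nonneg_left (hm j) (hP.1 i j)

lemma abs_mulVec_sub_le {P : Matrix (Fin n) (Fin n) ℝ} (hP : IsStochastic P) {a b : Fin n → ℝ}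
    {c : ℝ} (h : ∀ j, |a j - b j| ≤ c) (i : Fin n) : |(P *ᵥ a) i - (P *ᵥ b) i| ≤ c := by
  have h1 : (P *ᵥ a) i - (P *ᵥ b) i = ∑ j, P i j * (a j - b j) := by
    rw [mulVec_apply, mulVec_apply, ← Finset.sum_sub_distrib]
    exact Finset.sum_congr rfl fun j _ => by ring
  rw [h1]
  calc |∑ j, P i j * (a j - b j)| ≤ ∑ j, |P i j * (a j - b j)| := Finset.abs_sum_le_sum_abs _ _
    _ ≤ ∑ j, P i j * c := by
        refine Finset.sum_le_sum fun j _ => ?_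
        rw [abs_mul, abs_of_nonneg (hP.1 i j)]
        exact mul_le_mul_of_nonneg_left (h j) (hP.1 i j)
    _ = c := by rw [← Finset.sum_mul, hP.2 i, one_mul]

/-- Bellman operator of the auxiliary two-action MDP with Lagrange penalty `lam`. -/
noncomputable def bop (P0 P1 : Matrix (Fin n) (Fin n) ℝ) (r0 r1 : Fin n → ℝ) (β lam : ℝ)
    (a : Fin n → ℝ) : Fin n → ℝ :=
  fun i => max ((1 - β) * r0 i + β * (P0 *ᵥ a) i) ((1 - β) * (r1 i - lam) + β * (P1 *ᵥ a) i)

lemma bop_exists_fixed (hn : 1 ≤ n) (P0 P1 : Matrix (Fin n) (Fin n) ℝ)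
    (hP0 : IsStochastic P0) (hP1 : IsStochastic P1)
    (r0 r1 : Fin n → ℝ) (hr0 : ∀ i, r0 i ∈ Set.Icc (0 : ℝ) 1)
    (hr1 : ∀ i, r1 i ∈ Set.Icc (0 : ℝ) 1) {β : ℝ} (hβ : β ∈ Set.Ioo (0 : ℝ) 1) (lam : ℝ) :
    ∃ a : Fin n → ℝ, bop P0 P1 r0 r1 β lam a = a ∧ (∀ i, 0 ≤ a i) ∧
      (0 ≤ lam → ∀ i, a i ≤ 1) := by
  haveI : Nonempty (Fin n) := ⟨⟨0, hn⟩⟩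
  have hβ0 : (0:ℝ) < β := hβ.1
  have hβ1 : β < 1 := hβ.2
  set K : NNReal := ⟨β, hβ0.le⟩ with hK
  have hdist : ∀ a b : Fin n → ℝ,
      dist (bop P0 P1 r0 r1 β lam a) (bop P0 P1 r0 r1 β lam b) ≤ β * dist a b := by
    intro a b
    rw [dist_pi_le_iff (by positivity)]
    intro i
    have hab : ∀ j, |a j - b j| ≤ dist a b := by
      intro j
      rw [← Real.dist_eq]
      exact dist_le_pi_dist a b j
    rw [Real.dist_eq]
    simp only [bop]
    refine le_trans (abs_max_sub_max_le_max _ _ _ _) ?_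
    have e0 : (1 - β) * r0 i + β * (P0 *ᵥ a) i - ((1 - β) * r0 i + β * (P0 *ᵥ b) i)
        = β * ((P0 *ᵥ a) i - (P0 *ᵥ b) i) := by ring
    have e1 : (1 - β) * (r1 i - lam) + β * (P1 *ᵥ a) i
        - ((1 - β) * (r1 i - lam) + β * (P1 *ᵥ b) i) = β * ((P1 *ᵥ a) i - (P1 *ᵥ b) i) := by ring
    rw [e0, e1, abs_mul, abs_mul, abs_of_pos hβ0]
    refine max_le ?_ ?_
    · exact mul_le_mul_of_nonneg_left (abs_mulVec_sub_le hP0 hab i) hβ0.le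
    · exact mul_le_mul_of_nonneg_left (abs_mulVec_sub_le hP1 hab i) hβ0.le
  have hc : ContractingWith K (bop P0 P1 r0 r1 β lam) := by
    constructor
    · exact_mod_cast hβ1
    · exact LipschitzWith.of_dist_le_mul hdist
  set a := ContractingWith.fixedPoint (bop P0 P1 r0 r1 β lam) hc with ha
  have hfix : bop P0 P1 r0 r1 β lam a = a := hc.fixedPoint_isFixedPt
  refine ⟨a, hfix, ?_, ?_⟩
  · -- nonnegativity
    obtain ⟨i0, -, hi0⟩ := Finset.exists_min_image Finset.univ a Finset.univ_nonempty
    have h1 : a i0 ≥ (1 - β) * r0 i0 + β * (P0 *ᵥ a) i0 := by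
      conv_lhs => rw [← hfix]
      exact le_max_left _ _
    have h2 : a i0 ≤ (P0 *ᵥ a) i0 := le_mulVec hP0 (fun j => hi0 j (Finset.mem_univ j)) i0
    have h3 : 0 ≤ (1 - β) * r0 i0 := mul_nonneg (by linarith) (hr0 i0).1
    have h4 : (1 - β) * a i0 ≥ 0 := by nlinarith
    have h5 : 0 ≤ a i0 := by nlinarith
    intro i
    exact le_trans h5 (hi0 i (Finset.mem_univ i))
  · -- upper bound by 1 when lam ≥ 0
    intro hlam
    obtain ⟨i1, -, hi1⟩ := Finset.exists_max_image Finset.univ a Finset.univ_nonempty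
    have hup : ∀ j, a j ≤ a i1 := fun j => hi1 j (Finset.mem_univ j)
    have h1 : a i1 ≤ max ((1 - β) * r0 i1 + β * (P0 *ᵥ a) i1)
        ((1 - β) * (r1 i1 - lam) + β * (P1 *ᵥ a) i1) :=
      le_of_eq ((congrFun hfix i1).symm)
    have h2 : (P0 *ᵥ a) i1 ≤ a i1 := mulVec_le hP0 hup i1
    have h3 : (P1 *ᵥ a) i1 ≤ a i1 := mulVec_le hP1 hup i1
    have h4 : a i1 ≤ (1 - β) * 1 + β * a i1 := by
      rcases le_max_iff.mp h1 with h | h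
      · have := (hr0 i1).2
        nlinarith
      · have := (hr1 i1).2
        nlinarith
    have : (1 - β) * a i1 ≤ (1 - β) * 1 := by nlinarith
    have h5 : a i1 ≤ 1 := by nlinarith
    intro i
    exact le_trans (hup i) h5

/-- Fixed points of `bop` at nearby `lam` are close. -/
lemma bop_fixed_close (hn : 1 ≤ n) {P0 P1 : Matrix (Fin n) (Fin n) ℝ}
    (hP0 : IsStochastic P0) (hP1 : IsStochastic P1)
    (r0 r1 : Fin n → ℝ) {β : ℝ} (hβ : β ∈ Set.Ioo (0 : ℝ) 1) {lam mu : ℝ}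
    {a b : Fin n → ℝ} (ha : bop P0 P1 r0 r1 β lam a = a) (hb : bop P0 P1 r0 r1 β mu b = b) :
    ∀ i, |a i - b i| ≤ |lam - mu| := by
  haveI : Nonempty (Fin n) := ⟨⟨0, hn⟩⟩
  obtain ⟨i2, -, hi2⟩ := Finset.exists_max_image Finset.univ (fun i => |a i - b i|)
    Finset.univ_nonempty
  set m := |a i2 - b i2| with hm
  have hub : ∀ j, |a j - b j| ≤ m := fun j => hi2 j (Finset.mem_univ j)
  have key : |a i2 - b i2| ≤ (1 - β) * |lam - mu| + β * m := by
    have e2 : |a i2 - b i2| = |bop P0 P1 r0 r1 β lam a i2 - bop P0 P1 r0 r1 β mu b i2| := by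
      rw [ha, hb]
    rw [e2]
    simp only [bop]
    refine le_trans (abs_max_sub_max_le_max _ _ _ _) ?_
    have e0 : (1 - β) * r0 i2 + β * (P0 *ᵥ a) i2 - ((1 - β) * r0 i2 + β * (P0 *ᵥ b) i2)
        = β * ((P0 *ᵥ a) i2 - (P0 *ᵥ b) i2) := by ring
    have e1 : (1 - β) * (r1 i2 - lam) + β * (P1 *ᵥ a) i2
        - ((1 - β) * (r1 i2 - mu) + β * (P1 *ᵥ b) i2)
        = (1 - β) * (mu - lam) + β * ((P1 *ᵥ a) i2 - (P1 *ᵥ b) i2) := by ring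
    rw [e0, e1]
    refine max_le ?_ ?_
    · rw [abs_mul, abs_of_pos hβ.1]
      have h1 := abs_mulVec_sub_le hP0 hub i2
      have h2 : (0:ℝ) ≤ (1 - β) * |lam - mu| := by
        have : (0:ℝ) ≤ |lam - mu| := abs_nonneg _
        nlinarith [hβ.2]
      nlinarith [hβ.1]
    · refine le_trans (abs_add_le _ _) ?_
      rw [abs_mul, abs_mul, abs_of_pos hβ.1, abs_of_pos (by linarith [hβ.2] : (0:ℝ) < 1 - β)]
      have h1 := abs_mulVec_sub_le hP1 hub i2
      have h2 : |mu - lam| = |lam - mu| := abs_sub_comm mu lam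
      rw [h2]
      nlinarith [hβ.1]
  have hβ1 : (0:ℝ) < 1 - β := by linarith [hβ.2]
  rw [← hm] at key
  have hmle : m ≤ |lam - mu| := by nlinarith [abs_nonneg (lam - mu)]
  intro i
  exact le_trans (hub i) hmle


/-- `phi` expanded componentwise. -/
lemma phi_apply (P0 P1 : Matrix (Fin n) (Fin n) ℝ) (x u : Fin n → ℝ) (j : Fin n) :
    phi P0 P1 x u j = (∑ i, x i * P0 i j) + ∑ i, u i * (P1 i j - P0 i j) := by
  simp [phi, vecMul_apply, Matrix.sub_apply]

/-- membership in the fixed-pair set for multiplier `lam`, sign function `d`. -/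
def Fmem (P0 P1 : Matrix (Fin n) (Fin n) ℝ) (d : ℝ → Fin n → ℝ) (lam : ℝ)
    (x u : Fin n → ℝ) : Prop :=
  x ∈ stdSimplex ℝ (Fin n) ∧ (∀ i, 0 ≤ u i ∧ u i ≤ x i) ∧ phi P0 P1 x u = x ∧
    ∀ i, (0 < d lam i → u i = x i) ∧ (d lam i < 0 → u i = 0)

/-- nonemptiness of the fixed-pair set. -/
lemma Fmem_nonempty (hn : 1 ≤ n) {P0 P1 : Matrix (Fin n) (Fin n) ℝ}
    (hP0 : IsStochastic P0) (hP1 : IsStochastic P1) (d : ℝ → Fin n → ℝ) (lam : ℝ) :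
    ∃ x u, Fmem P0 P1 d lam x u ∧ (∀ i, ¬ (0 < d lam i) → u i = 0) := by
  set Q : Matrix (Fin n) (Fin n) ℝ :=
    Matrix.of (fun i j => if 0 < d lam i then P1 i j else P0 i j) with hQ
  have hQs : IsStochastic Q := by
    constructor
    · intro i j
      by_cases h : 0 < d lam i <;> simp [hQ, h, hP0.1 i j, hP1.1 i j]
    · intro i
      by_cases h : 0 < d lam i <;> simp [hQ, h, hP0.2 i, hP1.2 i]
  obtain ⟨p, hp, hpQ⟩ := exists_stationary hn hQs
  set u : Fin n → ℝ := fun i => if 0 < d lam i then p i else 0 with hu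
  refine ⟨p, u, ⟨hp, ?_, ?_, ?_⟩, ?_⟩
  · intro i
    by_cases h : 0 < d lam i <;> simp [hu, h, hp.1 i]
  · funext j
    rw [phi_apply, ← congrFun hpQ j, vecMul_apply]
    rw [← Finset.sum_add_distrib]
    refine Finset.sum_congr rfl fun i _ => ?_
    by_cases h : 0 < d lam i <;> simp [hu, hQ, h] <;> ring
  · intro i
    constructor
    · intro h; simp [hu, h]
    · intro h
      have : ¬ (0 < d lam i) := by linarith
      simp [hu, this]
  · intro i h
    simp [hu, h]

set_option maxHeartbeats 1000000 in
/-- limits of fixed pairs are fixed pairs. -/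
lemma Fmem_limit (hn : 1 ≤ n) {P0 P1 : Matrix (Fin n) (Fin n) ℝ}
    (d : ℝ → Fin n → ℝ) (hd : ∀ lam mu i, |d lam i - d mu i| ≤ 2 * |lam - mu|)
    {lam : ℝ} {lams : ℕ → ℝ} (hlams : Tendsto lams atTop (𝓝 lam))
    {xs us : ℕ → Fin n → ℝ} (hmem : ∀ j, Fmem P0 P1 d (lams j) (xs j) (us j)) :
    ∃ x u, Fmem P0 P1 d lam x u ∧ ∃ φ : ℕ → ℕ, StrictMono φ ∧
      Tendsto (fun j => ∑ i, us (φ j) i) atTop (𝓝 (∑ i, u i)) := by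
  -- compactness of the pair space
  have hK : IsCompact ((stdSimplex ℝ (Fin n)) ×ˢ (Set.Icc (0 : Fin n → ℝ) 1)) :=
    (isCompact_stdSimplex ℝ _).prod isCompact_Icc
  have hmemK : ∀ j, (xs j, us j) ∈ (stdSimplex ℝ (Fin n)) ×ˢ (Set.Icc (0 : Fin n → ℝ) 1) := by
    intro j
    refine ⟨(hmem j).1, ?_, ?_⟩
    · intro i; exact ((hmem j).2.1 i).1
    · intro i; exact le_trans ((hmem j).2.1 i).2 (mem_simplex_le_one (hmem j).1 i)
  obtain ⟨⟨x, u⟩, hxu, φ, hφ, hlim⟩ := hK.tendsto_subseq hmemK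
  have hxlim : Tendsto (fun j => xs (φ j)) atTop (𝓝 x) :=
    (continuous_fst.tendsto _).comp hlim
  have hulim : Tendsto (fun j => us (φ j)) atTop (𝓝 u) :=
    (continuous_snd.tendsto _).comp hlim
  have hxilim : ∀ i, Tendsto (fun j => xs (φ j) i) atTop (𝓝 (x i)) :=
    fun i => ((continuous_apply i).tendsto _).comp hxlim
  have huilim : ∀ i, Tendsto (fun j => us (φ j) i) atTop (𝓝 (u i)) :=
    fun i => ((continuous_apply i).tendsto _).comp hulim
  have hlamφ : Tendsto (fun j => lams (φ j)) atTop (𝓝 lam) := hlams.comp hφ.tendsto_atTop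
  have hdlim : ∀ i, Tendsto (fun j => d (lams (φ j)) i) atTop (𝓝 (d lam i)) := by
    intro i
    rw [Metric.tendsto_atTop]
    intro ε hε
    rw [Metric.tendsto_atTop] at hlamφ
    obtain ⟨N, hN⟩ := hlamφ (ε / 2) (by positivity)
    refine ⟨N, fun j hj => ?_⟩
    have := hd (lams (φ j)) lam i
    have h2 := hN j hj
    rw [Real.dist_eq] at h2 ⊢
    calc |d (lams (φ j)) i - d lam i| ≤ 2 * |lams (φ j) - lam| := hd _ _ i
      _ < 2 * (ε / 2) := by
          have := abs_nonneg (lams (φ j) - lam)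
          nlinarith
      _ = ε := by ring
  refine ⟨x, u, ⟨hxu.1, ?_, ?_, ?_⟩, φ, hφ, ?_⟩
  · intro i
    constructor
    · exact ge_of_tendsto (huilim i) (Eventually.of_forall fun j => ((hmem (φ j)).2.1 i).1)
    · exact le_of_tendsto_of_tendsto' (huilim i) (hxilim i)
        (fun j => ((hmem (φ j)).2.1 i).2)
  · -- phi x u = x
    have hphicont : Continuous (fun q : (Fin n → ℝ) × (Fin n → ℝ) => phi P0 P1 q.1 q.2) := by
      apply continuous_pi
      intro j
      have : (fun q : (Fin n → ℝ) × (Fin n → ℝ) => phi P0 P1 q.1 q.2 j)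
          = fun q => (∑ i, q.1 i * P0 i j) + ∑ i, q.2 i * (P1 i j - P0 i j) := by
        funext q; exact phi_apply P0 P1 q.1 q.2 j
      rw [this]
      refine Continuous.add ?_ ?_
      · exact continuous_finset_sum _ fun i _ =>
          ((continuous_apply i).comp continuous_fst).mul continuous_const
      · exact continuous_finset_sum _ fun i _ =>
          ((continuous_apply i).comp continuous_snd).mul continuous_const
    have l1 : Tendsto (fun j => phi P0 P1 (xs (φ j)) (us (φ j))) atTop (𝓝 (phi P0 P1 x u)) :=
      (hphicont.tendsto _).comp hlim
    have l2 : Tendsto (fun j => phi P0 P1 (xs (φ j)) (us (φ j))) atTop (𝓝 x) := by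
      have : (fun j => phi P0 P1 (xs (φ j)) (us (φ j))) = fun j => xs (φ j) := by
        funext j; exact (hmem (φ j)).2.2.1
      rw [this]; exact hxlim
    exact tendsto_nhds_unique l1 l2
  · -- sign conditions
    intro i
    constructor
    · intro hpos
      have hev : ∀ᶠ j in atTop, us (φ j) i = xs (φ j) i := by
        have : ∀ᶠ j in atTop, 0 < d (lams (φ j)) i :=
          (hdlim i).eventually (eventually_gt_nhds hpos)
        exact this.mono fun j hj => ((hmem (φ j)).2.2.2 i).1 hj
      exact tendsto_nhds_unique ((huilim i).congr' (hev.mono fun j hj => hj)) (hxilim i)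
    · intro hneg
      have hev : ∀ᶠ j in atTop, us (φ j) i = 0 := by
        have : ∀ᶠ j in atTop, d (lams (φ j)) i < 0 :=
          (hdlim i).eventually (eventually_lt_nhds hneg)
        exact this.mono fun j hj => ((hmem (φ j)).2.2.2 i).2 hj
      exact tendsto_nhds_unique ((huilim i).congr' (hev.mono fun j hj => hj)) tendsto_const_nhds
  · exact (continuous_finset_sum _ fun i _ => continuous_apply i).tendsto u |>.comp hulim

/-- convex combinations of fixed pairs. -/
lemma phi_comb {P0 P1 : Matrix (Fin n) (Fin n) ℝ} (c c' : ℝ) (x u x' u' : Fin n → ℝ) :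
    phi P0 P1 (fun i => c * x i + c' * x' i) (fun i => c * u i + c' * u' i)
      = fun j => c * phi P0 P1 x u j + c' * phi P0 P1 x' u' j := by
  funext j
  simp only [phi_apply]
  rw [mul_add, mul_add, Finset.mul_sum, Finset.mul_sum, Finset.mul_sum, Finset.mul_sum,
    ← Finset.sum_add_distrib, ← Finset.sum_add_distrib, ← Finset.sum_add_distrib,
    ← Finset.sum_add_distrib]
  exact Finset.sum_congr rfl fun i _ => by ring

/-- The key construction: an optimal multiplier together with a fixed pair that is
Bellman-optimal for the penalized MDP and satisfies complementary slackness. -/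
lemma exists_multiplier_pair (hn : 1 ≤ n)
    {P0 P1 : Matrix (Fin n) (Fin n) ℝ} (hP0 : IsStochastic P0) (hP1 : IsStochastic P1)
    {r0 r1 : Fin n → ℝ} (hr0 : ∀ i, r0 i ∈ Set.Icc (0 : ℝ) 1)
    (hr1 : ∀ i, r1 i ∈ Set.Icc (0 : ℝ) 1)
    {α : ℝ} (hα : α ∈ Set.Ioc (0 : ℝ) 1) {β : ℝ} (hβ : β ∈ Set.Ioo (0 : ℝ) 1) :
    ∃ (lam : ℝ) (a xb ub : Fin n → ℝ), 0 ≤ lam ∧ (∀ i, 0 ≤ a i) ∧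
      xb ∈ stdSimplex ℝ (Fin n) ∧ (∀ i, 0 ≤ ub i ∧ ub i ≤ xb i) ∧ (∑ i, ub i ≤ α) ∧
      phi P0 P1 xb ub = xb ∧ lam * (∑ i, ub i) = lam * α ∧
      (∀ i, ∀ w y : ℝ, 0 ≤ w → w ≤ y →
        ((1 - β) * r0 i + β * (P0 *ᵥ a) i) * (y - w)
          + ((1 - β) * (r1 i - lam) + β * (P1 *ᵥ a) i) * w ≤ a i * y) ∧
      (∀ i, a i * xb i =
        ((1 - β) * r0 i + β * (P0 *ᵥ a) i) * (xb i - ub i)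
          + ((1 - β) * (r1 i - lam) + β * (P1 *ᵥ a) i) * ub i) := by
  have hβ1 : (0:ℝ) < 1 - β := by linarith [hβ.2]
  choose aval hfix h0 h1 using fun lam : ℝ =>
    bop_exists_fixed hn P0 P1 hP0 hP1 r0 r1 hr0 hr1 hβ lam
  set d : ℝ → Fin n → ℝ := fun lam i =>
    ((1 - β) * (r1 i - lam) + β * (P1 *ᵥ aval lam) i)
      - ((1 - β) * r0 i + β * (P0 *ᵥ aval lam) i) with hd
  have hdlip : ∀ lam mu i, |d lam i - d mu i| ≤ 2 * |lam - mu| := by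
    intro lam mu i
    have hcl := bop_fixed_close hn hP0 hP1 r0 r1 hβ (hfix lam) (hfix mu)
    have h1' := abs_mulVec_sub_le hP1 hcl i
    have h0' := abs_mulVec_sub_le hP0 hcl i
    have e : d lam i - d mu i = ((1-β)*(mu - lam)
        + β*((P1 *ᵥ aval lam) i - (P1 *ᵥ aval mu) i))
        - β*((P0 *ᵥ aval lam) i - (P0 *ᵥ aval mu) i) := by simp only [hd]; ring
    rw [e]
    refine le_trans (abs_sub _ _) ?_
    refine le_trans (add_le_add_left (abs_add_le _ _) _) ?_
    rw [abs_mul, abs_mul, abs_mul, abs_of_pos hβ1, abs_of_pos hβ.1, abs_sub_comm mu lam]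
    nlinarith [abs_nonneg (lam - mu), hβ.1, hβ.2]
  -- the sign pattern is Bellman-optimal for the fixed point `aval lam`
  have hperi : ∀ lam x u, Fmem P0 P1 d lam x u → ∀ i, aval lam i * x i =
      ((1 - β) * r0 i + β * (P0 *ᵥ aval lam) i) * (x i - u i)
        + ((1 - β) * (r1 i - lam) + β * (P1 *ᵥ aval lam) i) * u i := by
    intro lam x u hF i
    have hmax : aval lam i = max ((1 - β) * r0 i + β * (P0 *ᵥ aval lam) i)
        ((1 - β) * (r1 i - lam) + β * (P1 *ᵥ aval lam) i) := (congrFun (hfix lam) i).symm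
    have hdi : d lam i = ((1 - β) * (r1 i - lam) + β * (P1 *ᵥ aval lam) i)
        - ((1 - β) * r0 i + β * (P0 *ᵥ aval lam) i) := by simp only [hd]
    rcases lt_trichotomy (d lam i) 0 with hlt | heq | hgt
    · have hu := (hF.2.2.2 i).2 hlt
      rw [hdi] at hlt
      rw [hu, hmax, max_eq_left (by linarith)]
      ring
    · rw [hdi] at heq
      have he : (1 - β) * (r1 i - lam) + β * (P1 *ᵥ aval lam) i
          = (1 - β) * r0 i + β * (P0 *ᵥ aval lam) i := by linarith
      rw [hmax, he, max_self]
      ring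
    · have hu := (hF.2.2.2 i).1 hgt
      rw [hdi] at hgt
      rw [hu, hmax, max_eq_right (by linarith)]
      ring
  -- the superharmonicity inequality
  have hsuper : ∀ lam i, ∀ w y : ℝ, 0 ≤ w → w ≤ y →
      ((1 - β) * r0 i + β * (P0 *ᵥ aval lam) i) * (y - w)
        + ((1 - β) * (r1 i - lam) + β * (P1 *ᵥ aval lam) i) * w ≤ aval lam i * y := by
    intro lam i w y hw hwy
    have hmax : aval lam i = max ((1 - β) * r0 i + β * (P0 *ᵥ aval lam) i)
        ((1 - β) * (r1 i - lam) + β * (P1 *ᵥ aval lam) i) := (congrFun (hfix lam) i).symm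
    have hA0 : (1 - β) * r0 i + β * (P0 *ᵥ aval lam) i ≤ aval lam i := by
      rw [hmax]; exact le_max_left _ _
    have hA1 : (1 - β) * (r1 i - lam) + β * (P1 *ᵥ aval lam) i ≤ aval lam i := by
      rw [hmax]; exact le_max_right _ _
    have e : aval lam i * y = aval lam i * (y - w) + aval lam i * w := by ring
    rw [e]
    exact add_le_add (mul_le_mul_of_nonneg_right hA0 (by linarith))
      (mul_le_mul_of_nonneg_right hA1 hw)
  set L : ℝ := 3 / (1 - β) with hL
  have hL0 : 0 ≤ L := by positivity
  have hdL : ∀ i, d L i < 0 := by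
    intro i
    have ha0 : ∀ j, 0 ≤ aval L j := h0 L
    have ha1 : ∀ j, aval L j ≤ 1 := h1 L hL0
    have hm1 : (P1 *ᵥ aval L) i ≤ 1 := mulVec_le hP1 ha1 i
    have hm0 : (0:ℝ) ≤ (P0 *ᵥ aval L) i := le_mulVec hP0 ha0 i
    have hr1i := (hr1 i).2
    have hr0i := (hr0 i).1
    have hLval : (1 - β) * L = 3 := by rw [hL]; field_simp
    simp only [hd]
    nlinarith [hβ.1, hβ.2]
  set A : Set ℝ := {lam | lam ∈ Set.Icc 0 L ∧ ∃ x u, Fmem P0 P1 d lam x u ∧ ∑ i, u i ≤ α}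
    with hA
  have hLA : L ∈ A := by
    obtain ⟨x, u, hF, hu0⟩ := Fmem_nonempty hn hP0 hP1 d L
    refine ⟨⟨hL0, le_refl L⟩, x, u, hF, ?_⟩
    have hz : ∀ i, u i = 0 := fun i => hu0 i (fun hc => absurd hc (by
      have := hdL i; intro h; linarith))
    rw [Finset.sum_congr rfl fun i _ => hz i]
    simp only [Finset.sum_const_zero]
    linarith [hα.1]
  have hAbdd : BddBelow A := ⟨0, fun lam hlam => hlam.1.1⟩
  have hAne : A.Nonempty := ⟨L, hLA⟩
  have hlam'0 : 0 ≤ sInf A := le_csInf hAne fun lam hlam => hlam.1.1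
  have hlam'L : sInf A ≤ L := csInf_le hAbdd hLA
  -- sInf A is attained
  obtain ⟨lams, -, hlamsto, hlamsA⟩ := exists_seq_tendsto_sInf hAne hAbdd
  choose xs us hFs hsum using fun j => (hlamsA j).2
  obtain ⟨xP, uP, hFP, φ, hφ, hsumlim⟩ := Fmem_limit hn d hdlip hlamsto hFs
  have hsumP : ∑ i, uP i ≤ α := le_of_tendsto hsumlim (Eventually.of_forall fun j => hsum (φ j))
  rcases eq_or_lt_of_le hlam'0 with hzero | hpos
  · -- multiplier zero
    refine ⟨sInf A, aval (sInf A), xP, uP, hlam'0, h0 _, hFP.1, hFP.2.1, hsumP, hFP.2.2.1,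
      ?_, hsuper (sInf A), hperi (sInf A) xP uP hFP⟩
    rw [← hzero]; ring
  · -- positive multiplier: approximate from below
    set lams2 : ℕ → ℝ := fun j => sInf A - sInf A / (j + 2) with hlams2
    have hl2nonneg : ∀ j, 0 ≤ lams2 j := by
      intro j
      have : sInf A / ((j:ℝ) + 2) ≤ sInf A := div_le_self hlam'0 (by
        have : (0:ℝ) ≤ (j:ℝ) := Nat.cast_nonneg j
        linarith)
      simp only [hlams2]; linarith
    have hl2lt : ∀ j, lams2 j < sInf A := by
      intro j
      have hpos2 : 0 < sInf A / ((j:ℝ) + 2) := by positivity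
      simp only [hlams2]; linarith
    have hl2to : Tendsto lams2 atTop (𝓝 (sInf A)) := by
      have hg : Tendsto (fun j : ℕ => sInf A * (1 / ((j:ℝ) + 1))) atTop (𝓝 0) := by
        have h3 := tendsto_one_div_add_atTop_nhds_zero_nat.const_mul (sInf A)
        simpa using h3
      have h2 : Tendsto (fun j : ℕ => sInf A / ((j:ℝ) + 2)) atTop (𝓝 0) := by
        refine squeeze_zero (fun j => by positivity) (fun j => ?_) hg
        rw [mul_one_div]
        gcongr
        · linarith [Nat.cast_nonneg (α := ℝ) j]
      have := tendsto_const_nhds (x := sInf A) (f := atTop (α := ℕ)) |>.sub h2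
      simpa using this
    have hl2notA : ∀ j, lams2 j ∉ A := fun j => notMem_of_lt_csInf (hl2lt j) hAbdd
    -- fixed pairs at lams2 j use more than the budget
    have hbig : ∀ j, ∃ x u, Fmem P0 P1 d (lams2 j) x u ∧ α < ∑ i, u i := by
      intro j
      obtain ⟨x, u, hF, -⟩ := Fmem_nonempty hn hP0 hP1 d (lams2 j)
      refine ⟨x, u, hF, ?_⟩
      by_contra hc
      push_neg at hc
      exact hl2notA j ⟨⟨hl2nonneg j, le_trans (hl2lt j).le hlam'L⟩, x, u, hF, hc⟩
    choose xs2 us2 hFs2 hsum2 using hbig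
    obtain ⟨xM, uM, hFM, φ2, hφ2, hsumlim2⟩ := Fmem_limit hn d hdlip hl2to hFs2
    have hsumM : α ≤ ∑ i, uM i :=
      ge_of_tendsto hsumlim2 (Eventually.of_forall fun j => (hsum2 (φ2 j)).le)
    -- combine the two pairs to get budget exactly α
    set sP := ∑ i, uP i with hsP
    set sM := ∑ i, uM i with hsM
    rcases eq_or_lt_of_le hsumM with heq | hlt2
    · -- uM already has budget exactly α
      refine ⟨sInf A, aval (sInf A), xM, uM, hlam'0, h0 _, hFM.1, hFM.2.1, heq.ge, hFM.2.2.1,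
        ?_, hsuper (sInf A), hperi (sInf A) xM uM hFM⟩
      rw [← hsM, ← heq]
    · -- θ-mix
      set θ : ℝ := (sM - α) / (sM - sP) with hθ
      have hds : 0 < sM - sP := by linarith
      have hθ0 : 0 ≤ θ := by
        apply div_nonneg _ hds.le
        linarith
      have hθ1 : θ ≤ 1 := by
        rw [hθ, div_le_one hds]
        linarith
      set xb : Fin n → ℝ := fun i => θ * xP i + (1 - θ) * xM i with hxb
      set ub : Fin n → ℝ := fun i => θ * uP i + (1 - θ) * uM i with hub
      have hFb : Fmem P0 P1 d (sInf A) xb ub := by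
        refine ⟨⟨?_, ?_⟩, ?_, ?_, ?_⟩
        · intro i
          have := hFP.1.1 i
          have := hFM.1.1 i
          simp only [hxb]
          nlinarith
        · simp only [hxb]
          rw [Finset.sum_add_distrib, ← Finset.mul_sum, ← Finset.mul_sum, hFP.1.2, hFM.1.2]
          ring
        · intro i
          have h1p := (hFP.2.1 i).1
          have h2p := (hFP.2.1 i).2
          have h1m := (hFM.2.1 i).1
          have h2m := (hFM.2.1 i).2
          constructor
          · simp only [hub]; nlinarith
          · simp only [hub, hxb]; nlinarith
        · rw [hxb, hub, phi_comb θ (1 - θ) xP uP xM uM]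
          funext j
          rw [hFP.2.2.1, hFM.2.2.1]
        · intro i
          constructor
          · intro hgt
            have e1 := (hFP.2.2.2 i).1 hgt
            have e2 := (hFM.2.2.2 i).1 hgt
            simp only [hub, hxb, e1, e2]
          · intro hlt
            have e1 := (hFP.2.2.2 i).2 hlt
            have e2 := (hFM.2.2.2 i).2 hlt
            simp only [hub, hxb, e1, e2]
            ring
      have hsumb : ∑ i, ub i = α := by
        simp only [hub]
        rw [Finset.sum_add_distrib, ← Finset.mul_sum, ← Finset.mul_sum, ← hsP, ← hsM]
        rw [hθ]
        field_simp
        ring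
      refine ⟨sInf A, aval (sInf A), xb, ub, hlam'0, h0 _, hFb.1, hFb.2.1, hsumb.le,
        hFb.2.2.1, by rw [hsumb], hsuper (sInf A), hperi (sInf A) xb ub hFb⟩

end Stmt3Aux

/-- existence of a fixed point `(x_β, u_β)` at which the discounted
value satisfies `V_β(x_β) = R(x_β,u_β) + β·V_β(x_β) = R(x_β,u_β)/(1−β)`. -/
theorem stmt3 {n : ℕ} (hn : 1 ≤ n)
    (P0 P1 : Matrix (Fin n) (Fin n) ℝ) (hP0 : IsStochastic P0) (hP1 : IsStochastic P1)
    (r0 r1 : Fin n → ℝ) (hr0 : ∀ i, r0 i ∈ Set.Icc (0 : ℝ) 1)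
    (hr1 : ∀ i, r1 i ∈ Set.Icc (0 : ℝ) 1)
    (α : ℝ) (hα : α ∈ Set.Ioc (0 : ℝ) 1)
    (k : ℕ) (hk : 1 ≤ k) (hρ : 0 < rho P0 P1 k)
    (β : ℝ) (hβ : β ∈ Set.Ioo (0 : ℝ) 1) :
    ∃ xb ∈ stdSimplex ℝ (Fin n), ∃ ub ∈ feas α xb,
      phi P0 P1 xb ub = xb ∧
      Vdisc α P0 P1 r0 r1 β xb = rew r0 r1 xb ub + β * Vdisc α P0 P1 r0 r1 β xb ∧
      Vdisc α P0 P1 r0 r1 β xb = rew r0 r1 xb ub / (1 - β) := by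
  classical
  have hβ1 : (0:ℝ) < 1 - β := by linarith [hβ.2]
  obtain ⟨lam, a, xb, ub, hlam0, ha0, hxb, hub, hubsum, hphi, hbudget, hsuper, hperi⟩ :=
    Stmt3Aux.exists_multiplier_pair hn hP0 hP1 hr0 hr1 hα hβ
  set W : ℝ := rew r0 r1 xb ub with hWdef
  -- the summed one-step identity
  have key_identity : ∀ y w : Fin n → ℝ,
      ∑ i, (((1-β) * r0 i + β * (P0 *ᵥ a) i) * (y i - w i)
        + ((1-β) * (r1 i - lam) + β * (P1 *ᵥ a) i) * w i)
      = (1-β) * (rew r0 r1 y w - lam * ∑ i, w i) + β * ∑ j, a j * phi P0 P1 y w j := by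
    intro y w
    have swap : ∀ (P : Matrix (Fin n) (Fin n) ℝ) (v : Fin n → ℝ),
        ∑ i, (P *ᵥ a) i * v i = ∑ j, a j * (∑ i, v i * P i j) := by
      intro P v
      simp only [Stmt3Aux.mulVec_apply, Finset.sum_mul, Finset.mul_sum]
      rw [Finset.sum_comm]
      exact Finset.sum_congr rfl fun j _ => Finset.sum_congr rfl fun i _ => by ring
    have e1 : ∑ i, (((1-β) * r0 i + β * (P0 *ᵥ a) i) * (y i - w i)
        + ((1-β) * (r1 i - lam) + β * (P1 *ᵥ a) i) * w i)
        = (1-β) * (∑ i, (r0 i * (y i - w i) + (r1 i - lam) * w i))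
          + β * (∑ i, (P0 *ᵥ a) i * (y i - w i) + ∑ i, (P1 *ᵥ a) i * w i) := by
      rw [Finset.mul_sum, mul_add, Finset.mul_sum, Finset.mul_sum,
        ← Finset.sum_add_distrib, ← Finset.sum_add_distrib]
      exact Finset.sum_congr rfl fun i _ => by ring
    rw [e1, swap P0 (fun i => y i - w i), swap P1 w]
    have e2 : ∑ i, (r0 i * (y i - w i) + (r1 i - lam) * w i)
        = rew r0 r1 y w - lam * ∑ i, w i := by
      simp only [rew, dotProduct, Pi.sub_apply, Finset.mul_sum]
      rw [← Finset.sum_add_distrib, ← Finset.sum_sub_distrib]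
      exact Finset.sum_congr rfl fun i _ => by ring
    have e3 : ∑ j, a j * (∑ i, (y i - w i) * P0 i j) + ∑ j, a j * (∑ i, w i * P1 i j)
        = ∑ j, a j * phi P0 P1 y w j := by
      rw [← Finset.sum_add_distrib]
      refine Finset.sum_congr rfl fun j _ => ?_
      rw [Stmt3Aux.phi_apply, ← mul_add]
      congr 1
      rw [← Finset.sum_add_distrib, ← Finset.sum_add_distrib]
      exact Finset.sum_congr rfl fun i _ => by ring
    rw [e2, e3]
  -- the one-step superharmonicity inequality, summed
  have step : ∀ y w : Fin n → ℝ, (∀ i, 0 ≤ w i ∧ w i ≤ y i) →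
      (1-β) * (rew r0 r1 y w - lam * ∑ i, w i) + β * ∑ j, a j * phi P0 P1 y w j
        ≤ ∑ i, a i * y i := by
    intro y w hw
    rw [← key_identity y w]
    exact Finset.sum_le_sum fun i _ => hsuper i (w i) (y i) (hw i).1 (hw i).2
  -- equality at the fixed pair
  set D : ℝ := ∑ i, a i * xb i with hDdef
  have eqb : D = (1-β) * (W - lam * ∑ i, ub i) + β * D := by
    calc D = ∑ i, (((1-β) * r0 i + β * (P0 *ᵥ a) i) * (xb i - ub i)
          + ((1-β) * (r1 i - lam) + β * (P1 *ᵥ a) i) * ub i) :=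
        Finset.sum_congr rfl fun i _ => hperi i
      _ = (1-β) * (rew r0 r1 xb ub - lam * ∑ i, ub i) + β * ∑ j, a j * phi P0 P1 xb ub j :=
        key_identity xb ub
      _ = (1-β) * (W - lam * ∑ i, ub i) + β * D := by rw [hphi]
  have hDW : D = W - lam * α := by
    have h1 : (1-β) * D = (1-β) * (W - lam * ∑ i, ub i) := by linarith
    have h2 : D = W - lam * (∑ i, ub i) := by
      have := mul_left_cancel₀ (ne_of_gt hβ1) h1
      linarith [this]
    rw [h2, hbudget]
  -- rewards along feasible data are nonnegative
  have rew_nonneg : ∀ y w : Fin n → ℝ, (∀ i, 0 ≤ w i ∧ w i ≤ y i) → 0 ≤ rew r0 r1 y w := by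
    intro y w hw
    have : rew r0 r1 y w = ∑ i, (r0 i * (y i - w i) + r1 i * w i) := by
      simp only [rew, dotProduct, Pi.sub_apply]
      rw [← Finset.sum_add_distrib]
      exact Finset.sum_congr rfl fun i _ => by ring
    rw [this]
    refine Finset.sum_nonneg fun i _ => ?_
    have h1 := (hw i).1
    have h2 := (hw i).2
    have h3 := (hr0 i).1
    have h4 := (hr1 i).1
    have h5 : 0 ≤ y i - w i := by linarith
    positivity
  -- upper bound for the value of any feasible trajectory
  have traj_bound : ∀ X U : ℕ → Fin n → ℝ, IsTraj α P0 P1 xb X U →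
      (∑' t : ℕ, β ^ t * rew r0 r1 (X t) (U t)) ≤ W / (1 - β) := by
    intro X U htraj
    have hfeas : ∀ t, ∀ i, 0 ≤ U t i ∧ U t i ≤ X t i := fun t => (htraj.2 t).1.1
    have hbud : ∀ t, ∑ i, U t i ≤ α := fun t => (htraj.2 t).1.2
    have hstepX : ∀ t, (1-β) * (rew r0 r1 (X t) (U t) - lam * ∑ i, U t i)
        + β * ∑ j, a j * X (t+1) j ≤ ∑ i, a i * X t i := by
      intro t
      have h := step (X t) (U t) (hfeas t)
      rw [← (htraj.2 t).2] at h
      exact h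
    have hXnonneg : ∀ t i, 0 ≤ X t i := fun t i => le_trans (hfeas t i).1 (hfeas t i).2
    have hAX : ∀ t, 0 ≤ ∑ j, a j * X t j :=
      fun t => Finset.sum_nonneg fun j _ => mul_nonneg (ha0 j) (hXnonneg t j)
    have hind : ∀ T : ℕ,
        (∑ t ∈ Finset.range T, β ^ t * ((1-β) * (rew r0 r1 (X t) (U t) - lam * ∑ i, U t i)))
          + β ^ T * ∑ j, a j * X T j ≤ ∑ i, a i * X 0 i := by
      intro T
      induction T with
      | zero => simp
      | succ T ih =>
        rw [Finset.sum_range_succ]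
        have h1 := hstepX T
        have h2 : β ^ T * ((1-β) * (rew r0 r1 (X T) (U T) - lam * ∑ i, U T i)
            + β * ∑ j, a j * X (T+1) j) ≤ β ^ T * ∑ i, a i * X T i :=
          mul_le_mul_of_nonneg_left h1 (pow_nonneg hβ.1.le T)
        have h3 : β ^ (T+1) * ∑ j, a j * X (T+1) j
            = β ^ T * (β * ∑ j, a j * X (T+1) j) := by ring
        nlinarith [ih]
    -- control of the budget sums
    have hgeom : ∀ T : ℕ, (1-β) * ∑ t ∈ Finset.range T, β ^ t ≤ 1 := by
      intro T
      have := geom_sum_eq (ne_of_lt hβ.2) T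
      rw [this]
      have hTβ : (0:ℝ) ≤ β ^ T := pow_nonneg hβ.1.le T
      have : (1-β) * ((β ^ T - 1) / (β - 1)) = 1 - β ^ T := by
        have hne : β - 1 ≠ 0 := sub_ne_zero.mpr (ne_of_lt hβ.2)
        field_simp [hne]
        ring
      rw [this]
      linarith
    have hpart : ∀ T : ℕ,
        (1-β) * ∑ t ∈ Finset.range T, β ^ t * rew r0 r1 (X t) (U t) ≤ D + lam * α := by
      intro T
      have hsplit : ∑ t ∈ Finset.range T, β ^ t * ((1-β) * (rew r0 r1 (X t) (U t)
          - lam * ∑ i, U t i))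
          = (1-β) * ∑ t ∈ Finset.range T, β ^ t * rew r0 r1 (X t) (U t)
            - (1-β) * lam * ∑ t ∈ Finset.range T, β ^ t * ∑ i, U t i := by
        rw [Finset.mul_sum, Finset.mul_sum, ← Finset.sum_sub_distrib]
        exact Finset.sum_congr rfl fun t _ => by ring
      have hσ : ∑ t ∈ Finset.range T, β ^ t * ∑ i, U t i
          ≤ α * ∑ t ∈ Finset.range T, β ^ t := by
        rw [Finset.mul_sum]
        refine Finset.sum_le_sum fun t _ => ?_
        have := hbud t
        have hp := pow_nonneg hβ.1.le t
        calc β ^ t * ∑ i, U t i ≤ β ^ t * α := mul_le_mul_of_nonneg_left this hp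
          _ = α * β ^ t := by ring
      have hG0 : (0:ℝ) ≤ ∑ t ∈ Finset.range T, β ^ t :=
        Finset.sum_nonneg fun t _ => pow_nonneg hβ.1.le t
      have h5 : (1-β) * lam * ∑ t ∈ Finset.range T, β ^ t * ∑ i, U t i ≤ lam * α := by
        have h3 : (1-β) * lam * ∑ t ∈ Finset.range T, β ^ t * ∑ i, U t i
            ≤ (1-β) * lam * (α * ∑ t ∈ Finset.range T, β ^ t) :=
          mul_le_mul_of_nonneg_left hσ (by positivity)
        have h4 : (1-β) * lam * (α * ∑ t ∈ Finset.range T, β ^ t)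
            = (lam * α) * ((1-β) * ∑ t ∈ Finset.range T, β ^ t) := by ring
        have h6 : (lam * α) * ((1-β) * ∑ t ∈ Finset.range T, β ^ t) ≤ (lam * α) * 1 :=
          mul_le_mul_of_nonneg_left (hgeom T) (mul_nonneg hlam0 hα.1.le)
        linarith
      have h7 := hind T
      have h8 : (0:ℝ) ≤ β ^ T * ∑ j, a j * X T j :=
        mul_nonneg (pow_nonneg hβ.1.le T) (hAX T)
      have h9 : ∑ i, a i * X 0 i = D := by rw [htraj.1]
      linarith [hsplit, h7, h5]
    have hfnonneg : ∀ t : ℕ, 0 ≤ β ^ t * rew r0 r1 (X t) (U t) :=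
      fun t => mul_nonneg (pow_nonneg hβ.1.le t) (rew_nonneg (X t) (U t) (hfeas t))
    have hDWα : D + lam * α = W := by rw [hDW]; ring
    have hpart2 : ∀ T : ℕ,
        ∑ t ∈ Finset.range T, β ^ t * rew r0 r1 (X t) (U t) ≤ W / (1-β) := by
      intro T
      rw [le_div_iff₀ hβ1]
      have := hpart T
      rw [hDWα] at this
      linarith [this]
    exact Summable.tsum_le_of_sum_range_le (summable_of_sum_range_le hfnonneg hpart2) hpart2
  -- the stationary trajectory achieves W / (1-β)
  have hstat : (∑' t : ℕ, β ^ t * rew r0 r1 xb ub) = W / (1 - β) := by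
    rw [tsum_mul_right, tsum_geometric_of_lt_one hβ.1.le hβ.2]
    rw [div_eq_inv_mul, mul_comm]
  have hstat_traj : IsTraj α P0 P1 xb (fun _ => xb) (fun _ => ub) := by
    refine ⟨rfl, fun t => ⟨⟨hub, hubsum⟩, hphi.symm⟩⟩
  -- compute the value function at xb
  set S : Set ℝ := {v | ∃ X U : ℕ → Fin n → ℝ, IsTraj α P0 P1 xb X U ∧
    v = ∑' t : ℕ, β ^ t * rew r0 r1 (X t) (U t)} with hSdef
  have hSmem : W / (1 - β) ∈ S := by
    refine ⟨fun _ => xb, fun _ => ub, hstat_traj, ?_⟩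
    rw [hstat]
  have hSbound : ∀ v ∈ S, v ≤ W / (1 - β) := by
    rintro v ⟨X, U, htraj, rfl⟩
    exact traj_bound X U htraj
  have hV : Vdisc α P0 P1 r0 r1 β xb = W / (1 - β) := by
    have h1 : Vdisc α P0 P1 r0 r1 β xb = sSup S := rfl
    rw [h1]
    refine le_antisymm (csSup_le ⟨_, hSmem⟩ hSbound) (le_csSup ⟨W / (1-β), hSbound⟩ hSmem)
  refine ⟨xb, hxb, ub, ⟨hub, hubsum⟩, hphi, ?_, ?_⟩
  · rw [hV, ← hWdef]
    field_simp
    ring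
  · rw [hV]
end

section
/- (Lemma DISS, dissipativity.) Let g* be the optimal value of the linear program max{ R(x,u) : x ∈ Δ, u ∈ U(x), x = Φ(x,u) } and let (x*, u*) be an optimal solution. Then there exists a vector λ ∈ ℝ^n such that, defining the rotated cost l̃(x,u) = g* − R(x,u) + λ·x − λ·Φ(x,u): (i) l̃(x,u) ≥ 0 for every x ∈ Δ and every u ∈ U(x), and (ii) l̃(x*, u*) = 0. -/
open Matrix Finset Filter

/-- The optimal value `g*` of the LP `max { R(x,u) : x ∈ Δ, u ∈ U(x), x = Φ(x,u) }`. -/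
noncomputable def gStar {n : ℕ} (α : ℝ) (P0 P1 : Matrix (Fin n) (Fin n) ℝ)
    (r0 r1 : Fin n → ℝ) : ℝ :=
  sSup {r | ∃ x ∈ stdSimplex ℝ (Fin n), ∃ u ∈ feas α x,
    phi P0 P1 x u = x ∧ r = rew r0 r1 x u}


section Farkas

open Finset

variable {H : Type*} [NormedAddCommGroup H] [InnerProductSpace ℝ H]

variable {H : Type*} [NormedAddCommGroup H] [InnerProductSpace ℝ H]

theorem cone_cara {ι : Type*} [Fintype ι] [DecidableEq ι] (v : ι → H) :
    ∀ N (c : ι → ℝ), (univ.filter fun i => c i ≠ 0).card ≤ N → (∀ i, 0 ≤ c i) →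
    ∃ (T : Finset ι) (d : ι → ℝ), (∀ i, 0 ≤ d i) ∧ (∀ i ∉ T, d i = 0) ∧
      ∑ i, d i • v i = ∑ i, c i • v i ∧ LinearIndependent ℝ (fun i : T => v i) := by
  intro N
  induction N with
  | zero =>
      intro c hcard hc
      refine ⟨∅, c, hc, ?_, rfl, linearIndependent_empty_type⟩
      intro i _
      by_contra h
      have hm : i ∈ univ.filter fun i => c i ≠ 0 := by simp [h]
      have := card_pos.2 ⟨i, hm⟩
      omega
  | succ N ih =>
      intro c hcard hc
      set T₀ : Finset ι := univ.filter fun i => c i ≠ 0 with hT₀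
      by_cases hli : LinearIndependent ℝ (fun i : T₀ => v i)
      · exact ⟨T₀, c, hc, fun i hi => by simpa [hT₀] using hi, rfl, hli⟩
      have key : ∀ e : ι → ℝ, (∑ i, e i • v i = 0) → (∀ i, i ∉ T₀ → e i = 0) →
          (∃ i, 0 < e i) →
          ∃ (T : Finset ι) (d : ι → ℝ), (∀ i, 0 ≤ d i) ∧ (∀ i ∉ T, d i = 0) ∧
            ∑ i, d i • v i = ∑ i, c i • v i ∧ LinearIndependent ℝ (fun i : T => v i) := by
        intro e hesum hesupp ⟨iw, hiw⟩
        have hJne : (univ.filter fun i => 0 < e i).Nonempty := ⟨iw, by simp [hiw]⟩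
        obtain ⟨i₀, hi₀J, hmin⟩ := Finset.exists_min_image _ (fun i => c i / e i) hJne
        rw [mem_filter] at hi₀J
        have hei₀ : 0 < e i₀ := hi₀J.2
        set τ : ℝ := c i₀ / e i₀ with hτ
        have hτ0 : 0 ≤ τ := div_nonneg (hc i₀) hei₀.le
        set c' : ι → ℝ := fun i => c i - τ * e i with hc'
        have hc'0 : ∀ i, 0 ≤ c' i := by
          intro i
          by_cases hei : 0 < e i
          · have h1 : τ ≤ c i / e i := hmin i (by simp [hei])
            have := (le_div_iff₀ hei).1 h1
            simp only [hc']; linarith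
          · push_neg at hei
            have : τ * e i ≤ 0 := mul_nonpos_of_nonneg_of_nonpos hτ0 hei
            have := hc i
            simp only [hc']; linarith
        have hc'i₀ : c' i₀ = 0 := by
          simp only [hc', hτ]
          field_simp
          ring
        have hsupp' : ∀ i, i ∉ T₀.erase i₀ → c' i = 0 := by
          intro i hi
          rw [Finset.mem_erase] at hi
          push_neg at hi
          by_cases hii : i = i₀
          · subst hii; exact hc'i₀
          · have hiT : i ∉ T₀ := hi hii
            have h1 : c i = 0 := by
              by_contra hcon
              exact hiT (by simp [hT₀, hcon])
            have h2 : e i = 0 := hesupp i hiT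
            simp [hc', h1, h2]
        have hcard' : (univ.filter fun i => c' i ≠ 0).card ≤ N := by
          have hsub : (univ.filter fun i => c' i ≠ 0) ⊆ T₀.erase i₀ := by
            intro i hi
            rw [mem_filter] at hi
            by_contra h
            exact hi.2 (hsupp' i h)
          have hi₀T₀ : i₀ ∈ T₀ := by
            by_contra h
            exact absurd (hesupp i₀ h) (ne_of_gt hei₀)
          have := card_le_card hsub
          have := Finset.card_erase_of_mem hi₀T₀
          omega
        have hsum' : ∑ i, c' i • v i = ∑ i, c i • v i := by
          simp only [hc', sub_smul, Finset.sum_sub_distrib, mul_smul, ← Finset.smul_sum,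
            hesum, smul_zero, sub_zero]
        obtain ⟨T, d, h1, h2, h3, h4⟩ := ih c' hcard' hc'0
        exact ⟨T, d, h1, h2, h3.trans hsum', h4⟩
      obtain ⟨g, hg0, i₁, hgi₁⟩ := Fintype.not_linearIndependent_iff.1 hli
      classical
      set gg : ι → ℝ := fun i => if h : i ∈ T₀ then g ⟨i, h⟩ else 0 with hgg
      have hggsupp : ∀ i, i ∉ T₀ → gg i = 0 := fun i hi => by simp [hgg, hi]
      have hggsum : ∑ i, gg i • v i = 0 := by
        have h1 : ∑ i, gg i • v i = ∑ i ∈ T₀, gg i • v i :=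
          (Finset.sum_subset (subset_univ _) fun i _ hi => by simp [hggsupp i hi]).symm
        have h2 : ∑ i ∈ T₀, gg i • v i = ∑ i ∈ T₀.attach, g i • v i := by
          rw [← Finset.sum_attach T₀ fun i => gg i • v i]
          exact Finset.sum_congr rfl fun i _ => by simp [hgg, i.2]
        rw [h1, h2, ← hg0]
        rfl
      have hggi₁ : gg (i₁ : ι) ≠ 0 := by simpa [hgg, i₁.2] using hgi₁
      rcases lt_or_gt_of_ne hggi₁ with h | h
      · refine key (-gg) (by simpa using hggsum) (fun i hi => by simp [hggsupp i hi]) ⟨i₁, ?_⟩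
        simpa using h
      · exact key gg hggsum hggsupp ⟨i₁, h⟩

theorem cone_closed {ι : Type*} [Fintype ι] [DecidableEq ι]
    [FiniteDimensional ℝ H] (v : ι → H) :
    IsClosed {x : H | ∃ c : ι → ℝ, (∀ i, 0 ≤ c i) ∧ x = ∑ i, c i • v i} := by
  have hrw : {x : H | ∃ c : ι → ℝ, (∀ i, 0 ≤ c i) ∧ x = ∑ i, c i • v i} =
      ⋃ T : Finset ι, ⋃ (_ : LinearIndependent ℝ (fun i : T => v i)),
        (fun c : ι → ℝ => ∑ i, c i • v i) ''
          {c : ι → ℝ | (∀ i, 0 ≤ c i) ∧ ∀ i ∉ T, c i = 0} := by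
    ext x
    simp only [Set.mem_setOf_eq, Set.mem_iUnion, Set.mem_image]
    constructor
    · rintro ⟨c, hc, rfl⟩
      obtain ⟨T, d, h1, h2, h3, h4⟩ :=
        cone_cara v (univ.filter fun i => c i ≠ 0).card c le_rfl hc
      exact ⟨T, h4, d, ⟨h1, h2⟩, h3⟩
    · rintro ⟨T, _, c, ⟨hc, _⟩, rfl⟩
      exact ⟨c, hc, rfl⟩
  rw [hrw]
  refine isClosed_iUnion_of_finite fun T => isClosed_iUnion_of_finite fun hT => ?_
  -- the restriction map as a linear map on T → ℝ
  have : (fun c : ι → ℝ => ∑ i, c i • v i) ''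
          {c : ι → ℝ | (∀ i, 0 ≤ c i) ∧ ∀ i ∉ T, c i = 0} =
      (fun c : T → ℝ => ∑ i : T, c i • v i) '' {c : T → ℝ | ∀ i, 0 ≤ c i} := by
    ext x
    simp only [Set.mem_image, Set.mem_setOf_eq]
    constructor
    · rintro ⟨c, ⟨hc, hsupp⟩, rfl⟩
      refine ⟨fun i => c i, fun i => hc i, ?_⟩
      rw [show (∑ i : T, (fun i : T => c i) i • v i) = ∑ i ∈ T, c i • v i from
        Finset.sum_attach T fun i => c i • v i]
      exact Finset.sum_subset (subset_univ _) fun i _ hi => by simp [hsupp i hi]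
    · rintro ⟨c, hc, rfl⟩
      classical
      refine ⟨fun i => if h : i ∈ T then c ⟨i, h⟩ else 0, ⟨fun i => ?_, fun i hi => by simp [hi]⟩, ?_⟩
      · by_cases h : i ∈ T <;> simp [h, hc]
      · rw [show (∑ i, (if h : i ∈ T then c ⟨i, h⟩ else 0) • v i)
            = ∑ i ∈ T, (if h : i ∈ T then c ⟨i, h⟩ else (0:ℝ)) • v i from
            (Finset.sum_subset (subset_univ _) fun i _ hi => by simp [hi]).symm,
          ← Finset.sum_attach T fun i => (if h : (i:ι) ∈ T then c ⟨i, h⟩ else (0:ℝ)) • v i]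
        exact Finset.sum_congr rfl fun i _ => by simp [i.2]
  rw [this]
  set L : (T → ℝ) →ₗ[ℝ] H :=
    { toFun := fun c => ∑ i : T, c i • v i
      map_add' := fun a b => by simp [add_smul, Finset.sum_add_distrib]
      map_smul' := fun r a => by simp [smul_smul, Finset.smul_sum] } with hL
  have hinj : LinearMap.ker L = ⊥ := by
    rw [LinearMap.ker_eq_bot']
    intro c hc
    exact funext (Fintype.linearIndependent_iff.1 hT c hc)
  have hemb := LinearMap.isClosedEmbedding_of_injective hinj
  have hcl : IsClosed {c : T → ℝ | ∀ i, 0 ≤ c i} := by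
    have : {c : T → ℝ | ∀ i, 0 ≤ c i} = ⋂ i, {c : T → ℝ | 0 ≤ c i} := by
      ext c; simp [Set.mem_iInter]
    rw [this]
    exact isClosed_iInter fun i => isClosed_le continuous_const (continuous_apply i)
  exact hemb.isClosedMap _ hcl

open scoped RealInnerProductSpace in
theorem farkas {ι : Type*} [Fintype ι] [DecidableEq ι]
    [FiniteDimensional ℝ H] (v : ι → H) (b : H)
    (hb : ∀ c : ι → ℝ, (∀ i, 0 ≤ c i) → b ≠ ∑ i, c i • v i) :
    ∃ y : H, (∀ i, 0 ≤ ⟪v i, y⟫) ∧ ⟪y, b⟫ < 0 := by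
  set K : ConvexCone ℝ H :=
    { carrier := {x : H | ∃ c : ι → ℝ, (∀ i, 0 ≤ c i) ∧ x = ∑ i, c i • v i}
      smul_mem' := by
        rintro t ht x ⟨c, hc, rfl⟩
        exact ⟨t • c, fun i => mul_nonneg ht.le (hc i), by
          simp [Finset.smul_sum, smul_smul]⟩
      add_mem' := by
        rintro x ⟨c, hc, rfl⟩ y ⟨d, hd, rfl⟩
        exact ⟨c + d, fun i => add_nonneg (hc i) (hd i), by
          simp [add_smul, Finset.sum_add_distrib]⟩ } with hK
  have hne : (K : Set H).Nonempty := ⟨0, ⟨0, fun i => le_rfl, by simp⟩⟩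
  have hcl : IsClosed (K : Set H) := cone_closed v
  have hbK : b ∉ K := by
    rintro ⟨c, hc, hcb⟩
    exact hb c hc hcb
  obtain ⟨y, hy1, hy2⟩ : ∃ y : H, (∀ x ∈ K, 0 ≤ ⟪x, y⟫) ∧ ⟪y, b⟫ < 0 := by
    obtain ⟨y, hy1, hy2⟩ := ProperCone.hyperplane_separation'
      (⟨K.toPointedCone ⟨0, fun i => le_rfl, by simp⟩, hcl⟩ : ProperCone ℝ H) (fun h => hbK h)
    exact ⟨y, fun x hx => hy1 x hx, by rw [real_inner_comm]; exact hy2⟩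
  refine ⟨y, fun i => ?_, hy2⟩
  refine hy1 (v i) ⟨fun j => if j = i then 1 else 0, fun j => by positivity, ?_⟩
  simp [ite_smul]

end Farkas

section Aux

variable {n : ℕ}

abbrev HS (n : ℕ) := EuclideanSpace ℝ (Option (Fin n))

def vec (q : Fin n → ℝ) (t : ℝ) : HS n := WithLp.toLp 2 (fun o : Option (Fin n) => o.elim t q)

lemma vec_add (q q' : Fin n → ℝ) (t t' : ℝ) :
    vec (q + q') (t + t') = vec q t + vec q' t' := by
  ext o; cases o <;> rfl

lemma vec_smul (c : ℝ) (q : Fin n → ℝ) (t : ℝ) :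
    vec (c • q) (c * t) = c • vec q t := by
  ext o; cases o <;> rfl

lemma phi_add (P0 P1 : Matrix (Fin n) (Fin n) ℝ) (x x' u u' : Fin n → ℝ) :
    phi P0 P1 (x + x') (u + u') = phi P0 P1 x u + phi P0 P1 x' u' := by
  simp only [phi, Matrix.add_vecMul]; abel

lemma phi_smul (P0 P1 : Matrix (Fin n) (Fin n) ℝ) (c : ℝ) (x u : Fin n → ℝ) :
    phi P0 P1 (c • x) (c • u) = c • phi P0 P1 x u := by
  simp only [phi, Matrix.smul_vecMul, smul_add]

lemma rew_add (r0 r1 x x' u u' : Fin n → ℝ) :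
    rew r0 r1 (x + x') (u + u') = rew r0 r1 x u + rew r0 r1 x' u' := by
  simp only [rew, dotProduct_add]; ring

lemma rew_smul (r0 r1 : Fin n → ℝ) (c : ℝ) (x u : Fin n → ℝ) :
    rew r0 r1 (c • x) (c • u) = c * rew r0 r1 x u := by
  simp only [rew, dotProduct_smul, smul_eq_mul]; ring

noncomputable def Psi (P0 P1 : Matrix (Fin n) (Fin n) ℝ) (r0 r1 : Fin n → ℝ) (g : ℝ) :
    ((Fin n → ℝ) × (Fin n → ℝ) × ℝ) →ₗ[ℝ] HS n where
  toFun := fun p => vec (p.1 - phi P0 P1 p.1 p.2.1) (g * p.2.2 - rew r0 r1 p.1 p.2.1)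
  map_add' := by
    intro p q
    show _root_.vec _ _ = _
    rw [← vec_add]
    have h1 : (p + q).1 = p.1 + q.1 := rfl
    have h2 : (p + q).2.1 = p.2.1 + q.2.1 := rfl
    have h3 : (p + q).2.2 = p.2.2 + q.2.2 := rfl
    rw [h1, h2, h3, phi_add, rew_add]
    have e1 : p.1 + q.1 - (phi P0 P1 p.1 p.2.1 + phi P0 P1 q.1 q.2.1)
        = (p.1 - phi P0 P1 p.1 p.2.1) + (q.1 - phi P0 P1 q.1 q.2.1) := by abel
    have e2 : g * (p.2.2 + q.2.2) - (rew r0 r1 p.1 p.2.1 + rew r0 r1 q.1 q.2.1)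
        = (g * p.2.2 - rew r0 r1 p.1 p.2.1) + (g * q.2.2 - rew r0 r1 q.1 q.2.1) := by ring
    rw [e1, e2]
  map_smul' := by
    intro c p
    show _root_.vec _ _ = _
    rw [RingHom.id_apply, ← vec_smul]
    have h1 : (c • p).1 = c • p.1 := rfl
    have h2 : (c • p).2.1 = c • p.2.1 := rfl
    have h3 : (c • p).2.2 = c * p.2.2 := rfl
    rw [h1, h2, h3, phi_smul, rew_smul]
    have e1 : c • p.1 - c • phi P0 P1 p.1 p.2.1 = c • (p.1 - phi P0 P1 p.1 p.2.1) := by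
      rw [smul_sub]
    have e2 : g * (c * p.2.2) - c * rew r0 r1 p.1 p.2.1
        = c * (g * p.2.2 - rew r0 r1 p.1 p.2.1) := by ring
    rw [e1, e2]

def vertex (α : ℝ) : (Fin n ⊕ Fin n × Fin n) → (Fin n → ℝ) × (Fin n → ℝ) × ℝ
  | .inl j => (Pi.single j 1, 0, 1)
  | .inr (i, j) => (α • (Pi.single i 1 : Fin n → ℝ) + (1 - α) • (Pi.single j 1 : Fin n → ℝ),
      α • (Pi.single i 1 : Fin n → ℝ), 1)

lemma vertex_sum (α : ℝ) (c : Fin n ⊕ Fin n × Fin n → ℝ) :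
    ∑ k, c k • vertex α k =
      ((fun j => c (.inl j) + α * (∑ j', c (.inr (j, j'))) + (1 - α) * (∑ i, c (.inr (i, j)))),
       (fun j => α * ∑ j', c (.inr (j, j'))),
       ∑ k, c k) := by
  refine Prod.ext ?_ (Prod.ext ?_ ?_)
  · rw [Prod.fst_sum]
    funext j
    rw [Finset.sum_apply]
    rw [Fintype.sum_sum_type]
    simp only [vertex, Prod.smul_fst, Pi.smul_apply, Pi.add_apply, Pi.single_apply,
      smul_eq_mul, mul_ite, mul_one, mul_zero, Fintype.sum_prod_type, mul_add,
      ite_mul, Finset.sum_add_distrib, Finset.sum_ite_eq, mem_univ, if_true,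
      Finset.mul_sum]
    ring_nf
    simp only [show ∀ x : Fin n, (∑ x_1 : Fin n, if j = x then c (Sum.inr (x, x_1)) * α else 0)
        = if j = x then ∑ x_1 : Fin n, c (Sum.inr (x, x_1)) * α else 0 from
      fun x => by split <;> simp, Finset.sum_ite_eq, mem_univ, if_true]
    simp [mul_comm]
    ring
  · rw [Prod.snd_sum, Prod.fst_sum]
    funext j
    rw [Finset.sum_apply]
    rw [Fintype.sum_sum_type]
    simp only [vertex, Prod.smul_snd, Prod.smul_fst, Pi.smul_apply, Pi.single_apply,
      smul_eq_mul, mul_ite, mul_one, mul_zero, Fintype.sum_prod_type, ite_mul,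
      Finset.sum_ite_eq, mem_univ, if_true, Finset.mul_sum]
    ring_nf
    simp only [Pi.zero_apply, mul_zero, Finset.sum_const_zero, zero_add,
      show ∀ x : Fin n, (∑ x_1 : Fin n, if j = x then c (Sum.inr (x, x_1)) * α else 0)
        = if j = x then ∑ x_1 : Fin n, c (Sum.inr (x, x_1)) * α else 0 from
      fun x => by split <;> simp, Finset.sum_ite_eq, mem_univ, if_true]
    simp [mul_comm]
  · rw [Prod.snd_sum, Prod.snd_sum]
    rw [Fintype.sum_sum_type, Fintype.sum_sum_type]
    simp only [vertex, Prod.smul_snd, smul_eq_mul, mul_one]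

end Aux

section Main

open scoped RealInnerProductSpace

lemma Psi_apply {n : ℕ} (P0 P1 : Matrix (Fin n) (Fin n) ℝ) (r0 r1 : Fin n → ℝ) (g : ℝ)
    (p : (Fin n → ℝ) × (Fin n → ℝ) × ℝ) :
    Psi P0 P1 r0 r1 g p = vec (p.1 - phi P0 P1 p.1 p.2.1) (g * p.2.2 - rew r0 r1 p.1 p.2.1) :=
  rfl

lemma inner_vec {n : ℕ} (q : Fin n → ℝ) (t : ℝ) (y : HS n) :
    ⟪vec q t, y⟫ = t * y none + ∑ i, q i * y (some i) := by
  rw [PiLp.inner_apply]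
  rw [Fintype.sum_option]
  simp [_root_.vec, RCLike.inner_apply, conj_trivial, mul_comm]

theorem stmt6' {n : ℕ} (hn : 1 ≤ n)
    (P0 P1 : Matrix (Fin n) (Fin n) ℝ)
    (r0 r1 : Fin n → ℝ) (hr0 : ∀ i, r0 i ∈ Set.Icc (0 : ℝ) 1)
    (hr1 : ∀ i, r1 i ∈ Set.Icc (0 : ℝ) 1)
    (α : ℝ) (hα : α ∈ Set.Ioc (0 : ℝ) 1)
    (xs us : Fin n → ℝ)
    (hxs : xs ∈ stdSimplex ℝ (Fin n)) (hus : us ∈ feas α xs)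
    (hfix : phi P0 P1 xs us = xs)
    (hval : rew r0 r1 xs us = gStar α P0 P1 r0 r1) :
    ∃ lam : Fin n → ℝ,
      (∀ x ∈ stdSimplex ℝ (Fin n), ∀ u ∈ feas α x,
        0 ≤ gStar α P0 P1 r0 r1 - rew r0 r1 x u + lam ⬝ᵥ x - lam ⬝ᵥ phi P0 P1 x u) ∧
      gStar α P0 P1 r0 r1 - rew r0 r1 xs us + lam ⬝ᵥ xs - lam ⬝ᵥ phi P0 P1 xs us = 0 := by
  classical
  obtain ⟨hα0, hα1⟩ := hα
  set g := gStar α P0 P1 r0 r1 with hgdef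
  -- every feasible fixed point has reward at most g
  have hub : ∀ x ∈ stdSimplex ℝ (Fin n), ∀ u ∈ feas α x, phi P0 P1 x u = x →
      rew r0 r1 x u ≤ g := by
    intro x hx u hu hfx
    refine le_csSup ⟨2, ?_⟩ ⟨x, hx, u, hu, hfx, rfl⟩
    rintro r ⟨x', hx', u', hu', hfx', rfl⟩
    have h1 : r0 ⬝ᵥ x' ≤ 1 := by
      rw [show r0 ⬝ᵥ x' = ∑ i, r0 i * x' i from rfl]
      calc ∑ i, r0 i * x' i ≤ ∑ i, x' i :=
            Finset.sum_le_sum fun i _ => mul_le_of_le_one_left (hx'.1 i) (hr0 i).2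
        _ = 1 := hx'.2
    have h2 : (r1 - r0) ⬝ᵥ u' ≤ 1 := by
      rw [show (r1 - r0) ⬝ᵥ u' = ∑ i, (r1 i - r0 i) * u' i from rfl]
      calc ∑ i, (r1 i - r0 i) * u' i ≤ ∑ i, u' i := by
            refine Finset.sum_le_sum fun i _ => mul_le_of_le_one_left (hu'.1 i).1 ?_
            have := (hr1 i).2; have := (hr0 i).1; linarith
        _ ≤ α := hu'.2
        _ ≤ 1 := hα1
    rw [rew]; linarith
  set Ψ := Psi P0 P1 r0 r1 g with hΨdef
  set G : (Fin n ⊕ Fin n × Fin n) → HS n := fun k => Ψ (vertex α k) with hGdef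
  have hnotin : ∀ c : (Fin n ⊕ Fin n × Fin n) → ℝ, (∀ k, 0 ≤ c k) →
      vec (0 : Fin n → ℝ) (-1) ≠ ∑ k, c k • G k := by
    intro c hc heq
    have hsum : ∑ k, c k • G k = Ψ (∑ k, c k • vertex α k) := by
      rw [map_sum]
      exact Finset.sum_congr rfl fun k _ => (Ψ.map_smul (c k) (vertex α k)).symm
    rw [vertex_sum] at hsum
    set X : Fin n → ℝ := fun j => c (.inl j) + α * (∑ j', c (.inr (j, j')))
      + (1 - α) * (∑ i, c (.inr (i, j))) with hXdef
    set U : Fin n → ℝ := fun j => α * ∑ j', c (.inr (j, j')) with hUdef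
    set s : ℝ := ∑ k, c k with hsdef
    rw [← heq] at hsum
    have hnone : (-1 : ℝ) = g * s - rew r0 r1 X U := congrArg (fun f : HS n => f none) hsum
    have hsome : ∀ i, (0:ℝ) = X i - phi P0 P1 X U i := fun i =>
      congrArg (fun f : HS n => f (some i)) hsum
    have hfixX : phi P0 P1 X U = X := by
      funext i; have := hsome i; linarith
    have hX0 : ∀ j, 0 ≤ X j := by
      intro j
      have h1 : 0 ≤ ∑ j', c (.inr (j, j')) := Finset.sum_nonneg fun _ _ => hc _
      have h2 : 0 ≤ ∑ i, c (.inr (i, j)) := Finset.sum_nonneg fun _ _ => hc _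
      have := hc (.inl j)
      have : 0 ≤ α * (∑ j', c (.inr (j, j'))) := mul_nonneg hα0.le h1
      have : 0 ≤ (1 - α) * (∑ i, c (.inr (i, j))) := mul_nonneg (by linarith) h2
      simp only [hXdef]
      positivity
    have hU0 : ∀ j, 0 ≤ U j := fun j =>
      mul_nonneg hα0.le (Finset.sum_nonneg fun _ _ => hc _)
    have hUX : ∀ j, U j ≤ X j := by
      intro j
      have h2 : 0 ≤ ∑ i, c (.inr (i, j)) := Finset.sum_nonneg fun _ _ => hc _
      have := hc (.inl j)
      have : 0 ≤ (1 - α) * (∑ i, c (.inr (i, j))) := mul_nonneg (by linarith) h2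
      simp only [hXdef, hUdef]
      linarith
    have hA : (∑ i : Fin n, ∑ j' : Fin n, c (Sum.inr (i, j')))
        = ∑ p : Fin n × Fin n, c (Sum.inr p) := (Fintype.sum_prod_type fun p => c (Sum.inr p)).symm
    have hB : (∑ j : Fin n, ∑ i : Fin n, c (Sum.inr (i, j)))
        = ∑ p : Fin n × Fin n, c (Sum.inr p) := by
      rw [Finset.sum_comm]; exact (Fintype.sum_prod_type fun p => c (Sum.inr p)).symm
    have hIsum : ∑ j, X j = s := by
      simp only [hXdef, hsdef]
      rw [Finset.sum_add_distrib, Finset.sum_add_distrib,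
        ← Finset.mul_sum, ← Finset.mul_sum, hA, hB, Fintype.sum_sum_type]
      ring
    have hUsum : ∑ j, U j = α * ∑ p : Fin n × Fin n, c (.inr p) := by
      simp only [hUdef]
      rw [← Finset.mul_sum, hA]
    have hinrs : ∑ p : Fin n × Fin n, c (.inr p) ≤ s := by
      rw [hsdef, Fintype.sum_sum_type]
      have : 0 ≤ ∑ j : Fin n, c (.inl j) := Finset.sum_nonneg fun _ _ => hc _
      linarith
    have hs0 : 0 ≤ s := Finset.sum_nonneg fun _ _ => hc _
    rcases eq_or_lt_of_le hs0 with hs | hs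
    · -- s = 0 : contradiction with hnone
      have hXzero : ∀ j, X j = 0 := by
        intro j
        have h := hIsum
        rw [← hs] at h
        have := Finset.sum_eq_zero_iff_of_nonneg (fun j _ => hX0 j) |>.1 h
        exact this j (Finset.mem_univ j)
      have hUzero : ∀ j, U j = 0 := fun j => le_antisymm (hXzero j ▸ hUX j) (hU0 j)
      have hrew : rew r0 r1 X U = 0 := by
        rw [rew, show X = 0 from funext hXzero, show U = 0 from funext hUzero]
        simp
      rw [hrew, ← hs] at hnone
      norm_num at hnone
    · -- s > 0 : build a feasible fixed point with reward > g
      set xh : Fin n → ℝ := s⁻¹ • X with hxh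
      set uh : Fin n → ℝ := s⁻¹ • U with huh
      have hxhs : xh ∈ stdSimplex ℝ (Fin n) := by
        constructor
        · intro j; exact mul_nonneg (inv_nonneg.2 hs.le) (hX0 j)
        · rw [show ∑ j, xh j = s⁻¹ * ∑ j, X j from by
            rw [Finset.mul_sum]; rfl]
          rw [hIsum, inv_mul_cancel₀ hs.ne']
      have huhs : uh ∈ feas α xh := by
        constructor
        · intro j
          exact ⟨mul_nonneg (inv_nonneg.2 hs.le) (hU0 j),
            mul_le_mul_of_nonneg_left (hUX j) (inv_nonneg.2 hs.le)⟩
        · rw [show ∑ j, uh j = s⁻¹ * ∑ j, U j from by rw [Finset.mul_sum]; rfl]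
          rw [hUsum]
          calc s⁻¹ * (α * ∑ p : Fin n × Fin n, c (.inr p)) ≤ s⁻¹ * (α * s) := by
                refine mul_le_mul_of_nonneg_left ?_ (inv_nonneg.2 hs.le)
                exact mul_le_mul_of_nonneg_left hinrs hα0.le
            _ = α := by field_simp
      have hfixh : phi P0 P1 xh uh = xh := by
        rw [hxh, huh, phi_smul, hfixX]
      have hrewh : rew r0 r1 xh uh = g + s⁻¹ := by
        rw [hxh, huh, rew_smul]
        have : rew r0 r1 X U = g * s + 1 := by linarith
        rw [this]
        field_simp
      have := hub xh hxhs uh huhs hfixh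
      rw [hrewh] at this
      have : s⁻¹ ≤ 0 := by linarith
      have := inv_pos.2 hs
      linarith
  obtain ⟨y, hy1, hy2⟩ := farkas G (vec (0 : Fin n → ℝ) (-1)) hnotin
  have hμ : 0 < y none := by
    rw [real_inner_comm, inner_vec] at hy2
    simp at hy2
    linarith
  set lam : Fin n → ℝ := fun i => (y none)⁻¹ * y (some i) with hlam
  refine ⟨lam, ?_, ?_⟩
  · intro x hx u hu
    -- decomposition coefficients
    set s : ℝ := ∑ i, u i with hsdef
    set w : Fin n → ℝ := fun j => x j - u j with hwdef
    have hs0 : 0 ≤ s := Finset.sum_nonneg fun i _ => (hu.1 i).1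
    have hsα : s ≤ α := hu.2
    have hs1 : s ≤ 1 := le_trans hsα hα1
    have hw0 : ∀ j, 0 ≤ w j := fun j => by
      have := (hu.1 j).2; simp only [hwdef]; linarith
    have hwsum : ∑ j, w j = 1 - s := by
      simp only [hwdef]
      rw [Finset.sum_sub_distrib, hx.2, ← hsdef]
    have hcase : s < 1 ∨ (s = 1 ∧ α = 1 ∧ ∀ j, w j = 0) := by
      rcases lt_or_eq_of_le hs1 with h | h
      · exact Or.inl h
      · refine Or.inr ⟨h, le_antisymm hα1 (h ▸ hsα), ?_⟩
        intro j
        have h0 : ∑ j, w j = 0 := by rw [hwsum, h]; ring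
        exact Finset.sum_eq_zero_iff_of_nonneg (fun j _ => hw0 j) |>.1 h0 j (Finset.mem_univ j)
    set t : Fin n → ℝ := if s < 1 then fun j => (1 - s)⁻¹ * w j
      else Pi.single ⟨0, hn⟩ 1 with htdef
    set cinl : Fin n → ℝ := fun j => if s < 1 then ((α - s) / (α * (1 - s))) * w j else 0
      with hcinldef
    set c : (Fin n ⊕ Fin n × Fin n) → ℝ := fun k => match k with
      | .inl j => cinl j
      | .inr (i, j) => (u i / α) * t j with hcdef
    have ht0 : ∀ j, 0 ≤ t j := by
      intro j
      rcases hcase with h | ⟨h, _, _⟩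
      · simp only [htdef, if_pos h]
        have : (0:ℝ) < 1 - s := by linarith
        exact mul_nonneg (inv_nonneg.2 this.le) (hw0 j)
      · have hns : ¬ s < 1 := by rw [h]; exact lt_irrefl 1
        simp only [htdef, if_neg hns, Pi.single_apply]
        split <;> norm_num
    have htsum : ∑ j, t j = 1 := by
      rcases hcase with h | ⟨h, _, _⟩
      · simp only [htdef, if_pos h]
        rw [← Finset.mul_sum, hwsum, inv_mul_cancel₀ (by linarith : (1:ℝ) - s ≠ 0)]
      · have hns : ¬ s < 1 := by rw [h]; exact lt_irrefl 1
        simp only [htdef, if_neg hns]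
        simp
    have hcinl0 : ∀ j, 0 ≤ cinl j := by
      intro j
      rcases hcase with h | ⟨h, _, _⟩
      · simp only [hcinldef, if_pos h]
        have h1 : (0:ℝ) < 1 - s := by linarith
        exact mul_nonneg (div_nonneg (by linarith) (by positivity)) (hw0 j)
      · have hns : ¬ s < 1 := by rw [h]; exact lt_irrefl 1
        simp only [hcinldef, if_neg hns, le_refl]
    have hF4 : ∀ j, cinl j + (1 - α) * (s / α) * t j = w j := by
      intro j
      rcases hcase with h | ⟨h, hα', hw'⟩
      · simp only [hcinldef, htdef, if_pos h]
        have h1 : (0:ℝ) < 1 - s := by linarith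
        field_simp
        ring
      · have hns : ¬ s < 1 := by rw [h]; exact lt_irrefl 1
        simp only [hcinldef, htdef, if_neg hns, hα']
        rw [hw' j]; ring
    have hF5 : ∑ j, cinl j = (α - s) / α := by
      rcases hcase with h | ⟨h, hα', _⟩
      · simp only [hcinldef, if_pos h]
        rw [← Finset.mul_sum, hwsum]
        have h1 : (0:ℝ) < 1 - s := by linarith
        field_simp
      · have hns : ¬ s < 1 := by rw [h]; exact lt_irrefl 1
        simp only [hcinldef, if_neg hns, hα', h]
        simp
    have hc0 : ∀ k, 0 ≤ c k := by
      intro k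
      rcases k with j | ⟨i, j⟩
      · exact hcinl0 j
      · exact mul_nonneg (div_nonneg (hu.1 i).1 hα0.le) (ht0 j)
    have hdecomp : ∑ k, c k • vertex α k = (x, u, (1:ℝ)) := by
      rw [vertex_sum]
      refine Prod.ext ?_ (Prod.ext ?_ ?_)
      · funext j
        show c (.inl j) + α * (∑ j', c (.inr (j, j'))) + (1 - α) * (∑ i, c (.inr (i, j))) = x j
        have e1 : ∑ j', c (.inr (j, j')) = u j / α := by
          simp only [hcdef]
          rw [← Finset.mul_sum, htsum, mul_one]
        have e2 : ∑ i, c (.inr (i, j)) = (s / α) * t j := by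
          simp only [hcdef]
          rw [← Finset.sum_mul, hsdef, ← Finset.sum_div]
        rw [e1, e2]
        have e3 : α * (u j / α) = u j := by field_simp
        have := hF4 j
        simp only [hwdef] at this
        rw [e3]
        linarith [hF4 j, this]
      · funext j
        show α * (∑ j', c (.inr (j, j'))) = u j
        have e1 : ∑ j', c (.inr (j, j')) = u j / α := by
          simp only [hcdef]
          rw [← Finset.mul_sum, htsum, mul_one]
        rw [e1]; field_simp
      · show ∑ k, c k = 1
        rw [Fintype.sum_sum_type]
        have e1 : ∑ j : Fin n, c (.inl j) = (α - s) / α := by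
          simp only [hcdef]; exact hF5
        have e2 : ∑ p : Fin n × Fin n, c (.inr p) = s / α := by
          rw [Fintype.sum_prod_type]
          simp only [hcdef]
          rw [show ∑ i : Fin n, ∑ j : Fin n, (u i / α) * t j
              = (∑ i : Fin n, u i / α) * (∑ j, t j) from by
            rw [Finset.sum_mul_sum]]
          rw [htsum, mul_one, ← Finset.sum_div, ← hsdef]
        rw [e1, e2]
        field_simp
        ring
    have hkey : (0:ℝ) ≤ ⟪Ψ (x, u, 1), y⟫ := by
      have hrw : Ψ (x, u, 1) = ∑ k, c k • G k := by
        rw [← hdecomp, map_sum]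
        exact Finset.sum_congr rfl fun k _ => (Ψ.map_smul (c k) (vertex α k))
      rw [hrw, sum_inner]
      refine Finset.sum_nonneg fun k _ => ?_
      rw [real_inner_smul_left]
      exact mul_nonneg (hc0 k) (hy1 k)
    have hexp : ⟪Ψ (x, u, 1), y⟫
        = (g * 1 - rew r0 r1 x u) * y none + ∑ i, (x i - phi P0 P1 x u i) * y (some i) := by
      rw [show Ψ (x, u, 1) = vec (x - phi P0 P1 x u) (g * 1 - rew r0 r1 x u) from rfl,
        inner_vec]
      rfl
    rw [hexp] at hkey
    have hS : lam ⬝ᵥ x - lam ⬝ᵥ phi P0 P1 x u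
        = (y none)⁻¹ * ∑ i, (x i - phi P0 P1 x u i) * y (some i) := by
      simp only [dotProduct, hlam]
      rw [← Finset.sum_sub_distrib, Finset.mul_sum]
      exact Finset.sum_congr rfl fun i _ => by ring
    have hfin : (0:ℝ) ≤ (y none)⁻¹ * ((g * 1 - rew r0 r1 x u) * y none
        + ∑ i, (x i - phi P0 P1 x u i) * y (some i)) :=
      mul_nonneg (inv_nonneg.2 hμ.le) hkey
    rw [show (y none)⁻¹ * ((g * 1 - rew r0 r1 x u) * y none
        + ∑ i, (x i - phi P0 P1 x u i) * y (some i))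
        = (g * 1 - rew r0 r1 x u) * (y none * (y none)⁻¹)
          + (y none)⁻¹ * ∑ i, (x i - phi P0 P1 x u i) * y (some i) from by ring,
      mul_inv_cancel₀ hμ.ne', mul_one] at hfin
    linarith [hS, hfin]
  · rw [hfix, ← hval]
    ring

end Main

/-- Lemma DISS: existence of a storage vector `λ` making the
rotated cost nonnegative everywhere and zero at the optimal solution. -/
theorem stmt6 {n : ℕ} (hn : 1 ≤ n)
    (P0 P1 : Matrix (Fin n) (Fin n) ℝ) (hP0 : IsStochastic P0) (hP1 : IsStochastic P1)
    (r0 r1 : Fin n → ℝ) (hr0 : ∀ i, r0 i ∈ Set.Icc (0 : ℝ) 1)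
    (hr1 : ∀ i, r1 i ∈ Set.Icc (0 : ℝ) 1)
    (α : ℝ) (hα : α ∈ Set.Ioc (0 : ℝ) 1)
    (xs us : Fin n → ℝ)
    (hxs : xs ∈ stdSimplex ℝ (Fin n)) (hus : us ∈ feas α xs)
    (hfix : phi P0 P1 xs us = xs)
    (hval : rew r0 r1 xs us = gStar α P0 P1 r0 r1) :
    ∃ lam : Fin n → ℝ,
      (∀ x ∈ stdSimplex ℝ (Fin n), ∀ u ∈ feas α x,
        0 ≤ gStar α P0 P1 r0 r1 - rew r0 r1 x u + lam ⬝ᵥ x - lam ⬝ᵥ phi P0 P1 x u) ∧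
      gStar α P0 P1 r0 r1 - rew r0 r1 xs us + lam ⬝ᵥ xs - lam ⬝ᵥ phi P0 P1 xs us = 0 :=
  stmt6' hn P0 P1 r0 r1 hr0 hr1 α hα xs us hxs hus hfix hval
end

section
/- (Randomized rounding lemma.) Let N ≥ 1 be an integer, let x ∈ Δ be such that N·x_i is an integer for every i, and let u ∈ U(x). Then there exists a finitely supported probability measure on ℝ^n such that every vector U in its support satisfies U ∈ U(x) and N·U_i is an integer for every i, and whose mean Ū satisfies ‖Ū − u‖₁ ≤ (αN − ⌊αN⌋)/N. -/
open Finset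

lemma keySum (m : ℕ) (t : ℕ → ℝ) (hmono : ∀ {j1 j2 : ℕ}, j1 < j2 → j2 ≤ m → t j1 < t j2)
    (h0 : t 0 = 0) (hm : t m = 1) (a : ℝ) (ha : 0 ≤ a)
    (hk : ∃ k, k ≤ m ∧ t k = 1 - Int.fract a) :
    ∑ j ∈ range m, (t (j + 1) - t j) * (⌊a + t j⌋ : ℝ) = a := by
  obtain ⟨k, hkm, hk⟩ := hk
  have ht0 : ∀ j, j ≤ m → 0 ≤ t j := by
    intro j hj
    rcases Nat.eq_zero_or_pos j with rfl | hpos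
    · exact le_of_eq h0.symm
    · exact le_of_lt (h0 ▸ hmono hpos hj)
  have ht1 : ∀ j, j < m → t j < 1 := fun j hj => hm ▸ hmono hj le_rfl
  have hfr : Int.fract a = 1 - t k := by linarith
  have hfloor : ∀ j ∈ range m, ((⌊a + t j⌋ : ℝ)) = (⌊a⌋ : ℝ) + (if k ≤ j then (1:ℝ) else 0) := by
    intro j hj
    rw [mem_range] at hj
    have hfa : (⌊a⌋ : ℝ) + Int.fract a = a := Int.floor_add_fract a
    split_ifs with h
    · have htk : t k ≤ t j := by
        rcases eq_or_lt_of_le h with rfl | h'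
        · exact le_rfl
        · exact le_of_lt (hmono h' (le_of_lt hj))
      have : ⌊a + t j⌋ = ⌊a⌋ + 1 := by
        have hf1 : Int.fract a < 1 := Int.fract_lt_one a
        rw [Int.floor_eq_iff]
        constructor
        · push_cast; linarith
        · push_cast
          have := ht1 j hj
          linarith
      rw [this]; push_cast; ring
    · push_neg at h
      have htj : t j < t k := hmono h hkm
      have : ⌊a + t j⌋ = ⌊a⌋ := by
        have hfl : (⌊a⌋ : ℝ) ≤ a := Int.floor_le a
        rw [Int.floor_eq_iff]
        constructor
        · push_cast
          have := ht0 j (le_of_lt hj)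
          linarith
        · push_cast; linarith
      rw [this]; push_cast; ring
  calc ∑ j ∈ range m, (t (j + 1) - t j) * (⌊a + t j⌋ : ℝ)
      = ∑ j ∈ range m, ((t (j + 1) - t j) * (⌊a⌋ : ℝ)
          + (if k ≤ j then (t (j + 1) - t j) else 0)) := by
        apply Finset.sum_congr rfl
        intro j hj
        rw [hfloor j hj]
        split_ifs <;> ring
    _ = (t m - t 0) * (⌊a⌋ : ℝ) + (t m - t k) := by
        rw [Finset.sum_add_distrib, ← Finset.sum_mul, Finset.sum_range_sub]
        congr 1
        have hfilt : (range m).filter (fun j => k ≤ j) = Ico k m := by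
          ext j; simp [Finset.mem_filter, Finset.mem_range, Finset.mem_Ico, and_comm]
        rw [← Finset.sum_filter, hfilt, Finset.sum_Ico_eq_sub _ hkm,
          Finset.sum_range_sub, Finset.sum_range_sub]
        ring
    _ = a := by rw [h0, hm]; have := Int.floor_add_fract a; linarith

lemma mainLemma {n N K : ℕ} (hN : 1 ≤ N) (x u' : Fin n → ℝ)
    (hx : ∀ i, ∃ m : ℕ, (N : ℝ) * x i = m)
    (hu0 : ∀ i, 0 ≤ u' i) (hux : ∀ i, u' i ≤ x i)
    (hsum : ∑ i, u' i ≤ (K : ℝ) / N) :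
    ∃ (s : Finset (Fin n → ℝ)) (p : (Fin n → ℝ) → ℝ),
      (∀ v ∈ s, 0 < p v) ∧
      (∑ v ∈ s, p v = 1) ∧
      (∀ v ∈ s, ((∀ i, 0 ≤ v i ∧ v i ≤ x i) ∧ ∑ i, v i ≤ (K : ℝ) / N) ∧
        ∀ i, ∃ m : ℕ, (N : ℝ) * v i = m) ∧
      (∑ v ∈ s, p v • v) = u' := by
  have hN0 : (0 : ℝ) < N := by exact_mod_cast hN
  set g : ℕ → ℝ := fun i => if h : i < n then (N : ℝ) * u' ⟨i, h⟩ else 0 with hg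
  have hg0 : ∀ i, 0 ≤ g i := by
    intro i; rw [hg]; dsimp only; split_ifs with h
    · exact mul_nonneg (le_of_lt hN0) (hu0 _)
    · exact le_rfl
  set S : ℕ → ℝ := fun k => ∑ i ∈ range k, g i with hS
  have hS0 : ∀ k, 0 ≤ S k := fun k => Finset.sum_nonneg fun i _ => hg0 i
  have hSsucc : ∀ i : Fin n, S ((i : ℕ) + 1) = S i + (N : ℝ) * u' i := by
    intro i
    rw [hS]; dsimp only
    rw [Finset.sum_range_succ, hg]
    simp [i.isLt]
  have hSn : S n = (N : ℝ) * ∑ i, u' i := by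
    rw [hS]; dsimp only
    rw [← Fin.sum_univ_eq_sum_range g n, Finset.mul_sum]
    apply Finset.sum_congr rfl
    intro i _
    rw [hg]; simp [i.isLt]
  have hSnK : S n ≤ (K : ℝ) := by
    rw [hSn]
    calc (N : ℝ) * ∑ i, u' i ≤ (N : ℝ) * ((K : ℝ) / N) := by
          exact mul_le_mul_of_nonneg_left hsum (le_of_lt hN0)
      _ = K := by field_simp
  -- breakpoint set
  set B : Finset ℝ := insert 0 (((Finset.range (n + 1)).image
      fun k => 1 - Int.fract (S k)).filter (· < 1)) with hB
  have hBmem : ∀ b ∈ B, 0 ≤ b ∧ b < 1 := by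
    intro b hb
    rw [hB, Finset.mem_insert] at hb
    rcases hb with rfl | hb
    · exact ⟨le_rfl, one_pos⟩
    · rw [Finset.mem_filter] at hb
      obtain ⟨hb1, hb2⟩ := hb
      refine ⟨?_, hb2⟩
      rw [Finset.mem_image] at hb1
      obtain ⟨k, _, rfl⟩ := hb1
      have := Int.fract_lt_one (S k)
      linarith
  set L : List ℝ := B.sort (· ≤ ·) with hL
  set m : ℕ := L.length with hm
  set t : ℕ → ℝ := fun j => L.getD j 1 with ht
  have hsorted : L.SortedLT := Finset.sortedLT_sort B
  have hmemL : ∀ b, b ∈ L ↔ b ∈ B := fun b => Finset.mem_sort _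
  have htget : ∀ j (hj : j < m), t j = L.get ⟨j, hj⟩ := by
    intro j hj; rw [ht]; exact L.getD_eq_get 1 ⟨j, hj⟩
  have htB : ∀ j, j < m → t j ∈ B := by
    intro j hj; rw [htget j hj, ← hmemL]; exact L.get_mem _
  have htm : ∀ j, m ≤ j → t j = 1 := by
    intro j hj; rw [ht]; exact L.getD_eq_default 1 hj
  have hmono : ∀ {j1 j2 : ℕ}, j1 < j2 → j2 ≤ m → t j1 < t j2 := by
    intro j1 j2 h12 h2m
    have hj1 : j1 < m := lt_of_lt_of_le h12 h2m
    rcases eq_or_lt_of_le h2m with heq | h2m'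
    · rw [heq, htm m le_rfl]
      exact (hBmem _ (htB j1 hj1)).2
    · rw [htget j1 hj1, htget j2 h2m']
      exact hsorted.strictMono_get (by exact_mod_cast h12)
  have hmpos : 0 < m := by
    rw [hm]
    apply List.length_pos_iff.mpr
    intro hnil
    have : (0 : ℝ) ∈ L := (hmemL 0).mpr (Finset.mem_insert_self 0 _)
    rw [hnil] at this; exact List.not_mem_nil this
  have ht00 : t 0 = 0 := by
    have h0L : (0 : ℝ) ∈ L := (hmemL 0).mpr (Finset.mem_insert_self 0 _)
    obtain ⟨⟨k, hk⟩, hgk⟩ := List.mem_iff_get.mp h0L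
    have h1 : t 0 ≤ 0 := by
      rw [htget 0 hmpos, ← hgk]
      exact hsorted.sortedLE.monotone_get (by exact_mod_cast Nat.zero_le k)
    have h2 : 0 ≤ t 0 := (hBmem _ (htB 0 hmpos)).1
    linarith
  have htm1 : t m = 1 := htm m le_rfl
  have hbrk : ∀ k : ℕ, k ≤ n → ∃ j, j ≤ m ∧ t j = 1 - Int.fract (S k) := by
    intro k hk
    by_cases hf : Int.fract (S k) = 0
    · exact ⟨m, le_rfl, by rw [htm1, hf]; ring⟩
    · have hf' : 0 < Int.fract (S k) := lt_of_le_of_ne (Int.fract_nonneg _) (Ne.symm hf)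
      have hbB : 1 - Int.fract (S k) ∈ B := by
        rw [hB]
        apply Finset.mem_insert_of_mem
        rw [Finset.mem_filter]
        constructor
        · exact Finset.mem_image_of_mem _ (Finset.mem_range.mpr (Nat.lt_succ_of_le hk))
        · show (1 : ℝ) - Int.fract (S k) < 1
          linarith
      obtain ⟨⟨j, hj⟩, hgj⟩ := List.mem_iff_get.mp ((hmemL _).mpr hbB)
      exact ⟨j, le_of_lt hj, by rw [htget j hj, hgj]⟩
  -- the rounded vectors
  set W : ℕ → Fin n → ℝ := fun j i =>
    ((⌊S ((i : ℕ) + 1) + t j⌋ - ⌊S i + t j⌋ : ℤ) : ℝ) / N with hW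
  have hWprops : ∀ j, j < m →
      ((∀ i, 0 ≤ W j i ∧ W j i ≤ x i) ∧ ∑ i, W j i ≤ (K : ℝ) / N) ∧
        ∀ i, ∃ m' : ℕ, (N : ℝ) * W j i = m' := by
    intro j hj
    have htj0 : 0 ≤ t j := (hBmem _ (htB j hj)).1
    have htj1 : t j < 1 := (hBmem _ (htB j hj)).2
    have hfl : ∀ i : Fin n, ⌊S i + t j⌋ ≤ ⌊S ((i : ℕ) + 1) + t j⌋ := by
      intro i
      apply Int.floor_le_floor
      have : 0 ≤ (N : ℝ) * u' i := mul_nonneg (le_of_lt hN0) (hu0 i)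
      rw [hSsucc i]; linarith
    have hint : ∀ i, (N : ℝ) * W j i =
        ((⌊S ((i : ℕ) + 1) + t j⌋ - ⌊S i + t j⌋ : ℤ) : ℝ) := by
      intro i; rw [hW]; dsimp only; field_simp
    refine ⟨⟨fun i => ⟨?_, ?_⟩, ?_⟩, fun i => ?_⟩
    · apply div_nonneg _ (le_of_lt hN0)
      push_cast
      have := hfl i
      exact sub_nonneg.mpr (by exact_mod_cast this)
    · obtain ⟨mi, hmi⟩ := hx i
      have hub : ⌊S ((i : ℕ) + 1) + t j⌋ ≤ ⌊S i + t j⌋ + mi := by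
        have h1 : S ((i : ℕ) + 1) + t j ≤ S i + t j + (mi : ℝ) := by
          rw [hSsucc i]
          have := hux i
          have h2 : (N : ℝ) * u' i ≤ (N : ℝ) * x i :=
            mul_le_mul_of_nonneg_left this (le_of_lt hN0)
          rw [hmi] at h2; linarith
        calc ⌊S ((i : ℕ) + 1) + t j⌋ ≤ ⌊S i + t j + (mi : ℝ)⌋ := Int.floor_le_floor h1
          _ = ⌊S i + t j⌋ + mi := by
              rw [← Int.floor_add_intCast]
              norm_cast
      rw [hW]; dsimp only
      rw [div_le_iff₀ hN0]
      push_cast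
      have hc : ((⌊S ((i : ℕ) + 1) + t j⌋ : ℝ)) ≤ (⌊S i + t j⌋ : ℝ) + mi := by exact_mod_cast hub
      linarith [hmi, hc]
    · have htel : ∑ i : Fin n, (((⌊S ((i : ℕ) + 1) + t j⌋ : ℝ)) - ((⌊S i + t j⌋ : ℝ)))
          = ((⌊S n + t j⌋ : ℝ)) - ((⌊S 0 + t j⌋ : ℝ)) := by
        rw [Fin.sum_univ_eq_sum_range (fun k => ((⌊S (k + 1) + t j⌋ : ℝ)) - ((⌊S k + t j⌋ : ℝ))) n]
        exact Finset.sum_range_sub (fun k => ((⌊S k + t j⌋ : ℝ))) n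
      have hS00 : S 0 = 0 := by rw [hS]; simp
      have hfloor0 : ⌊S 0 + t j⌋ = 0 := by
        rw [hS00, zero_add]
        exact Int.floor_eq_zero_iff.mpr ⟨htj0, htj1⟩
      have hfloorn : (⌊S n + t j⌋ : ℝ) ≤ K := by
        have : ⌊S n + t j⌋ < (K : ℤ) + 1 := Int.floor_lt.mpr (by push_cast; linarith)
        have h2 : ⌊S n + t j⌋ ≤ (K : ℤ) := by omega
        exact_mod_cast h2
      have : ∑ i, W j i = (∑ i : Fin n, (((⌊S ((i : ℕ) + 1) + t j⌋ : ℝ)) - ((⌊S i + t j⌋ : ℝ)))) / N := by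
        rw [Finset.sum_div]
        apply Finset.sum_congr rfl
        intro i _
        rw [hW]; dsimp only; push_cast; ring
      rw [this, htel, hfloor0]
      have hnum : ((⌊S n + t j⌋ : ℝ)) - (((0 : ℤ) : ℝ)) ≤ (K : ℝ) := by push_cast; linarith
      exact (div_le_div_iff_of_pos_right hN0).mpr hnum
    · refine ⟨(⌊S ((i : ℕ) + 1) + t j⌋ - ⌊S i + t j⌋).toNat, ?_⟩
      rw [hint i]
      congr 1
      rw [Int.toNat_of_nonneg (sub_nonneg.mpr (hfl i))]
  set len : ℕ → ℝ := fun j => t (j + 1) - t j with hlen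
  have hlenpos : ∀ j ∈ range m, 0 < len j := fun j hj =>
    sub_pos.mpr (hmono (Nat.lt_succ_self j) (Finset.mem_range.mp hj))
  have hmean : ∑ j ∈ range m, len j • W j = u' := by
    funext i
    rw [Finset.sum_apply]
    simp only [Pi.smul_apply]
    have e1 := keySum m t hmono ht00 htm1 (S ((i : ℕ) + 1)) (hS0 _)
      (hbrk ((i : ℕ) + 1) i.isLt)
    have e2 := keySum m t hmono ht00 htm1 (S i) (hS0 _) (hbrk i (le_of_lt i.isLt))
    have hstep : ∑ j ∈ range m, len j • W j i
        = (∑ j ∈ range m, (t (j + 1) - t j) * ((⌊S ((i : ℕ) + 1) + t j⌋ : ℝ))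
          - ∑ j ∈ range m, (t (j + 1) - t j) * ((⌊S i + t j⌋ : ℝ))) / N := by
      rw [← Finset.sum_sub_distrib, Finset.sum_div]
      apply Finset.sum_congr rfl
      intro j _
      rw [hlen, hW]; dsimp only
      rw [smul_eq_mul]
      push_cast
      ring
    rw [hstep, e1, e2, hSsucc i]
    field_simp
    ring
  refine ⟨(range m).image W, fun v => ∑ j ∈ (range m).filter (fun j => W j = v), len j,
    ?_, ?_, ?_, ?_⟩
  · intro v hv
    obtain ⟨j, hj, rfl⟩ := Finset.mem_image.mp hv
    apply Finset.sum_pos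
    · intro j' hj'
      exact hlenpos j' (Finset.mem_filter.mp hj').1
    · exact ⟨j, Finset.mem_filter.mpr ⟨hj, rfl⟩⟩
  · rw [Finset.sum_fiberwise_of_maps_to (fun j hj => Finset.mem_image_of_mem W hj) len]
    rw [hlen]
    rw [Finset.sum_range_sub t m, ht00, htm1]
    ring
  · intro v hv
    obtain ⟨j, hj, rfl⟩ := Finset.mem_image.mp hv
    exact hWprops j (Finset.mem_range.mp hj)
  · have hcongr : ∀ v ∈ (range m).image W,
        (∑ j ∈ (range m).filter (fun j => W j = v), len j) • v
          = ∑ j ∈ (range m).filter (fun j => W j = v), len j • W j := by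
      intro v _
      rw [Finset.sum_smul]
      apply Finset.sum_congr rfl
      intro j hj
      rw [(Finset.mem_filter.mp hj).2]
    rw [Finset.sum_congr rfl hcongr,
      Finset.sum_fiberwise_of_maps_to (fun j hj => Finset.mem_image_of_mem W hj)
        (fun j => len j • W j)]
    exact hmean

/-- randomized rounding lemma: there is a finitely supported
probability measure whose support consists of feasible `1/N`-integral controls
and whose mean is `ℓ1`-close to `u`. -/
theorem stmt11 {n : ℕ} (hn : 1 ≤ n)
    (α : ℝ) (hα : α ∈ Set.Ioc (0 : ℝ) 1)
    (N : ℕ) (hN : 1 ≤ N)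
    (x : Fin n → ℝ) (hx : x ∈ stdSimplex ℝ (Fin n))
    (hxN : ∀ i, ∃ m : ℕ, (N : ℝ) * x i = m)
    (u : Fin n → ℝ) (hu : u ∈ feas α x) :
    ∃ (s : Finset (Fin n → ℝ)) (p : (Fin n → ℝ) → ℝ),
      (∀ v ∈ s, 0 < p v) ∧
      (∑ v ∈ s, p v = 1) ∧
      (∀ v ∈ s, v ∈ feas α x ∧ ∀ i, ∃ m : ℕ, (N : ℝ) * v i = m) ∧
      l1 ((∑ v ∈ s, p v • v) - u) ≤ (α * N - ↑⌊α * N⌋) / N := by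
  have hN0 : (0 : ℝ) < N := by exact_mod_cast hN
  have hα0 : 0 < α := hα.1
  have hαN : 0 < α * N := mul_pos hα0 hN0
  set K : ℕ := ⌊α * N⌋.toNat with hKdef
  have hKcast : (K : ℝ) = (⌊α * N⌋ : ℝ) := by
    rw [hKdef]
    have : 0 ≤ ⌊α * N⌋ := Int.floor_nonneg.mpr (le_of_lt hαN)
    exact_mod_cast Int.toNat_of_nonneg this
  have hKle : (K : ℝ) ≤ α * N := by rw [hKcast]; exact Int.floor_le _
  have hKNα : (K : ℝ) / N ≤ α := by rw [div_le_iff₀ hN0]; linarith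
  have hKN0 : (0 : ℝ) ≤ (K : ℝ) / N := div_nonneg (Nat.cast_nonneg K) (le_of_lt hN0)
  obtain ⟨hu1, hu2⟩ := hu
  -- define the adjusted control u'
  set T : ℝ := ∑ i, u i with hT
  have hT0 : 0 ≤ T := Finset.sum_nonneg fun i _ => (hu1 i).1
  by_cases hcase : T ≤ (K : ℝ) / N
  · obtain ⟨s, p, hp1, hp2, hp3, hp4⟩ := mainLemma hN x u hxN
      (fun i => (hu1 i).1) (fun i => (hu1 i).2) hcase
    refine ⟨s, p, hp1, hp2, fun v hv => ⟨⟨(hp3 v hv).1.1, le_trans (hp3 v hv).1.2 hKNα⟩,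
      (hp3 v hv).2⟩, ?_⟩
    rw [hp4]
    have : l1 (u - u) = 0 := by
      rw [l1]
      simp
    rw [this]
    apply div_nonneg _ (le_of_lt hN0)
    rw [← hKcast]
    linarith
  · push_neg at hcase
    have hTpos : 0 < T := lt_of_le_of_lt hKN0 hcase
    set c : ℝ := (K : ℝ) / (N * T) with hc
    have hc0 : 0 ≤ c := div_nonneg (Nat.cast_nonneg K) (le_of_lt (mul_pos hN0 hTpos))
    have hc1 : c ≤ 1 := by
      rw [hc, div_le_one (mul_pos hN0 hTpos)]
      rw [div_lt_iff₀ hN0] at hcase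
      linarith
    set u' : Fin n → ℝ := fun i => c * u i with hu'
    have hu'0 : ∀ i, 0 ≤ u' i := fun i => mul_nonneg hc0 (hu1 i).1
    have hu'le : ∀ i, u' i ≤ u i := by
      intro i
      rw [hu']
      calc c * u i ≤ 1 * u i := mul_le_mul_of_nonneg_right hc1 (hu1 i).1
        _ = u i := one_mul _
    have hu'x : ∀ i, u' i ≤ x i := fun i => le_trans (hu'le i) (hu1 i).2
    have hu'sum : ∑ i, u' i = (K : ℝ) / N := by
      rw [hu']
      rw [← Finset.mul_sum, ← hT, hc]
      field_simp
    obtain ⟨s, p, hp1, hp2, hp3, hp4⟩ := mainLemma hN x u' hxN hu'0 hu'x (le_of_eq hu'sum)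
    refine ⟨s, p, hp1, hp2, fun v hv => ⟨⟨(hp3 v hv).1.1, le_trans (hp3 v hv).1.2 hKNα⟩,
      (hp3 v hv).2⟩, ?_⟩
    rw [hp4]
    have hl1 : l1 (u' - u) = T - (K : ℝ) / N := by
      rw [l1]
      have : ∀ i : Fin n, |(u' - u) i| = u i - u' i := by
        intro i
        rw [Pi.sub_apply, abs_sub_comm, abs_of_nonneg (sub_nonneg.mpr (hu'le i))]
      rw [Finset.sum_congr rfl fun i _ => this i, Finset.sum_sub_distrib, hu'sum, ← hT]
    rw [hl1, ← hKcast, le_div_iff₀ hN0, sub_mul, div_mul_cancel₀ _ (ne_of_gt hN0)]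
    nlinarith [hu2, hN0]
end

section
/- (Lemma on local linearity, feasibility claim.) Under the non-degeneracy assumption, there exists ε > 0 such that for every x ∈ Δ with ‖x − x*‖₁ < ε, the control f(x) is feasible: f(x) ∈ U(x) and ∑_i f_i(x) = α. -/
open Matrix Finset Filter

-- The feedback control `f` of the local-linearity lemma: `f_i(x) = x_i` on
-- `S⁺ = {i : u*_i = x*_i}`, `f_{i*}(x) = α − ∑_{i ∈ S⁺} x_i`, and `0` elsewhere.
open Classical in
noncomputable def fCtrl {n : ℕ} (α : ℝ) (xs us : Fin n → ℝ) (istar : Fin n)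
    (x : Fin n → ℝ) (i : Fin n) : ℝ :=
  if us i = xs i then x i
  else if i = istar then α - ∑ j ∈ Finset.univ.filter (fun j => us j = xs j), x j
  else 0

/- ---------- auxiliary material ---------- -/

open Classical in
lemma fCtrl_apply {n : ℕ} (α : ℝ) (xs us : Fin n → ℝ) (istar : Fin n)
    (x : Fin n → ℝ) (i : Fin n) :
    fCtrl α xs us istar x i =
      if us i = xs i then x i
      else if i = istar then α - ∑ j ∈ Finset.univ.filter (fun j => us j = xs j), x j
      else 0 := rfl

lemma sum_vecMul_eq {n : ℕ} (v : Fin n → ℝ) (M : Matrix (Fin n) (Fin n) ℝ) :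
    ∑ j, (v ᵥ* M) j = ∑ i, v i * ∑ j, M i j := by
  simp only [Matrix.vecMul, dotProduct, Finset.mul_sum]
  exact Finset.sum_comm

open Classical in
noncomputable def duMap {n : ℕ} (xs us : Fin n → ℝ) (istar : Fin n) :
    ((Fin n → ℝ) × ℝ) →ₗ[ℝ] (Fin n → ℝ) where
  toFun p := fun i => if us i = xs i then p.1 i else if i = istar then p.2 else 0
  map_add' p q := by
    funext i
    by_cases h : us i = xs i
    · simp [h]
    · by_cases h2 : i = istar
      · subst h2; simp [h]
      · simp [h, h2]
  map_smul' c p := by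
    funext i
    by_cases h : us i = xs i
    · simp [h]
    · by_cases h2 : i = istar
      · subst h2; simp [h]
      · simp [h, h2]

open Classical in
lemma duMap_apply {n : ℕ} (xs us : Fin n → ℝ) (istar : Fin n) (p : (Fin n → ℝ) × ℝ)
    (i : Fin n) :
    duMap xs us istar p i =
      if us i = xs i then p.1 i else if i = istar then p.2 else 0 := rfl

noncomputable def sumL {n : ℕ} : (Fin n → ℝ) →ₗ[ℝ] ℝ where
  toFun v := ∑ i, v i
  map_add' v w := by simp [Finset.sum_add_distrib]
  map_smul' c v := by simp [Finset.mul_sum]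

noncomputable def Fmap {n : ℕ} (P0 P1 : Matrix (Fin n) (Fin n) ℝ) (xs us : Fin n → ℝ)
    (istar : Fin n) : ((Fin n → ℝ) × ℝ) →ₗ[ℝ] ((Fin n → ℝ) × ℝ) :=
  (((Matrix.vecMulLinear (1 - P0)).comp (LinearMap.fst ℝ _ _)
      - (Matrix.vecMulLinear (P1 - P0)).comp (duMap xs us istar)).prod
    (sumL.comp (LinearMap.fst ℝ _ _)))

lemma Fmap_apply {n : ℕ} (P0 P1 : Matrix (Fin n) (Fin n) ℝ) (xs us : Fin n → ℝ)
    (istar : Fin n) (p : (Fin n → ℝ) × ℝ) :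
    Fmap P0 P1 xs us istar p =
      (p.1 ᵥ* (1 - P0) - (duMap xs us istar p) ᵥ* (P1 - P0), ∑ i, p.1 i) := rfl

/- ---------- main theorem ---------- -/

/-- local linearity, feasibility claim: near `x*`, the control
`f(x)` is feasible and saturates the budget. -/
theorem stmt13 {n : ℕ} (hn : 1 ≤ n)
    (P0 P1 : Matrix (Fin n) (Fin n) ℝ) (hP0 : IsStochastic P0) (hP1 : IsStochastic P1)
    (r0 r1 : Fin n → ℝ) (hr0 : ∀ i, r0 i ∈ Set.Icc (0 : ℝ) 1)
    (hr1 : ∀ i, r1 i ∈ Set.Icc (0 : ℝ) 1)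
    (α : ℝ) (hα : α ∈ Set.Ioc (0 : ℝ) 1)
    (xs us : Fin n → ℝ)
    (hxs : xs ∈ stdSimplex ℝ (Fin n)) (hus : us ∈ feas α xs)
    (hfix : phi P0 P1 xs us = xs)
    (hopt : ∀ x ∈ stdSimplex ℝ (Fin n), ∀ u ∈ feas α x, phi P0 P1 x u = x →
      rew r0 r1 x u ≤ rew r0 r1 xs us)
    (huniq : ∀ x ∈ stdSimplex ℝ (Fin n), ∀ u ∈ feas α x, phi P0 P1 x u = x →
      rew r0 r1 x u = rew r0 r1 xs us → x = xs ∧ u = us)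
    (hpos : ∀ i, 0 < xs i)
    (istar : Fin n) (histar : 0 < us istar ∧ us istar < xs istar)
    (histar_uniq : ∀ j : Fin n, 0 < us j ∧ us j < xs j → j = istar)
    :
    ∃ ε : ℝ, 0 < ε ∧ ∀ x ∈ stdSimplex ℝ (Fin n), l1 (x - xs) < ε →
      fCtrl α xs us istar x ∈ feas α x ∧ ∑ i, fCtrl α xs us istar x i = α := by
  -- states other than `i*` and those in `S⁺` have zero control
  have husz : ∀ i, ¬(us i = xs i) → i ≠ istar → us i = 0 := by
    intro i h hne
    by_contra h0
    have h1 : 0 < us i := lt_of_le_of_ne (hus.1 i).1 (Ne.symm h0)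
    have h2 : us i < xs i := lt_of_le_of_ne (hus.1 i).2 h
    exact hne (histar_uniq i ⟨h1, h2⟩)
  -- Step 1: the budget is saturated at the optimum
  have hsat : ∑ i, us i = α := by
    by_contra hne
    have hsl : ∑ i, us i < α := lt_of_le_of_ne hus.2 hne
    -- a nonzero kernel element of `Fmap`
    set F := Fmap P0 P1 xs us istar with hF
    have hzero : ∀ p : (Fin n → ℝ) × ℝ, ∑ j, (F p).1 j = 0 := by
      intro p
      rw [Fmap_apply]
      simp only [Pi.sub_apply]
      rw [Finset.sum_sub_distrib, sum_vecMul_eq, sum_vecMul_eq]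
      have h1 : ∀ i : Fin n, ∑ j, (1 - P0) i j = 0 := by
        intro i
        simp [Matrix.sub_apply, Finset.sum_sub_distrib, Matrix.one_apply, hP0.2 i]
      have h2 : ∀ i : Fin n, ∑ j, (P1 - P0) i j = 0 := by
        intro i
        simp [Matrix.sub_apply, Finset.sum_sub_distrib, hP0.2 i, hP1.2 i]
      simp only [h1, h2, mul_zero, Finset.sum_const_zero, sub_self]
    have hnotsurj : ¬ Function.Surjective F := by
      intro hsurj
      obtain ⟨p, hp⟩ := hsurj ((fun _ => (1 : ℝ)), 0)
      have h1 : ∑ j, ((F p).1) j = 0 := hzero p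
      rw [hp] at h1
      simp at h1
      omega
    have hnotinj : ¬ Function.Injective F := fun hinj =>
      hnotsurj ((LinearMap.injective_iff_surjective).mp hinj)
    obtain ⟨a, b, hab, habne⟩ := Function.not_injective_iff.mp hnotinj
    set p0 : (Fin n → ℝ) × ℝ := a - b with hp0
    have hp0ne : p0 ≠ 0 := sub_ne_zero.mpr habne
    have hFp0 : F p0 = 0 := by rw [hp0, map_sub, hab, sub_self]
    set δx : Fin n → ℝ := p0.1 with hδx
    set t : ℝ := p0.2 with ht
    set δu : Fin n → ℝ := duMap xs us istar p0 with hδu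
    have hA : δx ᵥ* (1 - P0) - δu ᵥ* (P1 - P0) = 0 := by
      have := congrArg Prod.fst hFp0
      rwa [Fmap_apply] at this
    have hsum0 : ∑ i, δx i = 0 := by
      have := congrArg Prod.snd hFp0
      rwa [Fmap_apply] at this
    have hfixpt : ∀ j, (δx ᵥ* P0) j + (δu ᵥ* (P1 - P0)) j = δx j := by
      rw [Matrix.vecMul_sub, Matrix.vecMul_one] at hA
      intro j
      have := congrFun hA j
      simp only [Pi.sub_apply, Pi.zero_apply] at this
      linarith
    have hphi : ∀ s : ℝ, phi P0 P1 (xs + s • δx) (us + s • δu) = xs + s • δx := by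
      intro s
      funext j
      have h1 := congrFun hfix j
      have h2 := hfixpt j
      simp only [phi, Pi.add_apply, Pi.smul_apply, smul_eq_mul, Matrix.add_vecMul,
        Matrix.smul_vecMul] at h1 ⊢
      linear_combination h1 + s * h2
    -- constants
    set C : ℝ := (∑ i, |δx i|) + |t| + 1 with hCdef
    have hC0 : 0 < C := by positivity
    have hCx : ∀ i, |δx i| ≤ C := by
      intro i
      have h1 : |δx i| ≤ ∑ i, |δx i| :=
        Finset.single_le_sum (f := fun i => |δx i|) (fun i _ => abs_nonneg _) (Finset.mem_univ i)
      have := abs_nonneg t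
      linarith
    have hCt : |t| ≤ C := by
      have h1 : (0:ℝ) ≤ ∑ i, |δx i| := Finset.sum_nonneg fun i _ => abs_nonneg _
      linarith
    have hCdu : ∑ i, |δu i| ≤ C := by
      have hδuval : ∀ i, δu i = if us i = xs i then δx i else if i = istar then t else 0 :=
        fun _ => rfl
      have hle : ∀ i, |δu i| ≤ |δx i| + (if i = istar then |t| else 0) := by
        intro i
        by_cases h : us i = xs i
        · rw [hδuval i, if_pos h]
          have h0 : (0:ℝ) ≤ if i = istar then |t| else 0 := by
            by_cases h2 : i = istar <;> simp [h2, abs_nonneg]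
          linarith
        · by_cases h2 : i = istar
          · rw [hδuval i, if_neg h, if_pos h2, if_pos h2]
            linarith [abs_nonneg (δx i)]
          · rw [hδuval i, if_neg h, if_neg h2, if_neg h2]
            simp [abs_nonneg]
      calc ∑ i, |δu i| ≤ ∑ i, (|δx i| + (if i = istar then |t| else 0)) :=
            Finset.sum_le_sum fun i _ => hle i
        _ = (∑ i, |δx i|) + |t| := by
            rw [Finset.sum_add_distrib, Finset.sum_ite_eq' Finset.univ istar]
            simp
        _ ≤ C := by linarith
    haveI : Nonempty (Fin n) := ⟨istar⟩
    set bmin : ℝ := Finset.univ.inf' Finset.univ_nonempty xs with hbmin_def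
    have hbmin : ∀ i, bmin ≤ xs i := fun i => Finset.inf'_le _ (Finset.mem_univ i)
    have hbminpos : 0 < bmin := by
      rw [hbmin_def, Finset.lt_inf'_iff]
      exact fun i _ => hpos i
    set b : ℝ := min (min bmin (α - ∑ i, us i)) (min (us istar) ((xs istar - us istar) / 2))
      with hbdef
    have hb : 0 < b := by
      apply lt_min (lt_min hbminpos (by linarith)) (lt_min histar.1 (by linarith [histar.2]))
    have hb_bmin : b ≤ bmin := le_trans (min_le_left _ _) (min_le_left _ _)
    have hb_sl : b ≤ α - ∑ i, us i := le_trans (min_le_left _ _) (min_le_right _ _)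
    have hb_us : b ≤ us istar := le_trans (min_le_right _ _) (min_le_left _ _)
    have hb_gap : b ≤ (xs istar - us istar) / 2 := le_trans (min_le_right _ _) (min_le_right _ _)
    set s0 : ℝ := b / C with hs0def
    have hs0 : 0 < s0 := div_pos hb hC0
    have hsC : ∀ s : ℝ, |s| ≤ s0 → |s| * C ≤ b := by
      intro s hs
      calc |s| * C ≤ s0 * C := mul_le_mul_of_nonneg_right hs hC0.le
        _ = b := div_mul_cancel₀ b hC0.ne'
    -- feasibility of the perturbed pair
    have hFeasS : ∀ s : ℝ, |s| ≤ s0 → (xs + s • δx) ∈ stdSimplex ℝ (Fin n) := by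
      intro s hs
      have hsC' := hsC s hs
      constructor
      · intro i
        have h1 : |s * δx i| ≤ b := by
          rw [abs_mul]
          calc |s| * |δx i| ≤ |s| * C := mul_le_mul_of_nonneg_left (hCx i) (abs_nonneg s)
            _ ≤ b := hsC'
        have h2 : b ≤ xs i := le_trans hb_bmin (hbmin i)
        have h3 := neg_abs_le (s * δx i)
        simp only [Pi.add_apply, Pi.smul_apply, smul_eq_mul]
        linarith
      · simp only [Pi.add_apply, Pi.smul_apply, smul_eq_mul]
        rw [Finset.sum_add_distrib, ← Finset.mul_sum, hsum0, hxs.2, mul_zero, add_zero]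
    have hFeasU : ∀ s : ℝ, |s| ≤ s0 → (us + s • δu) ∈ feas α (xs + s • δx) := by
      intro s hs
      have hsC' := hsC s hs
      refine ⟨fun i => ?_, ?_⟩
      · simp only [Pi.add_apply, Pi.smul_apply, smul_eq_mul]
        by_cases h : us i = xs i
        · have hδ : δu i = δx i := by
            rw [show δu i = if us i = xs i then δx i else if i = istar then t else 0 from rfl,
              if_pos h]
          have h0 : 0 ≤ xs i + s * δx i := (hFeasS s hs).1 i
          rw [hδ, h]
          exact ⟨h0, le_refl _⟩
        · by_cases h2 : i = istar
          · subst h2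
            have hδ : δu i = t := by
              rw [show δu i = if us i = xs i then δx i else if i = i then t else 0 from rfl,
                if_neg h, if_pos rfl]
            rw [hδ]
            have e1 : |s * t| ≤ b := by
              rw [abs_mul]
              calc |s| * |t| ≤ |s| * C := mul_le_mul_of_nonneg_left hCt (abs_nonneg s)
                _ ≤ b := hsC'
            have e2 : |s * δx i| ≤ b := by
              rw [abs_mul]
              calc |s| * |δx i| ≤ |s| * C := mul_le_mul_of_nonneg_left (hCx i) (abs_nonneg s)
                _ ≤ b := hsC'
            have e3 := neg_abs_le (s * t)
            have e4 := le_abs_self (s * t)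
            have e5 := neg_abs_le (s * δx i)
            constructor
            · linarith [hb_us]
            · linarith [hb_gap]
          · have hδ : δu i = 0 := by
              rw [show δu i = if us i = xs i then δx i else if i = istar then t else 0 from rfl,
                if_neg h, if_neg h2]
            have hz := husz i h h2
            have h0 : 0 ≤ xs i + s * δx i := by
              have := (hFeasS s hs).1 i
              simpa using this
            rw [hδ, hz]
            simp [h0]
      · have h1 : |∑ i, s * δu i| ≤ b := by
          calc |∑ i, s * δu i| ≤ ∑ i, |s * δu i| := Finset.abs_sum_le_sum_abs _ _
            _ = ∑ i, |s| * |δu i| := by simp [abs_mul]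
            _ = |s| * ∑ i, |δu i| := by rw [Finset.mul_sum]
            _ ≤ |s| * C := mul_le_mul_of_nonneg_left hCdu (abs_nonneg s)
            _ ≤ b := hsC'
        have h2 := le_abs_self (∑ i, s * δu i)
        simp only [Pi.add_apply, Pi.smul_apply, smul_eq_mul]
        rw [Finset.sum_add_distrib]
        linarith [hb_sl]
    -- reward along the perturbation
    have hrew : ∀ s : ℝ, rew r0 r1 (xs + s • δx) (us + s • δu)
        = rew r0 r1 xs us + s * (r0 ⬝ᵥ δx + (r1 - r0) ⬝ᵥ δu) := by
      intro s
      simp only [rew, dotProduct_add, dotProduct_smul, smul_eq_mul]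
      ring
    set c : ℝ := r0 ⬝ᵥ δx + (r1 - r0) ⬝ᵥ δu with hc
    have habs0 : |s0| ≤ s0 := by rw [abs_of_pos hs0]
    have habs1 : |(-s0)| ≤ s0 := by rw [abs_neg, abs_of_pos hs0]
    have hup : s0 * c ≤ 0 := by
      have := hopt _ (hFeasS s0 habs0) _ (hFeasU s0 habs0) (hphi s0)
      rw [hrew] at this
      linarith
    have hdn : 0 ≤ s0 * c := by
      have := hopt _ (hFeasS (-s0) habs1) _ (hFeasU (-s0) habs1) (hphi (-s0))
      rw [hrew] at this
      nlinarith
    have hc0 : c = 0 := by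
      rcases mul_eq_zero.mp (le_antisymm hup hdn) with h | h
      · exact absurd h hs0.ne'
      · exact h
    have heq : rew r0 r1 (xs + s0 • δx) (us + s0 • δu) = rew r0 r1 xs us := by
      rw [hrew, hc0, mul_zero, add_zero]
    obtain ⟨hxeq, hueq⟩ := huniq _ (hFeasS s0 habs0) _ (hFeasU s0 habs0) (hphi s0) heq
    have hδx0 : δx = 0 := by
      have h1 : s0 • δx = 0 := by
        have := hxeq
        rwa [add_eq_left] at this
      rcases smul_eq_zero.mp h1 with h | h
      · exact absurd h hs0.ne'
      · exact h
    have hδu0 : δu = 0 := by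
      have h1 : s0 • δu = 0 := by
        have := hueq
        rwa [add_eq_left] at this
      rcases smul_eq_zero.mp h1 with h | h
      · exact absurd h hs0.ne'
      · exact h
    have ht0 : t = 0 := by
      have := congrFun hδu0 istar
      rw [show δu istar = if us istar = xs istar then δx istar
          else if istar = istar then t else 0 from rfl,
        if_neg (ne_of_lt histar.2), if_pos rfl] at this
      exact this
    apply hp0ne
    rw [Prod.ext_iff]
    exact ⟨hδx0, ht0⟩
  -- Step 2: the geometry of `S⁺`
  set S : Finset (Fin n) := Finset.univ.filter (fun j => us j = xs j) with hSdef
  have histar_notS : istar ∉ S := by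
    rw [hSdef, Finset.mem_filter]
    rintro ⟨-, h⟩
    exact (ne_of_lt histar.2) h
  have hsplit : ∑ j ∈ S, xs j + us istar = α := by
    have h1 : ∑ j ∈ S, us j + ∑ j ∈ Finset.univ.filter (fun j => ¬ us j = xs j), us j
        = ∑ i, us i := Finset.sum_filter_add_sum_filter_not _ _ _
    have h2 : ∑ j ∈ S, us j = ∑ j ∈ S, xs j := by
      apply Finset.sum_congr rfl
      intro j hj
      exact (Finset.mem_filter.mp hj).2
    have h3 : ∑ j ∈ Finset.univ.filter (fun j => ¬ us j = xs j), us j = us istar := by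
      apply Finset.sum_eq_single_of_mem
      · rw [Finset.mem_filter]
        exact ⟨Finset.mem_univ _, ne_of_lt histar.2⟩
      · intro j hj hne
        exact husz j (Finset.mem_filter.mp hj).2 hne
    rw [h2, h3] at h1
    linarith [hsat]
  -- Step 3: pick `ε` and conclude
  refine ⟨min (us istar) (xs istar - us istar),
    lt_min histar.1 (sub_pos.mpr histar.2), ?_⟩
  intro x hx hl1
  set ε : ℝ := min (us istar) (xs istar - us istar) with hεdef
  have hε_us : ε ≤ us istar := min_le_left _ _
  have hε_gap : ε ≤ xs istar - us istar := min_le_right _ _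
  set dS : ℝ := ∑ j ∈ S, |x j - xs j| with hdSdef
  set dI : ℝ := |x istar - xs istar| with hdIdef
  have hkey : dS + dI ≤ l1 (x - xs) := by
    have h1 : l1 (x - xs) = ∑ i, |x i - xs i| := by
      simp [l1]
    have h2 : dI + dS = ∑ j ∈ insert istar S, |x j - xs j| := by
      rw [Finset.sum_insert histar_notS]
    have h3 : ∑ j ∈ insert istar S, |x j - xs j| ≤ ∑ i, |x i - xs i| :=
      Finset.sum_le_sum_of_subset_of_nonneg (Finset.subset_univ _)
        (fun i _ _ => abs_nonneg _)
    rw [h1]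
    linarith
  have hd : |∑ j ∈ S, (x j - xs j)| ≤ dS := Finset.abs_sum_le_sum_abs _ _
  have hsum_sub : ∑ j ∈ S, (x j - xs j) = ∑ j ∈ S, x j - ∑ j ∈ S, xs j :=
    Finset.sum_sub_distrib _ _
  have hAval : α - ∑ j ∈ S, x j = us istar - ∑ j ∈ S, (x j - xs j) := by
    rw [hsum_sub]
    linarith [hsplit]
  have hd1 := le_abs_self (∑ j ∈ S, (x j - xs j))
  have hd2 := neg_abs_le (∑ j ∈ S, (x j - xs j))
  have hdI1 := le_abs_self (x istar - xs istar)
  have hdI2 := neg_abs_le (x istar - xs istar)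
  have hdI0 : (0:ℝ) ≤ dI := abs_nonneg _
  have hdS0 : (0:ℝ) ≤ dS := Finset.sum_nonneg fun j _ => abs_nonneg _
  -- the sum of the control
  have hsum_f : ∑ i, fCtrl α xs us istar x i = α := by
    have h1 : ∑ j ∈ S, fCtrl α xs us istar x j
        + ∑ j ∈ Finset.univ.filter (fun j => ¬ us j = xs j), fCtrl α xs us istar x j
        = ∑ i, fCtrl α xs us istar x i := Finset.sum_filter_add_sum_filter_not _ _ _
    have h2 : ∑ j ∈ S, fCtrl α xs us istar x j = ∑ j ∈ S, x j := by
      apply Finset.sum_congr rfl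
      intro j hj
      rw [fCtrl_apply, if_pos (Finset.mem_filter.mp hj).2]
    have h3 : ∑ j ∈ Finset.univ.filter (fun j => ¬ us j = xs j), fCtrl α xs us istar x j
        = α - ∑ j ∈ S, x j := by
      rw [Finset.sum_eq_single_of_mem istar]
      · rw [fCtrl_apply, if_neg (ne_of_lt histar.2), if_pos rfl]
      · rw [Finset.mem_filter]
        exact ⟨Finset.mem_univ _, ne_of_lt histar.2⟩
      · intro j hj hne
        rw [fCtrl_apply, if_neg (Finset.mem_filter.mp hj).2, if_neg hne]
    rw [h2, h3] at h1
    rw [← h1]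
    ring
  refine ⟨⟨fun i => ?_, le_of_eq hsum_f⟩, hsum_f⟩
  by_cases h : us i = xs i
  · rw [fCtrl_apply, if_pos h]
    exact ⟨hx.1 i, le_refl _⟩
  · by_cases h2 : i = istar
    · subst h2
      rw [fCtrl_apply, if_neg h, if_pos rfl]
      constructor
      · rw [hAval]
        linarith
      · rw [hAval]
        linarith
    · rw [fCtrl_apply, if_neg h, if_neg h2]
      exact ⟨le_refl _, hx.1 i⟩
end

section
/- (Lemma on local linearity, affine dynamics claim.) Under the non-degeneracy assumption, one has f(x*) = u*, Φ(x*, f(x*)) = x*, and for every x ∈ Δ: Φ(x, f(x)) = x* + (x − x*) P*; that is, the closed-loop dynamics under the feedback f is affine with linear part given by the matrix P*. -/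
open Matrix Finset Filter

-- The matrix `P*`: row `i` is row `i` of `P⁰` when `u*_i < x*_i`, and
-- `P¹_{i,·} − P¹_{i*,·} + P⁰_{i*,·}` when `u*_i = x*_i`.
open Classical in
noncomputable def Pstar {n : ℕ} (P0 P1 : Matrix (Fin n) (Fin n) ℝ)
    (xs us : Fin n → ℝ) (istar : Fin n) : Matrix (Fin n) (Fin n) ℝ :=
  Matrix.of fun i j =>
    if us i = xs i then P1 i j - P1 istar j + P0 istar j else P0 i j

lemma exists_dep_family {n : ℕ} (F : (Fin n) ⊕ Unit → (Fin n → ℝ)) :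
    ∃ g : (Fin n) ⊕ Unit → ℝ, ∑ k, g k • F k = 0 ∧ ∃ k, g k ≠ 0 := by
  rw [← Fintype.not_linearIndependent_iff]
  intro h
  have := h.fintype_card_le_finrank
  simp [Module.finrank_fin_fun] at this

/-- local linearity, affine dynamics claim: `f(x*) = u*`,
`Φ(x*, f(x*)) = x*`, and the closed-loop dynamics is affine:
`Φ(x, f(x)) = x* + (x − x*) P*` for every `x ∈ Δ`. -/
theorem stmt14 {n : ℕ} (hn : 1 ≤ n)
    (P0 P1 : Matrix (Fin n) (Fin n) ℝ) (hP0 : IsStochastic P0) (hP1 : IsStochastic P1)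
    (r0 r1 : Fin n → ℝ) (hr0 : ∀ i, r0 i ∈ Set.Icc (0 : ℝ) 1)
    (hr1 : ∀ i, r1 i ∈ Set.Icc (0 : ℝ) 1)
    (α : ℝ) (hα : α ∈ Set.Ioc (0 : ℝ) 1)
    (xs us : Fin n → ℝ)
    (hxs : xs ∈ stdSimplex ℝ (Fin n)) (hus : us ∈ feas α xs)
    (hfix : phi P0 P1 xs us = xs)
    (hopt : ∀ x ∈ stdSimplex ℝ (Fin n), ∀ u ∈ feas α x, phi P0 P1 x u = x →
      rew r0 r1 x u ≤ rew r0 r1 xs us)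
    (huniq : ∀ x ∈ stdSimplex ℝ (Fin n), ∀ u ∈ feas α x, phi P0 P1 x u = x →
      rew r0 r1 x u = rew r0 r1 xs us → x = xs ∧ u = us)
    (hpos : ∀ i, 0 < xs i)
    (istar : Fin n) (histar : 0 < us istar ∧ us istar < xs istar)
    (histar_uniq : ∀ j : Fin n, 0 < us j ∧ us j < xs j → j = istar)
    :
    fCtrl α xs us istar xs = us ∧
    phi P0 P1 xs (fCtrl α xs us istar xs) = xs ∧
    ∀ x ∈ stdSimplex ℝ (Fin n),
      phi P0 P1 x (fCtrl α xs us istar x) =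
        xs + (x - xs) ᵥ* Pstar P0 P1 xs us istar := by
  classical
  have husl : ∀ i, 0 ≤ us i ∧ us i ≤ xs i := hus.1
  have husb : ∑ i, us i ≤ α := hus.2
  have hne_istar : ¬ (us istar = xs istar) := ne_of_lt histar.2
  -- states off `S⁺ ∪ {istar}` carry zero control
  have hzero : ∀ i, ¬ us i = xs i → i ≠ istar → us i = 0 := by
    intro i hi hii
    by_contra h0
    have h1 : 0 < us i := lt_of_le_of_ne (husl i).1 (Ne.symm h0)
    have h2 : us i < xs i := lt_of_le_of_ne (husl i).2 hi
    exact hii (histar_uniq i ⟨h1, h2⟩)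
  -- generic splitting of sums against the `dP`-pattern
  have key : ∀ (w : Fin n → ℝ) (a : ℝ) (y : Fin n → ℝ),
      ∑ i, (if us i = xs i then w i else if i = istar then a else 0) * y i
        = (∑ i ∈ Finset.univ.filter (fun j => us j = xs j), w i * y i) + a * y istar := by
    intro w a y
    rw [← Finset.sum_filter_add_sum_filter_not Finset.univ (fun i => us i = xs i)
      (fun i => (if us i = xs i then w i else if i = istar then a else 0) * y i)]
    congr 1
    · exact Finset.sum_congr rfl (fun i hi => by
        rw [if_pos (Finset.mem_filter.mp hi).2])
    · rw [Finset.sum_eq_single istar]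
      · rw [if_neg hne_istar, if_pos rfl]
      · intro b hb hbne
        rw [if_neg (Finset.mem_filter.mp hb).2, if_neg hbne, zero_mul]
      · intro h
        exact absurd (Finset.mem_filter.mpr ⟨Finset.mem_univ istar, hne_istar⟩) h
  have hus_eq : ∀ i, us i = (if us i = xs i then xs i else if i = istar then us istar else 0) := by
    intro i
    by_cases h1 : us i = xs i
    · rw [if_pos h1]; exact h1
    · rw [if_neg h1]
      by_cases h2 : i = istar
      · rw [if_pos h2, h2]
      · rw [if_neg h2]; exact hzero i h1 h2
  have key_us : ∀ y : Fin n → ℝ, ∑ i, us i * y i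
      = (∑ i ∈ Finset.univ.filter (fun j => us j = xs j), xs i * y i) + us istar * y istar := by
    intro y
    rw [← key xs (us istar) y]
    exact Finset.sum_congr rfl (fun i _ => by rw [← hus_eq i])
  have hfixj : ∀ j, (∑ i, xs i * P0 i j) + (∑ i, us i * (P1 i j - P0 i j)) = xs j := by
    intro j
    have h := congrFun hfix j
    simpa [phi, Matrix.vecMul, dotProduct, Matrix.sub_apply] using h
  -- a generic expansion lemma for perturbed sums
  have expand : ∀ (t : ℝ) (a b w : Fin n → ℝ),
      ∑ i, (a i + t * b i) * w i = (∑ i, a i * w i) + t * ∑ i, b i * w i := by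
    intro t a b w
    rw [Finset.mul_sum, ← Finset.sum_add_distrib]
    exact Finset.sum_congr rfl (fun i _ => by ring)
  -- Budget saturation: ∑ us = α
  have hsat : ∑ i, us i = α := by
    by_contra hne
    have hlt : ∑ i, us i < α := lt_of_le_of_ne husb hne
    obtain ⟨g, hg0, k0, hk0⟩ := exists_dep_family (Sum.elim
      (fun i => fun j => if j = istar then (1:ℝ) else
        ((if i = j then (1:ℝ) else 0) - P0 i j - (if us i = xs i then P1 i j - P0 i j else 0)))
      (fun _ => fun j => if j = istar then (0:ℝ) else -(P1 istar j - P0 istar j)))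
    set v : Fin n → ℝ := fun i => g (Sum.inl i) with hv
    set s : ℝ := g (Sum.inr ()) with hsdef
    set dv : Fin n → ℝ := fun i => if us i = xs i then v i else if i = istar then s else 0
      with hdv
    have hdv_val : ∀ i, dv i = if us i = xs i then v i else if i = istar then s else 0 :=
      fun i => rfl
    have hdvS : ∀ i, us i = xs i → dv i = v i := fun i h => by rw [hdv_val i, if_pos h]
    have hdvistar : dv istar = s := by rw [hdv_val istar, if_neg hne_istar, if_pos rfl]
    have hdv0 : ∀ i, ¬ us i = xs i → i ≠ istar → dv i = 0 := fun i h1 h2 => by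
      rw [hdv_val i, if_neg h1, if_neg h2]
    have keydv : ∀ y : Fin n → ℝ, ∑ i, dv i * y i
        = (∑ i ∈ Finset.univ.filter (fun j => us j = xs j), v i * y i) + s * y istar :=
      fun y => key v s y
    have hcomp : ∀ j, (∑ i, v i * (if j = istar then (1:ℝ) else
        ((if i = j then (1:ℝ) else 0) - P0 i j - (if us i = xs i then P1 i j - P0 i j else 0))))
        + s * (if j = istar then (0:ℝ) else -(P1 istar j - P0 istar j)) = 0 := by
      intro j
      have h1 := congrFun hg0 j
      rw [Finset.sum_apply] at h1
      rw [Fintype.sum_sum_type] at h1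
      simpa [hv, hsdef] using h1
    have hsumv : (∑ i, v i) = 0 := by
      have h := hcomp istar
      simpa using h
    have hlin : ∀ j, v j = (∑ i, v i * P0 i j) + ∑ i, dv i * (P1 i j - P0 i j) := by
      have hlinne : ∀ j, j ≠ istar →
          v j = (∑ i, v i * P0 i j) + ∑ i, dv i * (P1 i j - P0 i j) := by
        intro j hj
        have h1 := hcomp j
        simp only [if_neg hj] at h1
        have e0 : ∀ i, v i * ((if i = j then (1:ℝ) else 0) - P0 i j
              - (if us i = xs i then P1 i j - P0 i j else 0))
            = (if i = j then v i else 0) - v i * P0 i j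
              - (if us i = xs i then v i * (P1 i j - P0 i j) else 0) := by
          intro i
          split_ifs <;> ring
        rw [Finset.sum_congr rfl (fun i _ => e0 i), Finset.sum_sub_distrib,
          Finset.sum_sub_distrib, Finset.sum_ite_eq' Finset.univ j v,
          if_pos (Finset.mem_univ j), ← Finset.sum_filter] at h1
        have hdvc : ∑ i, dv i * (P1 i j - P0 i j)
            = (∑ i ∈ Finset.univ.filter (fun j => us j = xs j), v i * (P1 i j - P0 i j))
              + s * (P1 istar j - P0 istar j) := keydv _
        rw [hdvc]
        linarith
      intro j
      by_cases hj : j = istar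
      · have hA : ∑ j, ((∑ i, v i * P0 i j) + ∑ i, dv i * (P1 i j - P0 i j)) = 0 := by
          rw [Finset.sum_add_distrib, Finset.sum_comm, Finset.sum_comm
            (f := fun j i => dv i * (P1 i j - P0 i j))]
          have e2 : ∀ i : Fin n, ∑ j, v i * P0 i j = v i := by
            intro i; rw [← Finset.mul_sum, hP0.2 i, mul_one]
          have e3 : ∀ i : Fin n, ∑ j, dv i * (P1 i j - P0 i j) = 0 := by
            intro i
            rw [← Finset.mul_sum, Finset.sum_sub_distrib, hP0.2 i, hP1.2 i]
            ring
          rw [Finset.sum_congr rfl fun i _ => e2 i, Finset.sum_congr rfl fun i _ => e3 i]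
          simp [hsumv]
        have h2 : ∑ j ∈ Finset.univ.erase istar,
            (v j - ((∑ i, v i * P0 i j) + ∑ i, dv i * (P1 i j - P0 i j))) = 0 :=
          Finset.sum_eq_zero (fun j hj => by
            rw [hlinne j (Finset.ne_of_mem_erase hj)]; ring)
        have h3 : ∑ j, (v j - ((∑ i, v i * P0 i j) + ∑ i, dv i * (P1 i j - P0 i j))) = 0 := by
          rw [Finset.sum_sub_distrib, hsumv, hA]; ring
        have h4 : (v istar - ((∑ i, v i * P0 i istar) + ∑ i, dv i * (P1 i istar - P0 i istar)))
            + ∑ j ∈ Finset.univ.erase istar,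
                (v j - ((∑ i, v i * P0 i j) + ∑ i, dv i * (P1 i j - P0 i j)))
            = ∑ j, (v j - ((∑ i, v i * P0 i j) + ∑ i, dv i * (P1 i j - P0 i j))) :=
          Finset.add_sum_erase Finset.univ
            (fun j => v j - ((∑ i, v i * P0 i j) + ∑ i, dv i * (P1 i j - P0 i j)))
            (Finset.mem_univ istar)
        rw [h2, add_zero, h3] at h4
        rw [hj]
        linarith
      · exact hlinne j hj
    -- size bounds
    set D : ℝ := (∑ i, (|v i| + |s|)) + 1 with hD
    have hsum_nonneg : 0 ≤ ∑ i, (|v i| + |s|) :=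
      Finset.sum_nonneg (fun i _ => by positivity)
    have hD1 : (1:ℝ) ≤ D := by rw [hD]; linarith
    have hD0 : (0:ℝ) < D := lt_of_lt_of_le one_pos hD1
    have hterm : ∀ i : Fin n, |v i| + |s| ≤ D := by
      intro i
      have h : (fun i => |v i| + |s|) i ≤ ∑ i, (|v i| + |s|) :=
        Finset.single_le_sum (f := fun i => |v i| + |s|)
          (fun i _ => by positivity) (Finset.mem_univ i)
      have h' : |v i| + |s| ≤ ∑ i, (|v i| + |s|) := h
      rw [hD]; linarith
    have hvD : ∀ i, |v i| ≤ D := fun i => by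
      have h := hterm i; have := abs_nonneg s; linarith
    have hsD : |s| ≤ D := by
      have h := hterm istar; have := abs_nonneg (v istar); linarith
    have hdv_abs : ∀ i, |dv i| ≤ |v i| + |s| := by
      intro i
      by_cases h1 : us i = xs i
      · rw [hdvS i h1]; exact le_add_of_nonneg_right (abs_nonneg s)
      · by_cases h2 : i = istar
        · rw [h2, hdvistar]; exact le_add_of_nonneg_left (abs_nonneg (v istar))
        · rw [hdv0 i h1 h2]
          simp only [abs_zero]
          positivity
    have hsumdvD : |∑ i, dv i| ≤ D := by
      calc |∑ i, dv i| ≤ ∑ i, |dv i| := Finset.abs_sum_le_sum_abs _ _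
        _ ≤ ∑ i, (|v i| + |s|) := Finset.sum_le_sum (fun i _ => hdv_abs i)
        _ ≤ D := by rw [hD]; linarith
    -- the margin m
    haveI : Nonempty (Fin n) := ⟨⟨0, hn⟩⟩
    obtain ⟨i0, _, hi0⟩ := Finset.exists_min_image Finset.univ xs Finset.univ_nonempty
    set m : ℝ := min (min (xs i0) (us istar)) (min (xs istar - us istar) (α - ∑ i, us i))
      with hm
    have hm0 : 0 < m := by
      rw [hm]
      exact lt_min (lt_min (hpos i0) histar.1) (lt_min (by linarith [histar.2]) (by linarith))
    have hmx : ∀ i, m ≤ xs i := fun i =>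
      le_trans (le_trans (min_le_left _ _) (min_le_left _ _)) (hi0 i (Finset.mem_univ i))
    have hmu : m ≤ us istar := le_trans (min_le_left _ _) (min_le_right _ _)
    have hmg : m ≤ xs istar - us istar := le_trans (min_le_right _ _) (min_le_left _ _)
    have hmb : m ≤ α - ∑ i, us i := le_trans (min_le_right _ _) (min_le_right _ _)
    set t0 : ℝ := m / (2 * D) with ht0
    have ht0pos : 0 < t0 := by rw [ht0]; positivity
    have ht0D : t0 * D = m / 2 := by
      rw [ht0]; field_simp
    have habs : ∀ t z : ℝ, |t| ≤ t0 → |z| ≤ D → -(m/2) ≤ t * z ∧ t * z ≤ m/2 := by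
      intro t z ht hz
      have h1 : |t * z| ≤ t0 * D := by
        rw [abs_mul]
        exact mul_le_mul ht hz (abs_nonneg _) (le_of_lt ht0pos)
      rw [ht0D] at h1
      exact ⟨neg_le_of_abs_le h1, le_of_abs_le h1⟩
    -- feasibility of the perturbed pair
    have hfeas : ∀ t : ℝ, |t| ≤ t0 →
        (fun i => xs i + t * v i) ∈ stdSimplex ℝ (Fin n) ∧
        (fun i => us i + t * dv i) ∈ feas α (fun i => xs i + t * v i) ∧
        phi P0 P1 (fun i => xs i + t * v i) (fun i => us i + t * dv i)
          = (fun i => xs i + t * v i) := by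
      intro t ht
      have hxt_nonneg : ∀ i, 0 ≤ xs i + t * v i := by
        intro i
        have hb := (habs t (v i) ht (hvD i)).1
        have := hmx i
        linarith
      refine ⟨⟨hxt_nonneg, ?_⟩, ⟨?_, ?_⟩, ?_⟩
      · show ∑ i, (xs i + t * v i) = 1
        rw [Finset.sum_add_distrib, ← Finset.mul_sum, hsumv, hxs.2]; ring
      · intro i
        show 0 ≤ us i + t * dv i ∧ us i + t * dv i ≤ xs i + t * v i
        by_cases h1 : us i = xs i
        · rw [hdvS i h1, h1]
          exact ⟨hxt_nonneg i, le_refl _⟩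
        · by_cases h2 : i = istar
          · subst h2
            rw [hdvistar]
            have hb := habs t s ht hsD
            constructor
            · have := hmu; linarith [hb.1]
            · have h3 : t * (s - v i) ≤ m := by
                have h1' : |t * (s - v i)| ≤ t0 * (2 * D) := by
                  rw [abs_mul]
                  refine mul_le_mul ht ?_ (abs_nonneg _) (le_of_lt ht0pos)
                  calc |s - v i| ≤ |s| + |v i| := abs_sub s (v i)
                    _ ≤ D + D := add_le_add hsD (hvD i)
                    _ = 2 * D := by ring
                have h2' : t0 * (2 * D) = m := by
                  rw [ht0]; field_simp
                rw [h2'] at h1'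
                exact le_of_abs_le h1'
              have := hmg
              nlinarith [h3]
          · rw [hdv0 i h1 h2, hzero i h1 h2]
            constructor
            · linarith
            · have := hxt_nonneg i; linarith
      · show ∑ i, (us i + t * dv i) ≤ α
        rw [Finset.sum_add_distrib, ← Finset.mul_sum]
        have hb := (habs t (∑ i, dv i) ht hsumdvD).2
        linarith [hmb]
      · funext j
        have ex1 : ∑ i, (xs i + t * v i) * P0 i j
            = (∑ i, xs i * P0 i j) + t * ∑ i, v i * P0 i j := expand t xs v _
        have ex2 : ∑ i, (us i + t * dv i) * (P1 i j - P0 i j)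
            = (∑ i, us i * (P1 i j - P0 i j)) + t * ∑ i, dv i * (P1 i j - P0 i j) :=
          expand t us dv _
        have hLHS : phi P0 P1 (fun i => xs i + t * v i) (fun i => us i + t * dv i) j
            = ((∑ i, xs i * P0 i j) + t * ∑ i, v i * P0 i j)
              + ((∑ i, us i * (P1 i j - P0 i j)) + t * ∑ i, dv i * (P1 i j - P0 i j)) := by
          simp only [phi, Pi.add_apply, Matrix.vecMul, dotProduct, Matrix.sub_apply]
          rw [ex1, ex2]
        rw [hLHS]
        have hf := hfixj j
        have hl := hlin j
        show _ = xs j + t * v j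
        linear_combination hf - t * hl
    -- optimality forces zero directional derivative, then uniqueness kills the direction
    have hrew : ∀ t : ℝ, rew r0 r1 (fun i => xs i + t * v i) (fun i => us i + t * dv i)
        = rew r0 r1 xs us + t * ((∑ i, r0 i * v i) + ∑ i, (r1 i - r0 i) * dv i) := by
      intro t
      have e1 : ∑ i, r0 i * (xs i + t * v i)
          = (∑ i, r0 i * xs i) + t * ∑ i, r0 i * v i := by
        rw [Finset.mul_sum, ← Finset.sum_add_distrib]
        exact Finset.sum_congr rfl (fun i _ => by ring)
      have e2 : ∑ i, (r1 i - r0 i) * (us i + t * dv i)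
          = (∑ i, (r1 i - r0 i) * us i) + t * ∑ i, (r1 i - r0 i) * dv i := by
        rw [Finset.mul_sum, ← Finset.sum_add_distrib]
        exact Finset.sum_congr rfl (fun i _ => by ring)
      show (∑ i, r0 i * (xs i + t * v i)) + ∑ i, (r1 i - r0 i) * (us i + t * dv i)
          = ((∑ i, r0 i * xs i) + ∑ i, (r1 i - r0 i) * us i) + t * _
      rw [e1, e2]; ring
    have h1 := hfeas t0 (by rw [abs_of_pos ht0pos])
    have h2 := hfeas (-t0) (by rw [abs_neg, abs_of_pos ht0pos])
    have hE1 := hopt _ h1.1 _ h1.2.1 h1.2.2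
    have hE2 := hopt _ h2.1 _ h2.2.1 h2.2.2
    rw [hrew t0] at hE1
    rw [hrew (-t0)] at hE2
    set E : ℝ := (∑ i, r0 i * v i) + ∑ i, (r1 i - r0 i) * dv i with hE
    have hE0 : E = 0 := by
      have h6 : t0 * E = 0 := le_antisymm (by linarith) (by linarith)
      rcases mul_eq_zero.mp h6 with h | h
      · exact absurd h (ne_of_gt ht0pos)
      · exact h
    have heq : rew r0 r1 (fun i => xs i + t0 * v i) (fun i => us i + t0 * dv i)
        = rew r0 r1 xs us := by rw [hrew t0, hE0]; ring
    obtain ⟨hxeq, hueq⟩ := huniq _ h1.1 _ h1.2.1 h1.2.2 heq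
    have hv0 : ∀ i, v i = 0 := by
      intro i
      have h : xs i + t0 * v i = xs i := congrFun hxeq i
      have h5 : t0 * v i = 0 := by linarith
      rcases mul_eq_zero.mp h5 with h' | h'
      · exact absurd h' (ne_of_gt ht0pos)
      · exact h'
    have hs0 : s = 0 := by
      have h : us istar + t0 * dv istar = us istar := congrFun hueq istar
      rw [hdvistar] at h
      have h5 : t0 * s = 0 := by linarith
      rcases mul_eq_zero.mp h5 with h' | h'
      · exact absurd h' (ne_of_gt ht0pos)
      · exact h'
    rcases k0 with i | u
    · exact hk0 (hv0 i)
    · cases u; exact hk0 hs0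
  -- the three claims
  have hsum_us : ∑ i, us i
      = (∑ i ∈ Finset.univ.filter (fun j => us j = xs j), xs i) + us istar := by
    have h : ∑ i, us i * 1
        = (∑ i ∈ Finset.univ.filter (fun j => us j = xs j), xs i * 1) + us istar * 1 :=
      key_us _
    simpa using h
  have hαval : α - (∑ i ∈ Finset.univ.filter (fun j => us j = xs j), xs i) = us istar := by
    rw [← hsat, hsum_us]; ring
  have part1 : fCtrl α xs us istar xs = us := by
    funext i
    simp only [fCtrl, Finset.filter_congr_decidable]
    by_cases h1 : us i = xs i
    · rw [if_pos h1]; exact h1.symm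
    · rw [if_neg h1]
      by_cases h2 : i = istar
      · rw [if_pos h2, hαval, h2]
      · rw [if_neg h2]; exact (hzero i h1 h2).symm
  refine ⟨part1, by rw [part1]; exact hfix, ?_⟩
  intro x hx
  funext j
  have hkey3 : ∑ i, (if us i = xs i then x i
        else if i = istar then (α - ∑ i ∈ Finset.univ.filter (fun j => us j = xs j), x i)
        else 0) * (P1 i j - P0 i j)
      = (∑ i ∈ Finset.univ.filter (fun j => us j = xs j), x i * (P1 i j - P0 i j))
        + (α - ∑ i ∈ Finset.univ.filter (fun j => us j = xs j), x i)
          * (P1 istar j - P0 istar j) := key _ _ _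
  have hLHS : phi P0 P1 x (fCtrl α xs us istar x) j
      = (∑ i, x i * P0 i j)
        + ((∑ i ∈ Finset.univ.filter (fun j => us j = xs j), x i * (P1 i j - P0 i j))
          + (α - ∑ i ∈ Finset.univ.filter (fun j => us j = xs j), x i)
            * (P1 istar j - P0 istar j)) := by
    simp only [phi, Pi.add_apply, Matrix.vecMul, dotProduct, Matrix.sub_apply,
      fCtrl, Finset.filter_congr_decidable]
    rw [hkey3]
  have hRHS : (xs + (x - xs) ᵥ* Pstar P0 P1 xs us istar) j
      = xs j + (((∑ i, x i * P0 i j) - ∑ i, xs i * P0 i j)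
        + (((∑ i ∈ Finset.univ.filter (fun j => us j = xs j), x i * (P1 i j - P0 i j))
            - (∑ i ∈ Finset.univ.filter (fun j => us j = xs j), xs i * (P1 i j - P0 i j)))
          - ((∑ i ∈ Finset.univ.filter (fun j => us j = xs j), x i)
              - ∑ i ∈ Finset.univ.filter (fun j => us j = xs j), xs i)
            * (P1 istar j - P0 istar j))) := by
    simp only [Pi.add_apply, Matrix.vecMul, dotProduct, Pi.sub_apply, Pstar,
      Matrix.of_apply, Finset.filter_congr_decidable]
    congr 1
    have e1 : ∀ i : Fin n, (x i - xs i) *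
        (if us i = xs i then P1 i j - P1 istar j + P0 istar j else P0 i j)
        = (x i - xs i) * P0 i j
          + (if us i = xs i then
              (x i - xs i) * ((P1 i j - P0 i j) - (P1 istar j - P0 istar j)) else 0) := by
      intro i
      by_cases h1 : us i = xs i
      · rw [if_pos h1, if_pos h1]; ring
      · rw [if_neg h1, if_neg h1]; ring
    rw [Finset.sum_congr rfl (fun i _ => e1 i), Finset.sum_add_distrib, ← Finset.sum_filter]
    have e2 : ∑ i, (x i - xs i) * P0 i j = (∑ i, x i * P0 i j) - ∑ i, xs i * P0 i j := by
      rw [← Finset.sum_sub_distrib]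
      exact Finset.sum_congr rfl (fun i _ => by ring)
    have e3 : ∑ i ∈ Finset.univ.filter (fun j => us j = xs j),
        (x i - xs i) * ((P1 i j - P0 i j) - (P1 istar j - P0 istar j))
        = ((∑ i ∈ Finset.univ.filter (fun j => us j = xs j), x i * (P1 i j - P0 i j))
            - (∑ i ∈ Finset.univ.filter (fun j => us j = xs j), xs i * (P1 i j - P0 i j)))
          - ((∑ i ∈ Finset.univ.filter (fun j => us j = xs j), x i)
              - ∑ i ∈ Finset.univ.filter (fun j => us j = xs j), xs i)
            * (P1 istar j - P0 istar j) := by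
      rw [sub_mul, Finset.sum_mul, Finset.sum_mul, ← Finset.sum_sub_distrib,
        ← Finset.sum_sub_distrib, ← Finset.sum_sub_distrib]
      exact Finset.sum_congr rfl (fun i _ => by ring)
    rw [e2, e3]
  rw [hLHS, hRHS]
  have hfj := hfixj j
  have husc : ∑ i, us i * (P1 i j - P0 i j)
      = (∑ i ∈ Finset.univ.filter (fun j => us j = xs j), xs i * (P1 i j - P0 i j))
        + us istar * (P1 istar j - P0 istar j) := key_us _
  linear_combination (P1 istar j - P0 istar j) * hαval + hfj - husc
end
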